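/- arXiv:math/0501535 — 4 statements merged into one kernel-verified Lean document; each statement's English description precedes it below -/
import Mathlib

section
/- Fix n ≥ 1. Let O_X = O_amb/(f_1, ..., f_n) and let I_D ⊆ O_X be the ideal generated by the images z̄_1, ..., z̄_{n+1} of z_1, ..., z_{n+1}. Then the residual ideal of I_D with respect to z̄_1, i.e. the ideal {g(z̄_1) : g ∈ Hom_{O_X}(I_D, O_X)}, equals the ideal (z̄_1, Δ̄_1) of O_X generated by the images of z_1 and Δ_1. -/
open MvPolynomial

/-- The ambient polynomial ring `O_amb = ℤ[a_{ij}, z_j]`, `1 ≤ i ≤ n`, `1 ≤ j ≤ n+1`. -/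
noncomputable abbrev Oamb (n : ℕ) : Type := MvPolynomial ((Fin n × Fin (n+1)) ⊕ Fin (n+1)) ℤ

/-- The generic matrix entry `a_{ij}` as an element of `O_amb`. -/
noncomputable def av {n : ℕ} (i : Fin n) (j : Fin (n+1)) : Oamb n := X (Sum.inl (i, j))

/-- The variable `z_j` as an element of `O_amb`. -/
noncomputable def zv {n : ℕ} (j : Fin (n+1)) : Oamb n := X (Sum.inr j)

/-- The generic linear form `f_i = Σ_j a_{ij} z_j`. -/
noncomputable def fv {n : ℕ} (i : Fin n) : Oamb n := ∑ j, av i j * zv j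

/-- `Δ₁`: the determinant of the `n × n` submatrix of `(a_{ij})` obtained by deleting the
first column. -/
noncomputable def Δ₁ (n : ℕ) : Oamb n := Matrix.det (Matrix.of fun i j : Fin n => av i j.succ)

namespace Resid

open Polynomial in
/-- Cancellation lemma at the `Polynomial` level. -/
theorem poly_cancel {S : Type*} [CommRing S] (K : Ideal S) (z ρ : S)
    (hc : ∀ u, z * u ∈ K → u ∈ K) (q : Polynomial S)
    (hq : (Polynomial.C z * Polynomial.X + Polynomial.C ρ) * q ∈ K.map (Polynomial.C (R := S))) :
    q ∈ K.map (Polynomial.C (R := S)) := by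
  rw [Ideal.mem_map_C_iff] at hq ⊢
  have key : ∀ d k, q.natDegree < k + d → q.coeff k ∈ K := by
    intro d
    induction d with
    | zero => intro k hk; rw [Polynomial.coeff_eq_zero_of_natDegree_lt (by omega)]; exact K.zero_mem
    | succ d ih =>
      intro k hk
      have h1 := hq (k + 1)
      have hco : ((Polynomial.C z * Polynomial.X + Polynomial.C ρ) * q).coeff (k+1)
          = z * q.coeff k + ρ * q.coeff (k+1) := by
        rw [add_mul, Polynomial.coeff_add, mul_assoc, Polynomial.coeff_C_mul,
          Polynomial.coeff_X_mul, Polynomial.coeff_C_mul]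
      rw [hco] at h1
      have h2 : q.coeff (k+1) ∈ K := ih (k+1) (by omega)
      have h3 : z * q.coeff k ∈ K := by
        have := K.sub_mem h1 (K.mul_mem_left ρ h2)
        simpa using this
      exact hc _ h3
  intro k
  rcases lt_or_ge q.natDegree (k + 1) with h | h
  · exact key 1 k h
  · exact key (q.natDegree + 1) k (by omega)

variable {σ : Type*} [DecidableEq σ]

def varEquiv (v : σ) : σ ≃ Option {i : σ // i ≠ v} where
  toFun i := if h : i = v then none else some ⟨i, h⟩
  invFun o := o.elim v Subtype.val
  left_inv i := by by_cases h : i = v <;> simp [h]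
  right_inv o := by
    cases o with
    | none => simp
    | some x => simp [x.2]

/-- Viewing a multivariate polynomial ring as polynomials in the single variable `v`. -/
noncomputable def Ψ (v : σ) :
    MvPolynomial σ ℤ ≃ₐ[ℤ] Polynomial (MvPolynomial {i : σ // i ≠ v} ℤ) :=
  (renameEquiv ℤ (varEquiv v).symm.symm).trans (optionEquivLeft ℤ _)

@[simp] lemma Ψ_X_self (v : σ) : Ψ v (X v) = Polynomial.X := by
  simp [Ψ, varEquiv, optionEquivLeft_X_none]

lemma Ψ_X_ne (v : σ) {i : σ} (h : i ≠ v) : Ψ v (X i) = Polynomial.C (X ⟨i, h⟩) := by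
  simp [Ψ, varEquiv, h, optionEquivLeft_X_some]

lemma Ψ_C (v : σ) (a : ℤ) : Ψ v (C a) = Polynomial.C (C a) := by
  simp [Ψ, optionEquivLeft_C]

/-- "does not involve the variable `v`" predicate, in an operational form. -/
def VFree (v : σ) (p : MvPolynomial σ ℤ) : Prop := ∃ c, Ψ v p = Polynomial.C c

lemma VFree.add {v : σ} {p q : MvPolynomial σ ℤ} (hp : VFree v p) (hq : VFree v q) :
    VFree v (p + q) := by
  obtain ⟨c, hc⟩ := hp; obtain ⟨d, hd⟩ := hq
  exact ⟨c + d, by rw [map_add, hc, hd, map_add]⟩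

lemma VFree.mul {v : σ} {p q : MvPolynomial σ ℤ} (hp : VFree v p) (hq : VFree v q) :
    VFree v (p * q) := by
  obtain ⟨c, hc⟩ := hp; obtain ⟨d, hd⟩ := hq
  exact ⟨c * d, by rw [map_mul, hc, hd, map_mul]⟩

lemma VFree.X {v : σ} {i : σ} (h : i ≠ v) : VFree v (X i) := ⟨_, Ψ_X_ne v h⟩

lemma VFree.sum {v : σ} {ι : Type*} (s : Finset ι) (f : ι → MvPolynomial σ ℤ)
    (h : ∀ i ∈ s, VFree v (f i)) : VFree v (∑ i ∈ s, f i) := by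
  classical
  induction s using Finset.induction_on with
  | empty => exact ⟨0, by simp⟩
  | @insert a s hni ih =>
    rw [Finset.sum_insert hni]
    exact VFree.add (h _ (Finset.mem_insert_self _ _))
      (ih fun i hi => h i (Finset.mem_insert_of_mem hi))

/-- The main cancellation lemma: if an ideal is generated by elements not involving the
variable `v`, multiplication by `z` can be cancelled on it, and `z, ρ` do not involve `v`,
then multiplication by `z * X v + ρ` can be cancelled on it. -/
theorem lc_cancel (v : σ) (G : Set (MvPolynomial σ ℤ)) (hG : ∀ g ∈ G, VFree v g)
    (z ρ : MvPolynomial σ ℤ) (hz : VFree v z) (hρ : VFree v ρ)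
    (hc : ∀ u, z * u ∈ Ideal.span G → u ∈ Ideal.span G)
    (q : MvPolynomial σ ℤ) (hq : (z * X v + ρ) * q ∈ Ideal.span G) :
    q ∈ Ideal.span G := by
  classical
  set K : Ideal (MvPolynomial σ ℤ) := Ideal.span G with hK
  obtain ⟨z₀, hz₀⟩ := hz
  obtain ⟨ρ₀, hρ₀⟩ := hρ
  -- the image ideal
  set ψ := Ψ v
  have hmem : ∀ p : MvPolynomial σ ℤ, p ∈ K ↔ ψ p ∈ K.map (ψ : MvPolynomial σ ℤ →+* _) := by
    intro p
    constructor
    · exact fun h => Ideal.mem_map_of_mem _ h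
    · intro h
      obtain ⟨x, hx, hxp⟩ := (Ideal.mem_map_iff_of_surjective _ ψ.surjective).mp h
      rwa [← ψ.injective hxp]
  -- base ideal
  set G₀ : Set (MvPolynomial {i : σ // i ≠ v} ℤ) := {c | ∃ g ∈ G, ψ g = Polynomial.C c} with hG₀
  have himg : K.map (ψ : MvPolynomial σ ℤ →+* _) = (Ideal.span G₀).map (Polynomial.C) := by
    rw [hK, Ideal.map_span, Ideal.map_span]
    congr 1
    ext p
    constructor
    · rintro ⟨g, hg, rfl⟩
      obtain ⟨c, hc'⟩ := hG g hg
      exact ⟨c, ⟨g, hg, hc'⟩, hc'.symm⟩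
    · rintro ⟨c, ⟨g, hg, hgc⟩, rfl⟩
      exact ⟨g, hg, hgc⟩
  have hC : ∀ c, Polynomial.C c ∈ (Ideal.span G₀).map (Polynomial.C (R := MvPolynomial {i : σ // i ≠ v} ℤ)) ↔ c ∈ Ideal.span G₀ := by
    intro c
    rw [Ideal.mem_map_C_iff]
    constructor
    · intro h; have := h 0; simpa using this
    · intro h k; rcases k with _ | k
      · simpa using h
      · simp
  have hc₀ : ∀ u₀, z₀ * u₀ ∈ Ideal.span G₀ → u₀ ∈ Ideal.span G₀ := by
    intro u₀ hu₀
    set u := ψ.symm (Polynomial.C u₀) with hu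
    have hψu : ψ u = Polynomial.C u₀ := by rw [hu]; exact ψ.apply_symm_apply _
    have : z * u ∈ K := by
      rw [hmem, himg, map_mul, hz₀, hψu, ← map_mul]
      exact (hC _).mpr hu₀
    have := hc u this
    rw [hmem, himg, hψu, hC] at this
    exact this
  rw [hmem, himg]
  apply poly_cancel _ z₀ ρ₀ hc₀
  rw [← himg]
  have : ψ ((z * X v + ρ) * q) = (Polynomial.C z₀ * Polynomial.X + Polynomial.C ρ₀) * ψ q := by
    rw [map_mul, map_add, map_mul, hz₀, hρ₀, Ψ_X_self]
  rw [← this]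
  exact Ideal.mem_map_of_mem _ hq


variable {n : ℕ}

/-! ### Killing one `z`-variable -/

noncomputable def kz (j0 : Fin (n+1)) : Oamb n →ₐ[ℤ] Oamb n :=
  aeval (fun v => if v = Sum.inr j0 then 0 else X v)

@[simp] lemma kz_av (j0 : Fin (n+1)) (i : Fin n) (j : Fin (n+1)) :
    kz j0 (av i j) = av i j := by simp [kz, av]

@[simp] lemma kz_zv_self (j0 : Fin (n+1)) : kz j0 (zv j0) = 0 := by simp [kz, zv]

lemma kz_zv_ne (j0 : Fin (n+1)) {j : Fin (n+1)} (h : j ≠ j0) : kz j0 (zv j) = zv j := by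
  simp [kz, zv, h]

lemma sub_kz_mem (j0 : Fin (n+1)) (p : Oamb n) :
    p - kz j0 p ∈ Ideal.span {zv j0} := by
  induction p using MvPolynomial.induction_on with
  | C a => simp [kz]
  | add p q hp hq =>
      rw [map_add]
      have : p + q - (kz j0 p + kz j0 q) = (p - kz j0 p) + (q - kz j0 q) := by ring
      rw [this]; exact Ideal.add_mem _ hp hq
  | mul_X p i hp =>
      rw [map_mul]
      have : p * X i - kz j0 p * kz j0 (X i)
          = (p - kz j0 p) * X i + kz j0 p * (X i - kz j0 (X i)) := by ring
      rw [this]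
      refine Ideal.add_mem _ (Ideal.mul_mem_right _ _ hp) (Ideal.mul_mem_left _ _ ?_)
      by_cases h : i = Sum.inr j0
      · subst h
        have : kz j0 (X (Sum.inr j0) : Oamb n) = 0 := by simp [kz]
        rw [this, sub_zero]
        exact Ideal.subset_span rfl
      · have : kz j0 (X i : Oamb n) = X i := by simp [kz, h]
        rw [this, sub_self]; exact Ideal.zero_mem _

/-! ### The generic forms and their ideals -/

noncomputable def lin (r m : ℕ) (rv : Fin r → Fin n) (cv : Fin m → Fin (n+1)) (i : Fin r) :
    Oamb n := ∑ j, av (rv i) (cv j) * zv (cv j)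

noncomputable def Idl (r m : ℕ) (rv : Fin r → Fin n) (cv : Fin m → Fin (n+1)) :
    Ideal (Oamb n) := Ideal.span (Set.range (lin r m rv cv))

noncomputable def Mi (r : ℕ) (rv : Fin r → Fin n) (cv : Fin r → Fin (n+1)) : Oamb n :=
  (Matrix.of fun i k => av (rv i) (cv k)).det

noncomputable def δm (r : ℕ) (rv : Fin r → Fin n) (cv : Fin (r+1) → Fin (n+1)) (k : Fin (r+1)) :
    Oamb n := (-1)^(k:ℕ) * Mi r rv (cv ∘ k.succAbove)

lemma mem_Idl_iff {r m : ℕ} {rv : Fin r → Fin n} {cv : Fin m → Fin (n+1)} {w : Oamb n} :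
    w ∈ Idl r m rv cv ↔ ∃ c : Fin r → Oamb n, ∑ i, c i * lin r m rv cv i = w :=
  Ideal.mem_span_range_iff_exists_fun

lemma lin_mem {r m : ℕ} (rv : Fin r → Fin n) (cv : Fin m → Fin (n+1)) (i : Fin r) :
    lin r m rv cv i ∈ Idl r m rv cv := Ideal.subset_span ⟨i, rfl⟩

lemma kz_lin {r m : ℕ} (rv : Fin r → Fin n) (cv : Fin (m+1) → Fin (n+1))
    (hcv : Function.Injective cv) (j : Fin (m+1)) (i : Fin r) :
    kz (cv j) (lin r (m+1) rv cv i) = lin r m rv (cv ∘ j.succAbove) i := by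
  rw [lin, map_sum, Fin.sum_univ_succAbove _ j]
  rw [map_mul, kz_av, kz_zv_self, mul_zero, zero_add]
  rw [lin]
  congr 1
  funext l
  rw [map_mul, kz_av, kz_zv_ne]
  · rfl
  · exact fun h => Fin.succAbove_ne j l (hcv h)

lemma kz_mem_Idl {r m : ℕ} {rv : Fin r → Fin n} {cv : Fin (m+1) → Fin (n+1)}
    (hcv : Function.Injective cv) (j : Fin (m+1)) {w : Oamb n}
    (hw : w ∈ Idl r (m+1) rv cv ⊔ Ideal.span {zv (cv j)}) :
    kz (cv j) w ∈ Idl r m rv (cv ∘ j.succAbove) := by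
  obtain ⟨a, ha, b, hb, rfl⟩ := Submodule.mem_sup.mp hw
  obtain ⟨c, rfl⟩ := mem_Idl_iff.mp ha
  obtain ⟨d, rfl⟩ := Ideal.mem_span_singleton'.mp hb
  rw [map_add, map_mul, kz_zv_self, mul_zero, add_zero, map_sum]
  refine Ideal.sum_mem _ fun i _ => ?_
  rw [map_mul, kz_lin rv cv hcv j i]
  exact Ideal.mul_mem_left _ _ (lin_mem _ _ _)

lemma Idl_del_le {r m : ℕ} (rv : Fin r → Fin n) (cv : Fin (m+1) → Fin (n+1))
    (hcv : Function.Injective cv) (j : Fin (m+1)) :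
    Idl r m rv (cv ∘ j.succAbove) ≤ Idl r (m+1) rv cv ⊔ Ideal.span {zv (cv j)} := by
  rw [Idl, Ideal.span_le]
  rintro _ ⟨i, rfl⟩
  rw [← kz_lin rv cv hcv j i]
  have : kz (cv j) (lin r (m+1) rv cv i)
      = lin r (m+1) rv cv i - (lin r (m+1) rv cv i - kz (cv j) (lin r (m+1) rv cv i)) := by ring
  rw [this]
  exact Submodule.sub_mem _ (Submodule.mem_sup_left (lin_mem _ _ _))
    (Submodule.mem_sup_right (sub_kz_mem _ _))

lemma mem_sup_z_iff {r m : ℕ} {rv : Fin r → Fin n} {cv : Fin (m+1) → Fin (n+1)}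
    (hcv : Function.Injective cv) (j : Fin (m+1)) {w : Oamb n} :
    w ∈ Idl r (m+1) rv cv ⊔ Ideal.span {zv (cv j)} ↔
      kz (cv j) w ∈ Idl r m rv (cv ∘ j.succAbove) := by
  constructor
  · exact kz_mem_Idl hcv j
  · intro h
    have : w = kz (cv j) w + (w - kz (cv j) w) := by ring
    rw [this]
    exact Submodule.add_mem _ (Idl_del_le rv cv hcv j h)
      (Submodule.mem_sup_right (sub_kz_mem _ _))

lemma lin_castSucc {r m : ℕ} (rv : Fin (r+1) → Fin n) (cv : Fin m → Fin (n+1)) (i : Fin r) :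
    lin (r+1) m rv cv i.castSucc = lin r m (rv ∘ Fin.castSucc) cv i := rfl

lemma Idl_succ_row {r m : ℕ} (rv : Fin (r+1) → Fin n) (cv : Fin m → Fin (n+1)) :
    Idl (r+1) m rv cv
      = Idl r m (rv ∘ Fin.castSucc) cv ⊔ Ideal.span {lin (r+1) m rv cv (Fin.last r)} := by
  apply le_antisymm
  · rw [Idl, Ideal.span_le]
    rintro _ ⟨i, rfl⟩
    induction i using Fin.lastCases with
    | last => exact Submodule.mem_sup_right (Ideal.subset_span rfl)
    | cast i =>
        rw [lin_castSucc]
        exact Submodule.mem_sup_left (lin_mem _ _ _)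
  · apply sup_le
    · rw [Idl, Ideal.span_le]
      rintro _ ⟨i, rfl⟩
      rw [← lin_castSucc]
      exact lin_mem _ _ _
    · rw [Ideal.span_le, Set.singleton_subset_iff]
      exact lin_mem _ _ _

/-! ### The Cramer identities -/

section Cramer

variable {r : ℕ} (rv : Fin r → Fin n) (cv : Fin (r+1) → Fin (n+1))

noncomputable def Bk (k : Fin (r+1)) : Matrix (Fin (r+1)) (Fin (r+1)) (Oamb n) :=
  Matrix.of (Fin.cases (Pi.single k 1) (fun i l => av (rv i) (cv l)))

lemma Bk_zero (k l : Fin (r+1)) : Bk rv cv k 0 l = (Pi.single k (1 : Oamb n) : Fin (r+1) → Oamb n) l := by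
  show (Fin.cases (Pi.single k 1) (fun i l => av (rv i) (cv l)) (0 : Fin (r+1)) :
      Fin (r+1) → Oamb n) l = _
  rw [Fin.cases_zero]

lemma Bk_succ (k : Fin (r+1)) (i : Fin r) (l : Fin (r+1)) :
    Bk rv cv k i.succ l = av (rv i) (cv l) := by
  show (Fin.cases (Pi.single k 1) (fun i l => av (rv i) (cv l)) i.succ : Fin (r+1) → Oamb n) l
      = av (rv i) (cv l)
  rw [Fin.cases_succ]

lemma det_Bk (k : Fin (r+1)) : (Bk rv cv k).det = δm r rv cv k := by
  rw [Matrix.det_succ_row_zero, Finset.sum_eq_single k]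
  · rw [Bk_zero, Pi.single_eq_same, mul_one, δm]
    congr 1
  · intro b _ hb
    rw [Bk_zero, Pi.single_eq_of_ne hb, mul_zero, zero_mul]
  · intro h; exact absurd (Finset.mem_univ k) h

lemma updateRow_Bk (k j : Fin (r+1)) :
    (Bk rv cv k).updateRow 0 (Pi.single j 1) = Bk rv cv j := by
  ext i l
  rcases Fin.eq_zero_or_eq_succ i with h | ⟨i', rfl⟩
  · subst h; rw [Matrix.updateRow_self]; rfl
  · rw [Matrix.updateRow_ne (Fin.succ_ne_zero i'), Bk_succ, Bk_succ]

lemma cramer_identity (j k : Fin (r+1)) :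
    δm r rv cv k * zv (cv j) - δm r rv cv j * zv (cv k) ∈ Idl r (r+1) rv cv := by
  classical
  have key : ∑ i, (Bk rv cv k).adjugate j i * (∑ l, Bk rv cv k i l * zv (cv l))
      = (Bk rv cv k).det * zv (cv j) := by
    have h1 : ∀ i, (Bk rv cv k).adjugate j i * (∑ l, Bk rv cv k i l * zv (cv l))
        = ∑ l, (Bk rv cv k).adjugate j i * Bk rv cv k i l * zv (cv l) := by
      intro i; rw [Finset.mul_sum]; congr 1; funext l; ring
    rw [Finset.sum_congr rfl (fun i _ => h1 i), Finset.sum_comm]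
    have h2 : ∀ l, ∑ i, (Bk rv cv k).adjugate j i * Bk rv cv k i l * zv (cv l)
        = ((Bk rv cv k).adjugate * Bk rv cv k) j l * zv (cv l) := by
      intro l; rw [Matrix.mul_apply, Finset.sum_mul]
    rw [Finset.sum_congr rfl (fun l _ => h2 l), Matrix.adjugate_mul]
    rw [Finset.sum_eq_single j]
    · rw [Matrix.smul_apply, Matrix.one_apply_eq]; simp
    · intro b _ hb
      rw [Matrix.smul_apply, Matrix.one_apply_ne' hb]; simp
    · intro h; exact absurd (Finset.mem_univ j) h
  -- the inner sums
  have hrow0 : ∑ l, Bk rv cv k 0 l * zv (cv l) = zv (cv k) := by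
    rw [Finset.sum_eq_single k]
    · rw [Bk_zero, Pi.single_eq_same, one_mul]
    · intro b _ hb; rw [Bk_zero, Pi.single_eq_of_ne hb, zero_mul]
    · intro h; exact absurd (Finset.mem_univ k) h
  have hrowsucc : ∀ i : Fin r, ∑ l, Bk rv cv k i.succ l * zv (cv l) = lin r (r+1) rv cv i := by
    intro i
    rw [lin]
    exact Finset.sum_congr rfl fun l _ => by rw [Bk_succ]
  have hadj0 : (Bk rv cv k).adjugate j 0 = δm r rv cv j := by
    rw [Matrix.adjugate_apply, updateRow_Bk, det_Bk]
  rw [Fin.sum_univ_succ, hrow0, hadj0] at key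
  rw [det_Bk] at key
  have hre : δm r rv cv k * zv (cv j) - δm r rv cv j * zv (cv k)
      = ∑ i : Fin r, (Bk rv cv k).adjugate j i.succ * (∑ l, Bk rv cv k i.succ l * zv (cv l)) := by
    rw [← key]; ring
  rw [hre]
  refine Ideal.sum_mem _ fun i _ => ?_
  rw [hrowsucc i]
  exact Ideal.mul_mem_left _ _ (lin_mem _ _ _)

end Cramer

lemma det_last_expand {r : ℕ} (rv : Fin (r+1) → Fin n) (cv : Fin (r+1) → Fin (n+1)) :
    (-1 : Oamb n)^r * Mi (r+1) rv cv
      = ∑ k, av (rv (Fin.last r)) (cv k) * δm r (rv ∘ Fin.castSucc) cv k := by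
  rw [Mi, Matrix.det_succ_row _ (Fin.last r), Finset.mul_sum]
  congr 1
  funext k
  have hsub : ((Matrix.of fun i l => av (rv i) (cv l)).submatrix
      (Fin.last r).succAbove k.succAbove).det = Mi r (rv ∘ Fin.castSucc) (cv ∘ k.succAbove) := by
    rw [Mi]
    congr 1
    ext i l
    rw [Matrix.submatrix_apply, Fin.succAbove_last]
    rfl
  rw [hsub, δm]
  have hlast : ((Fin.last r : Fin (r+1)) : ℕ) = r := rfl
  rw [hlast]
  have hpow : (-1 : Oamb n)^r * (-1 : Oamb n)^(r + (k : ℕ)) = (-1)^(k:ℕ) := by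
    rw [← pow_add]
    have : r + (r + (k : ℕ)) = 2 * r + (k : ℕ) := by ring
    rw [this, pow_add, pow_mul, neg_one_sq, one_pow, one_mul]
  calc (-1 : Oamb n)^r * ((-1)^(r + (k:ℕ)) * (Matrix.of fun i l => av (rv i) (cv l)) (Fin.last r) k
        * Mi r (rv ∘ Fin.castSucc) (cv ∘ k.succAbove))
      = ((-1 : Oamb n)^r * (-1)^(r + (k:ℕ))) * ((Matrix.of fun i l => av (rv i) (cv l)) (Fin.last r) k
        * Mi r (rv ∘ Fin.castSucc) (cv ∘ k.succAbove)) := by ring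
    _ = av (rv (Fin.last r)) (cv k) * ((-1)^(k:ℕ) * Mi r (rv ∘ Fin.castSucc) (cv ∘ k.succAbove)) := by
        rw [hpow]; rw [Matrix.of_apply]; ring



open Function


/-! ### VFree facts for the generators -/

lemma vfree_zv (v : Fin n × Fin (n+1)) (j : Fin (n+1)) :
    VFree (Sum.inl v : (Fin n × Fin (n+1)) ⊕ Fin (n+1)) (zv j : Oamb n) :=
  VFree.X (by simp)

lemma vfree_av {v : Fin n × Fin (n+1)} {i : Fin n} {j : Fin (n+1)} (h : (i, j) ≠ v) :
    VFree (Sum.inl v : (Fin n × Fin (n+1)) ⊕ Fin (n+1)) (av i j : Oamb n) :=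
  VFree.X (by simpa using h)

noncomputable def rowSum (R : Fin n) {m : ℕ} (cv : Fin m → Fin (n+1)) : Oamb n :=
  ∑ l, av R (cv l) * zv (cv l)

lemma lin_eq_rowSum {r m : ℕ} (rv : Fin r → Fin n) (cv : Fin m → Fin (n+1)) (i : Fin r) :
    lin r m rv cv i = rowSum (rv i) cv := rfl

lemma rowSum_split (R : Fin n) {m : ℕ} (cv : Fin (m+1) → Fin (n+1)) (j : Fin (m+1)) :
    rowSum R cv = av R (cv j) * zv (cv j) + rowSum R (cv ∘ j.succAbove) := by
  rw [rowSum, Fin.sum_univ_succAbove _ j]; rfl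

lemma vfree_lin {r m : ℕ} (rv : Fin r → Fin n) (cv : Fin m → Fin (n+1))
    (a : Fin n) (b : Fin (n+1)) (ha : ∀ i, rv i ≠ a) (i : Fin r) :
    VFree (Sum.inl (a, b) : (Fin n × Fin (n+1)) ⊕ Fin (n+1)) (lin r m rv cv i) := by
  rw [lin]
  exact VFree.sum _ _ fun j _ =>
    (vfree_av (by simp [ha i])).mul (vfree_zv _ _)

/-- The workhorse wrapper of `lc_cancel`: multiplication by a full generic row can be
cancelled on suitable ideals. -/
lemma lc_row (R : Fin n) {m : ℕ} (cv2 : Fin (m+1) → Fin (n+1)) (hcv2 : Injective cv2)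
    (k : Fin (m+1)) (G : Set (Oamb n))
    (hG : ∀ g ∈ G, VFree (Sum.inl (R, cv2 k)) g)
    (hc : ∀ u, zv (cv2 k) * u ∈ Ideal.span G → u ∈ Ideal.span G)
    (q : Oamb n) (hq : rowSum R cv2 * q ∈ Ideal.span G) :
    q ∈ Ideal.span G := by
  apply lc_cancel (Sum.inl (R, cv2 k)) G hG (zv (cv2 k)) (rowSum R (cv2 ∘ k.succAbove))
    (vfree_zv _ _)
    (by
      rw [rowSum]
      exact VFree.sum _ _ fun l _ =>
        (vfree_av (by
          have : cv2 (k.succAbove l) ≠ cv2 k := fun hh => Fin.succAbove_ne k l (hcv2 hh)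
          simp [this])).mul (vfree_zv _ _))
    hc q
  have : zv (cv2 k) * X (Sum.inl (R, cv2 k)) + rowSum R (cv2 ∘ k.succAbove) = rowSum R cv2 := by
    rw [rowSum_split R cv2 k]; rw [av]; ring
  rw [this]
  exact hq

/-! ### the inductive package -/

def E2P (n r : ℕ) : Prop := ∀ (m : ℕ) (rv : Fin r → Fin n) (cv : Fin m → Fin (n+1)),
  Injective rv → Injective cv → r < m →
  ∀ (j : Fin m) (w : Oamb n), zv (cv j) * w ∈ Idl r m rv cv → w ∈ Idl r m rv cv

def ANNP (n r : ℕ) : Prop := ∀ (m : ℕ) (rv : Fin r → Fin n) (cv : Fin m → Fin (n+1)),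
  Injective rv → Injective cv → r < m →
  ∀ (w : Oamb n), (∀ k, zv (cv k) * w ∈ Idl r m rv cv) → w ∈ Idl r m rv cv

def SQP (n r : ℕ) : Prop := ∀ (rv : Fin r → Fin n) (cv : Fin r → Fin (n+1)),
  Injective rv → Injective cv →
  ∀ (w : Oamb n), (∀ k, zv (cv k) * w ∈ Idl r r rv cv) →
  w ∈ Idl r r rv cv ⊔ Ideal.span {Mi r rv cv}

lemma Idl_zero {m : ℕ} (rv : Fin 0 → Fin n) (cv : Fin m → Fin (n+1)) :
    Idl 0 m rv cv = ⊥ := by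
  rw [Idl, Set.range_eq_empty, Ideal.span_empty]

lemma e2_zero : E2P n 0 := by
  intro m rv cv _ _ _ j w hw
  rw [Idl_zero] at hw ⊢
  rw [Ideal.mem_bot] at hw ⊢
  rcases mul_eq_zero.mp hw with h | h
  · exact absurd h (by rw [zv]; exact MvPolynomial.X_ne_zero _)
  · exact h

lemma ann_zero : ANNP n 0 := by
  intro m rv cv hrv hcv hm w hw
  exact e2_zero m rv cv hrv hcv hm ⟨0, hm⟩ w (hw ⟨0, hm⟩)

lemma sq_zero : SQP n 0 := by
  intro rv cv _ _ w _
  apply Submodule.mem_sup_right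
  have : Mi 0 rv cv = 1 := Matrix.det_fin_zero
  rw [this]
  exact Ideal.mem_span_singleton'.mpr ⟨w, mul_one w⟩

/-- cancellation of a `z`-variable modulo `Idl ⊔ (z_j)` (derived from `E2P` one size down). -/
lemma e2_mod (h2 : E2P n r) {m : ℕ} (rv : Fin r → Fin n) (cv : Fin (m+1) → Fin (n+1))
    (hrv : Injective rv) (hcv : Injective cv) (hm : r < m) (j k : Fin (m+1)) (hjk : k ≠ j)
    (u : Oamb n)
    (hu : zv (cv k) * u ∈ Idl r (m+1) rv cv ⊔ Ideal.span {zv (cv j)}) :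
    u ∈ Idl r (m+1) rv cv ⊔ Ideal.span {zv (cv j)} := by
  rw [mem_sup_z_iff hcv j] at hu ⊢
  rw [map_mul, kz_zv_ne _ (show cv k ≠ cv j from fun hh => hjk (hcv hh))] at hu
  obtain ⟨k', hk'⟩ := Fin.exists_succAbove_eq hjk
  rw [← hk'] at hu
  exact h2 m rv (cv ∘ j.succAbove) hrv (hcv.comp (Fin.succAbove_right_injective)) hm k' (kz (cv j) u)
    (by simpa [Function.comp] using hu)

lemma mem_sup_singleton {J : Ideal (Oamb n)} {h x : Oamb n} :
    x ∈ J ⊔ Ideal.span {h} ↔ ∃ a ∈ J, ∃ q, a + q * h = x := by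
  constructor
  · intro hx
    obtain ⟨a, ha, b, hb, rfl⟩ := Submodule.mem_sup.mp hx
    obtain ⟨q, rfl⟩ := Ideal.mem_span_singleton'.mp hb
    exact ⟨a, ha, q, rfl⟩
  · rintro ⟨a, ha, q, rfl⟩
    exact Submodule.add_mem _ (Submodule.mem_sup_left ha)
      (Submodule.mem_sup_right (Ideal.mem_span_singleton'.mpr ⟨q, rfl⟩))

lemma Idl_eq {r m : ℕ} (rv : Fin r → Fin n) (cv : Fin m → Fin (n+1)) :
    Idl r m rv cv = Ideal.span (Set.range (lin r m rv cv)) := rfl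


set_option maxHeartbeats 400000 in
lemma e2_succ {r : ℕ} (h2 : E2P n r) : E2P n (r+1) := by
  intro m rv cv hrv hcv hm j w hw
  obtain ⟨m', rfl⟩ : ∃ m', m = m' + 1 + 1 := ⟨m - 2, by omega⟩
  have hrv' : Function.Injective (rv ∘ Fin.castSucc) := hrv.comp (Fin.castSucc_injective _)
  have hRne : ∀ i : Fin r, (rv ∘ Fin.castSucc) i ≠ rv (Fin.last r) := fun i h =>
    absurd (hrv h) (Fin.ne_of_lt (Fin.castSucc_lt_last i))
  rw [Idl_succ_row rv cv] at hw ⊢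
  obtain ⟨a, ha, q, hq⟩ := mem_sup_singleton.mp hw
  rw [lin_eq_rowSum] at hq
  have hsplit := rowSum_split (rv (Fin.last r)) cv j
  have hρq : rowSum (rv (Fin.last r)) (cv ∘ j.succAbove) * q
      ∈ Idl r (m'+1+1) (rv ∘ Fin.castSucc) cv ⊔ Ideal.span {zv (cv j)} := by
    have heq : rowSum (rv (Fin.last r)) (cv ∘ j.succAbove) * q
        = zv (cv j) * (w - av (rv (Fin.last r)) (cv j) * q) - a := by
      linear_combination hq - q * hsplit
    rw [heq]
    refine Submodule.sub_mem _ (Submodule.mem_sup_right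
      (Ideal.mem_span_singleton'.mpr ⟨w - av (rv (Fin.last r)) (cv j) * q, by ring⟩))
      (Submodule.mem_sup_left ha)
  have hq2 : q ∈ Idl r (m'+1+1) (rv ∘ Fin.castSucc) cv ⊔ Ideal.span {zv (cv j)} := by
    have hK : Idl r (m'+1+1) (rv ∘ Fin.castSucc) cv ⊔ Ideal.span {zv (cv j)}
        = Ideal.span (Set.range (lin r (m'+1+1) (rv ∘ Fin.castSucc) cv) ∪ {zv (cv j)}) := by
      rw [Idl_eq, Ideal.span_union]
    rw [hK] at hρq ⊢
    refine lc_row (rv (Fin.last r)) (cv ∘ j.succAbove)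
      (hcv.comp Fin.succAbove_right_injective) 0 _ ?_ ?_ q hρq
    · rintro g (⟨i, rfl⟩ | rfl)
      · exact vfree_lin _ _ _ _ hRne i
      · exact vfree_zv _ _
    · intro u hu
      rw [← hK] at hu ⊢
      exact e2_mod h2 (rv ∘ Fin.castSucc) cv hrv' hcv (by omega) j (j.succAbove 0)
        (Fin.succAbove_ne j 0) u (by
          have : zv ((cv ∘ j.succAbove) 0) = zv (cv (j.succAbove 0)) := rfl
          rwa [this] at hu)
  obtain ⟨a₂, ha₂, d, hd⟩ := mem_sup_singleton.mp hq2
  have hfin : zv (cv j) * (w - d * lin (r+1) (m'+1+1) rv cv (Fin.last r))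
      ∈ Idl r (m'+1+1) (rv ∘ Fin.castSucc) cv := by
    have heq : zv (cv j) * (w - d * lin (r+1) (m'+1+1) rv cv (Fin.last r))
        = a + a₂ * rowSum (rv (Fin.last r)) cv := by
      rw [lin_eq_rowSum]
      linear_combination (-1 : Oamb n) * hq - rowSum (rv (Fin.last r)) cv * hd
    rw [heq]
    exact Submodule.add_mem _ ha (Ideal.mul_mem_right _ _ ha₂)
  have hlast := h2 (m'+1+1) (rv ∘ Fin.castSucc) cv hrv' hcv (by omega) j _ hfin
  have hww : w = (w - d * lin (r+1) (m'+1+1) rv cv (Fin.last r))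
      + d * lin (r+1) (m'+1+1) rv cv (Fin.last r) := by ring
  rw [hww]
  exact Submodule.add_mem _ (Submodule.mem_sup_left hlast)
    (Submodule.mem_sup_right (Ideal.mem_span_singleton'.mpr ⟨d, rfl⟩))

set_option maxHeartbeats 1000000 in
lemma ann_succ {r : ℕ} (h2 : E2P n r) (hA : ANNP n r) : ANNP n (r+1) := by
  intro m rv cv hrv hcv hm w hall
  obtain ⟨m', rfl⟩ : ∃ m', m = m' + 1 := ⟨m - 1, by omega⟩
  have hm' : r < m' := by omega
  have hrv' : Function.Injective (rv ∘ Fin.castSucc) := hrv.comp (Fin.castSucc_injective _)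
  have hRne : ∀ i : Fin r, (rv ∘ Fin.castSucc) i ≠ rv (Fin.last r) := fun i h =>
    absurd (hrv h) (Fin.ne_of_lt (Fin.castSucc_lt_last i))
  rw [Idl_succ_row rv cv, lin_eq_rowSum]
  have hall' : ∀ k, ∃ a ∈ Idl r (m'+1) (rv ∘ Fin.castSucc) cv, ∃ q,
      a + q * rowSum (rv (Fin.last r)) cv = zv (cv k) * w := by
    intro k
    have h0 := hall k
    rw [Idl_succ_row rv cv, lin_eq_rowSum] at h0
    exact mem_sup_singleton.mp h0
  choose a ha q hq using hall'
  have hu : ∀ k l, q k * zv (cv l) - q l * zv (cv k)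
      ∈ Idl r (m'+1) (rv ∘ Fin.castSucc) cv := by
    intro k l
    rw [Idl_eq]
    refine lc_row (rv (Fin.last r)) cv hcv 0 _ ?_ ?_ _ ?_
    · rintro g ⟨i, rfl⟩; exact vfree_lin _ _ _ _ hRne i
    · intro u huu
      rw [← Idl_eq] at huu ⊢
      exact h2 (m'+1) _ cv hrv' hcv (by omega) 0 u huu
    · rw [← Idl_eq]
      have heq : rowSum (rv (Fin.last r)) cv * (q k * zv (cv l) - q l * zv (cv k))
          = a l * zv (cv k) - a k * zv (cv l) := by
        linear_combination zv (cv l) * hq k - zv (cv k) * hq l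
      rw [heq]
      exact Submodule.sub_mem _ (Ideal.mul_mem_right _ _ (ha l)) (Ideal.mul_mem_right _ _ (ha k))
  have hq0m : ∀ l', zv ((cv ∘ (0 : Fin (m'+1)).succAbove) l') * kz (cv 0) (q 0)
      ∈ Idl r m' (rv ∘ Fin.castSucc) (cv ∘ (0 : Fin (m'+1)).succAbove) := by
    intro l'
    have h1 : q 0 * zv (cv ((0 : Fin (m'+1)).succAbove l')) ∈
        Idl r (m'+1) (rv ∘ Fin.castSucc) cv ⊔ Ideal.span {zv (cv 0)} := by
      have heq : q 0 * zv (cv ((0 : Fin (m'+1)).succAbove l'))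
          = q ((0 : Fin (m'+1)).succAbove l') * zv (cv 0)
            + (q 0 * zv (cv ((0 : Fin (m'+1)).succAbove l'))
              - q ((0 : Fin (m'+1)).succAbove l') * zv (cv 0)) := by ring
      rw [heq]
      exact Submodule.add_mem _
        (Submodule.mem_sup_right (Ideal.mem_span_singleton'.mpr ⟨_, rfl⟩))
        (Submodule.mem_sup_left (hu 0 _))
    have h3 := kz_mem_Idl hcv 0 h1
    rw [map_mul, kz_zv_ne _ (show cv ((0 : Fin (m'+1)).succAbove l') ≠ cv 0 from
      fun hh => Fin.succAbove_ne _ _ (hcv hh))] at h3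
    rw [mul_comm]
    exact h3
  have hq0 := hA m' (rv ∘ Fin.castSucc) (cv ∘ (0 : Fin (m'+1)).succAbove) hrv'
    (hcv.comp Fin.succAbove_right_injective) hm' _ hq0m
  have hq0s : q 0 ∈ Idl r (m'+1) (rv ∘ Fin.castSucc) cv ⊔ Ideal.span {zv (cv 0)} :=
    (mem_sup_z_iff hcv 0).mpr hq0
  obtain ⟨β, hβ, γ, hγ⟩ := mem_sup_singleton.mp hq0s
  have hτ : ∀ l, q l - γ * zv (cv l) ∈ Idl r (m'+1) (rv ∘ Fin.castSucc) cv := by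
    intro l
    apply h2 (m'+1) _ cv hrv' hcv (by omega) 0
    have heq : zv (cv 0) * (q l - γ * zv (cv l))
        = β * zv (cv l) - (q 0 * zv (cv l) - q l * zv (cv 0)) := by
      linear_combination (-(zv (cv l))) * hγ
    rw [heq]
    exact Submodule.sub_mem _ (Ideal.mul_mem_right _ _ hβ) (hu 0 l)
  have hfin : ∀ k, zv (cv k) * (w - γ * rowSum (rv (Fin.last r)) cv)
      ∈ Idl r (m'+1) (rv ∘ Fin.castSucc) cv := by
    intro k
    have heq : zv (cv k) * (w - γ * rowSum (rv (Fin.last r)) cv)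
        = a k + (q k - γ * zv (cv k)) * rowSum (rv (Fin.last r)) cv := by
      linear_combination (-1 : Oamb n) * hq k
    rw [heq]
    exact Submodule.add_mem _ (ha k) (Ideal.mul_mem_right _ _ (hτ k))
  have hend := hA (m'+1) (rv ∘ Fin.castSucc) cv hrv' hcv (by omega) _ hfin
  have hww : w = (w - γ * rowSum (rv (Fin.last r)) cv) + γ * rowSum (rv (Fin.last r)) cv := by
    ring
  rw [hww]
  exact Submodule.add_mem _ (Submodule.mem_sup_left hend)
    (Submodule.mem_sup_right (Ideal.mem_span_singleton'.mpr ⟨γ, rfl⟩))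

set_option maxHeartbeats 1000000 in
lemma sq_succ {r : ℕ} (h2 : E2P n r) (hA : ANNP n r) (hS : SQP n r) : SQP n (r+1) := by
  intro rv cv hrv hcv w hall
  have hrv' : Function.Injective (rv ∘ Fin.castSucc) := hrv.comp (Fin.castSucc_injective _)
  have hRne : ∀ i : Fin r, (rv ∘ Fin.castSucc) i ≠ rv (Fin.last r) := fun i h =>
    absurd (hrv h) (Fin.ne_of_lt (Fin.castSucc_lt_last i))
  have hall' : ∀ k, ∃ a ∈ Idl r (r+1) (rv ∘ Fin.castSucc) cv, ∃ q,
      a + q * rowSum (rv (Fin.last r)) cv = zv (cv k) * w := by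
    intro k
    have h0 := hall k
    rw [Idl_succ_row rv cv, lin_eq_rowSum] at h0
    exact mem_sup_singleton.mp h0
  choose a ha q hq using hall'
  have hu : ∀ k l, q k * zv (cv l) - q l * zv (cv k)
      ∈ Idl r (r+1) (rv ∘ Fin.castSucc) cv := by
    intro k l
    rw [Idl_eq]
    refine lc_row (rv (Fin.last r)) cv hcv 0 _ ?_ ?_ _ ?_
    · rintro g ⟨i, rfl⟩; exact vfree_lin _ _ _ _ hRne i
    · intro u huu
      rw [← Idl_eq] at huu ⊢
      exact h2 (r+1) _ cv hrv' hcv (by omega) 0 u huu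
    · rw [← Idl_eq]
      have heq : rowSum (rv (Fin.last r)) cv * (q k * zv (cv l) - q l * zv (cv k))
          = a l * zv (cv k) - a k * zv (cv l) := by
        linear_combination zv (cv l) * hq k - zv (cv k) * hq l
      rw [heq]
      exact Submodule.sub_mem _ (Ideal.mul_mem_right _ _ (ha l)) (Ideal.mul_mem_right _ _ (ha k))
  -- reduce q 0 modulo z_0 and apply the square statement one size down
  have hq0m : ∀ l', zv ((cv ∘ (0 : Fin (r+1)).succAbove) l') * kz (cv 0) (q 0)
      ∈ Idl r r (rv ∘ Fin.castSucc) (cv ∘ (0 : Fin (r+1)).succAbove) := by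
    intro l'
    have h1 : q 0 * zv (cv ((0 : Fin (r+1)).succAbove l')) ∈
        Idl r (r+1) (rv ∘ Fin.castSucc) cv ⊔ Ideal.span {zv (cv 0)} := by
      have heq : q 0 * zv (cv ((0 : Fin (r+1)).succAbove l'))
          = q ((0 : Fin (r+1)).succAbove l') * zv (cv 0)
            + (q 0 * zv (cv ((0 : Fin (r+1)).succAbove l'))
              - q ((0 : Fin (r+1)).succAbove l') * zv (cv 0)) := by ring
      rw [heq]
      exact Submodule.add_mem _
        (Submodule.mem_sup_right (Ideal.mem_span_singleton'.mpr ⟨_, rfl⟩))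
        (Submodule.mem_sup_left (hu 0 _))
    have h3 := kz_mem_Idl hcv 0 h1
    rw [map_mul, kz_zv_ne _ (show cv ((0 : Fin (r+1)).succAbove l') ≠ cv 0 from
      fun hh => Fin.succAbove_ne _ _ (hcv hh))] at h3
    rw [mul_comm]
    exact h3
  have hq0 := hS (rv ∘ Fin.castSucc) (cv ∘ (0 : Fin (r+1)).succAbove) hrv'
    (hcv.comp Fin.succAbove_right_injective) _ hq0m
  obtain ⟨b1, hb1, e, he⟩ := mem_sup_singleton.mp hq0
  -- q 0 = β + γ z_0 + e δ_0
  have hδ0 : δm r (rv ∘ Fin.castSucc) cv 0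
      = Mi r (rv ∘ Fin.castSucc) (cv ∘ (0 : Fin (r+1)).succAbove) := by
    rw [δm]; norm_num
  have hq0d : q 0 - e * δm r (rv ∘ Fin.castSucc) cv 0
      ∈ Idl r (r+1) (rv ∘ Fin.castSucc) cv ⊔ Ideal.span {zv (cv 0)} := by
    have heq : q 0 - e * δm r (rv ∘ Fin.castSucc) cv 0
        = b1 + (q 0 - kz (cv 0) (q 0)) := by
      rw [hδ0]; linear_combination (-1 : Oamb n) * he
    rw [heq]
    exact Submodule.add_mem _ (Idl_del_le (rv ∘ Fin.castSucc) cv hcv 0 hb1)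
      (Submodule.mem_sup_right (sub_kz_mem _ _))
  obtain ⟨β, hβ, γ, hγ⟩ := mem_sup_singleton.mp hq0d
  have hτ : ∀ l, q l - γ * zv (cv l) - δm r (rv ∘ Fin.castSucc) cv l * e
      ∈ Idl r (r+1) (rv ∘ Fin.castSucc) cv := by
    intro l
    apply h2 (r+1) _ cv hrv' hcv (by omega) 0
    have heq : zv (cv 0) * (q l - γ * zv (cv l) - δm r (rv ∘ Fin.castSucc) cv l * e)
        = β * zv (cv l)
          + (δm r (rv ∘ Fin.castSucc) cv 0 * zv (cv l)
              - δm r (rv ∘ Fin.castSucc) cv l * zv (cv 0)) * e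
          - (q 0 * zv (cv l) - q l * zv (cv 0)) := by
      linear_combination (-(zv (cv l))) * hγ
    rw [heq]
    refine Submodule.sub_mem _ (Submodule.add_mem _ (Ideal.mul_mem_right _ _ hβ)
      (Ideal.mul_mem_right _ _ (cramer_identity (rv ∘ Fin.castSucc) cv l 0))) (hu 0 l)
  -- the determinant combination
  have hDk : ∀ k, rowSum (rv (Fin.last r)) cv * δm r (rv ∘ Fin.castSucc) cv k
      - (∑ l, av (rv (Fin.last r)) (cv l) * δm r (rv ∘ Fin.castSucc) cv l) * zv (cv k)
      ∈ Idl r (r+1) (rv ∘ Fin.castSucc) cv := by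
    intro k
    have heq : rowSum (rv (Fin.last r)) cv * δm r (rv ∘ Fin.castSucc) cv k
        - (∑ l, av (rv (Fin.last r)) (cv l) * δm r (rv ∘ Fin.castSucc) cv l) * zv (cv k)
        = ∑ l, av (rv (Fin.last r)) (cv l)
            * (δm r (rv ∘ Fin.castSucc) cv k * zv (cv l)
              - δm r (rv ∘ Fin.castSucc) cv l * zv (cv k)) := by
      rw [rowSum, Finset.sum_mul, Finset.sum_mul, ← Finset.sum_sub_distrib]
      exact Finset.sum_congr rfl fun l _ => by ring
    rw [heq]
    exact Ideal.sum_mem _ fun l _ =>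
      Ideal.mul_mem_left _ _ (cramer_identity (rv ∘ Fin.castSucc) cv l k)
  have hfin : ∀ k, zv (cv k) * (w - γ * rowSum (rv (Fin.last r)) cv
      - (∑ l, av (rv (Fin.last r)) (cv l) * δm r (rv ∘ Fin.castSucc) cv l) * e)
      ∈ Idl r (r+1) (rv ∘ Fin.castSucc) cv := by
    intro k
    have heq : zv (cv k) * (w - γ * rowSum (rv (Fin.last r)) cv
        - (∑ l, av (rv (Fin.last r)) (cv l) * δm r (rv ∘ Fin.castSucc) cv l) * e)
        = a k + (q k - γ * zv (cv k) - δm r (rv ∘ Fin.castSucc) cv k * e)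
            * rowSum (rv (Fin.last r)) cv
          + (rowSum (rv (Fin.last r)) cv * δm r (rv ∘ Fin.castSucc) cv k
            - (∑ l, av (rv (Fin.last r)) (cv l) * δm r (rv ∘ Fin.castSucc) cv l)
              * zv (cv k)) * e := by
      linear_combination (-1 : Oamb n) * hq k
    rw [heq]
    exact Submodule.add_mem _ (Submodule.add_mem _ (ha k)
      (Ideal.mul_mem_right _ _ (hτ k))) (Ideal.mul_mem_right _ _ (hDk k))
  have hend := hA (r+1) (rv ∘ Fin.castSucc) cv hrv' hcv (by omega) _ hfin
  -- reassemble
  have hww : w = (w - γ * rowSum (rv (Fin.last r)) cv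
      - (∑ l, av (rv (Fin.last r)) (cv l) * δm r (rv ∘ Fin.castSucc) cv l) * e)
      + γ * rowSum (rv (Fin.last r)) cv
      + (∑ l, av (rv (Fin.last r)) (cv l) * δm r (rv ∘ Fin.castSucc) cv l) * e := by ring
  rw [hww]
  have hJle : Idl r (r+1) (rv ∘ Fin.castSucc) cv ≤ Idl (r+1) (r+1) rv cv := by
    rw [Idl_succ_row rv cv]; exact le_sup_left
  refine Submodule.add_mem _ (Submodule.add_mem _ ?_ ?_) ?_
  · exact Submodule.mem_sup_left (hJle hend)
  · refine Submodule.mem_sup_left (Ideal.mul_mem_left _ _ ?_)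
    rw [← lin_eq_rowSum rv cv (Fin.last r)]
    exact lin_mem rv cv (Fin.last r)
  · refine Submodule.mem_sup_right (Ideal.mem_span_singleton'.mpr ⟨(-1 : Oamb n)^r * e, ?_⟩)
    have hD := det_last_expand rv cv
    linear_combination e * hD

lemma pkg (n r : ℕ) : E2P n r ∧ ANNP n r ∧ SQP n r := by
  induction r with
  | zero => exact ⟨e2_zero, ann_zero, sq_zero⟩
  | succ r ih => exact ⟨e2_succ ih.1, ann_succ ih.1 ih.2.1, sq_succ ih.1 ih.2.1 ih.2.2⟩

/-! ### Top-level specializations -/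

lemma Idl_top_eq : Idl n (n+1) (id : Fin n → Fin n) (id : Fin (n+1) → Fin (n+1))
    = Ideal.span (Set.range fun i : Fin n => fv i) := rfl

lemma Mi_top_eq : Mi n (id : Fin n → Fin n) Fin.succ = Δ₁ n := rfl

lemma comp_succAbove_zero :
    ((id : Fin (n+1) → Fin (n+1)) ∘ (0 : Fin (n+1)).succAbove : Fin n → Fin (n+1))
      = Fin.succ := rfl

lemma δm_top_zero : δm n (id : Fin n → Fin n) (id : Fin (n+1) → Fin (n+1)) 0 = Δ₁ n := by
  rw [δm, comp_succAbove_zero, Mi_top_eq]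
  norm_num

/-- Top-level regularity: `z₀` is a non zero divisor modulo `(f₁, …, fₙ)`. -/
lemma top_reg (W : Oamb n) (hW : zv 0 * W ∈ Ideal.span (Set.range fun i : Fin n => fv i)) :
    W ∈ Ideal.span (Set.range fun i : Fin n => fv i) := by
  rw [← Idl_top_eq] at hW ⊢
  exact (pkg n n).1 (n+1) id id (fun _ _ h => h) (fun _ _ h => h) (by omega) 0 W hW

/-- Top-level Cramer identity. -/
lemma top_cramer (k : Fin (n+1)) :
    Δ₁ n * zv k - δm n (id : Fin n → Fin n) (id : Fin (n+1) → Fin (n+1)) k * zv 0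
      ∈ Ideal.span (Set.range fun i : Fin n => fv i) := by
  have h := cramer_identity (n := n) (id : Fin n → Fin n) (id : Fin (n+1) → Fin (n+1)) k 0
  rw [δm_top_zero] at h
  rw [← Idl_top_eq]
  exact h

/-- Top-level colon computation. -/
lemma top_colon (W : Oamb n)
    (hW : ∀ k : Fin (n+1), zv k * W ∈
      Ideal.span (Set.range fun i : Fin n => fv i) ⊔ Ideal.span {zv 0}) :
    ∃ y ∈ Ideal.span (Set.range fun i : Fin n => fv i),
      ∃ u v : Oamb n, y + u * zv 0 + v * Δ₁ n = W := by
  have hkz : ∀ l' : Fin n, zv (Fin.succ l') * kz (0 : Fin (n+1)) W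
      ∈ Idl n n (id : Fin n → Fin n) Fin.succ := by
    intro l'
    have h1 : zv ((0 : Fin (n+1)).succAbove l') * W
        ∈ Idl n (n+1) (id : Fin n → Fin n) (id : Fin (n+1) → Fin (n+1))
          ⊔ Ideal.span {zv ((id : Fin (n+1) → Fin (n+1)) 0)} := by
      rw [Idl_top_eq]
      exact hW _
    have h3 := kz_mem_Idl (rv := (id : Fin n → Fin n)) (fun _ _ h => h) 0 h1
    rw [map_mul, kz_zv_ne _ (by simpa using Fin.succ_ne_zero l')] at h3
    exact h3
  have h4 := (pkg n n).2.2 (id : Fin n → Fin n) Fin.succ (fun _ _ h => h)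
    (Fin.succ_injective n) (kz (0 : Fin (n+1)) W) hkz
  rw [Mi_top_eq] at h4
  obtain ⟨b1, hb1, e, he⟩ := mem_sup_singleton.mp h4
  -- W = (W - kz W) + b1 + e * Δ₁
  have hb1' : b1 ∈ Idl n (n+1) (id : Fin n → Fin n) (id : Fin (n+1) → Fin (n+1))
      ⊔ Ideal.span {zv 0} := by
    have := Idl_del_le (id : Fin n → Fin n) (id : Fin (n+1) → Fin (n+1)) (fun _ _ h => h)
      (0 : Fin (n+1))
    rw [comp_succAbove_zero] at this
    exact this hb1
  rw [Idl_top_eq] at hb1'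
  obtain ⟨y1, hy1, u1, hu1⟩ := mem_sup_singleton.mp hb1'
  have hzW : W - kz (0 : Fin (n+1)) W ∈ Ideal.span {zv (0 : Fin (n+1))} := sub_kz_mem _ _
  obtain ⟨u2, hu2⟩ := Ideal.mem_span_singleton'.mp hzW
  refine ⟨y1, hy1, u1 + u2, e, ?_⟩
  linear_combination he + hu1 + hu2

end Resid


noncomputable def Ifv (n : ℕ) : Ideal (Oamb n) := Ideal.span (Set.range (fun i : Fin n => fv i))

noncomputable def IDfv (n : ℕ) : Ideal (Oamb n ⧸ Ifv n) :=
  Ideal.span (Set.range fun j : Fin (n+1) => Ideal.Quotient.mk (Ifv n) (zv j))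

lemma zmem (n : ℕ) (j : Fin (n+1)) : Ideal.Quotient.mk (Ifv n) (zv j) ∈ IDfv n :=
  Ideal.subset_span ⟨j, rfl⟩

open Resid in
set_option maxHeartbeats 1000000 in
set_option synthInstance.maxHeartbeats 1000000 in
lemma residual_main (n : ℕ) (w : Oamb n ⧸ Ifv n) :
    (∃ g : (IDfv n : Ideal (Oamb n ⧸ Ifv n)) →ₗ[Oamb n ⧸ Ifv n] (Oamb n ⧸ Ifv n),
        g ⟨Ideal.Quotient.mk (Ifv n) (zv 0), zmem n 0⟩ = w)
      ↔ w ∈ Ideal.span {Ideal.Quotient.mk (Ifv n) (zv 0),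
            Ideal.Quotient.mk (Ifv n) (Δ₁ n)} := by
  classical
  have hIfv : Ifv n = Ideal.span (Set.range (fun i : Fin n => fv i)) := rfl
  have hregQ : ∀ y : Oamb n ⧸ Ifv n, Ideal.Quotient.mk (Ifv n) (zv 0) * y = 0 → y = 0 := by
    intro y hy
    obtain ⟨Y, rfl⟩ := Ideal.Quotient.mk_surjective y
    rw [← map_mul, Ideal.Quotient.eq_zero_iff_mem, hIfv] at hy
    rw [Ideal.Quotient.eq_zero_iff_mem, hIfv]
    exact Resid.top_reg Y hy
  constructor
  · rintro ⟨g, hg⟩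
    obtain ⟨W, hW⟩ := Ideal.Quotient.mk_surjective w
    have hGex : ∀ j : Fin (n+1), ∃ G : Oamb n,
        Ideal.Quotient.mk (Ifv n) G = g ⟨Ideal.Quotient.mk (Ifv n) (zv j), zmem n j⟩ :=
      fun j => Ideal.Quotient.mk_surjective _
    choose G hG using hGex
    have hmem : ∀ j : Fin (n+1), zv j * W ∈
        Ideal.span (Set.range (fun i : Fin n => fv i)) ⊔ Ideal.span {zv (0 : Fin (n+1))} := by
      intro j
      have hsm : (Ideal.Quotient.mk (Ifv n) (zv j)) •
            (⟨Ideal.Quotient.mk (Ifv n) (zv 0), zmem n 0⟩ : IDfv n)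
          = (Ideal.Quotient.mk (Ifv n) (zv 0)) •
            (⟨Ideal.Quotient.mk (Ifv n) (zv j), zmem n j⟩ : IDfv n) := by
        apply Subtype.ext
        simp only [SetLike.val_smul, smul_eq_mul]
        ring
      have hkey : Ideal.Quotient.mk (Ifv n) (zv j) * w
          = Ideal.Quotient.mk (Ifv n) (zv 0) * Ideal.Quotient.mk (Ifv n) (G j) := by
        rw [← hg]
        calc Ideal.Quotient.mk (Ifv n) (zv j)
              * g ⟨Ideal.Quotient.mk (Ifv n) (zv 0), zmem n 0⟩
            = Ideal.Quotient.mk (Ifv n) (zv j)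
              • g ⟨Ideal.Quotient.mk (Ifv n) (zv 0), zmem n 0⟩ := by rw [smul_eq_mul]
          _ = g ((Ideal.Quotient.mk (Ifv n) (zv j)) •
              (⟨Ideal.Quotient.mk (Ifv n) (zv 0), zmem n 0⟩ : IDfv n)) := (map_smul g _ _).symm
          _ = g ((Ideal.Quotient.mk (Ifv n) (zv 0)) •
              (⟨Ideal.Quotient.mk (Ifv n) (zv j), zmem n j⟩ : IDfv n)) := by rw [hsm]
          _ = Ideal.Quotient.mk (Ifv n) (zv 0)
              • g ⟨Ideal.Quotient.mk (Ifv n) (zv j), zmem n j⟩ := map_smul g _ _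
          _ = Ideal.Quotient.mk (Ifv n) (zv 0)
              * g ⟨Ideal.Quotient.mk (Ifv n) (zv j), zmem n j⟩ := by rw [smul_eq_mul]
          _ = Ideal.Quotient.mk (Ifv n) (zv 0) * Ideal.Quotient.mk (Ifv n) (G j) := by
              rw [hG j]
      have h0 : Ideal.Quotient.mk (Ifv n) (zv j * W - zv 0 * G j) = 0 := by
        rw [map_sub, map_mul, map_mul, hW, hkey]
        ring
      have h1 : zv j * W - zv 0 * G j ∈ Ifv n := Ideal.Quotient.eq_zero_iff_mem.mp h0
      rw [hIfv] at h1
      have hre : zv j * W = (zv j * W - zv 0 * G j) + G j * zv 0 := by ring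
      rw [hre]
      exact Submodule.add_mem _ (Submodule.mem_sup_left h1)
        (Submodule.mem_sup_right (Ideal.mem_span_singleton'.mpr ⟨G j, rfl⟩))
    obtain ⟨y, hy, u, v, huv⟩ := Resid.top_colon W hmem
    rw [Ideal.mem_span_pair]
    refine ⟨Ideal.Quotient.mk (Ifv n) u, Ideal.Quotient.mk (Ifv n) v, ?_⟩
    have hy0 : Ideal.Quotient.mk (Ifv n) y = 0 := by
      rw [Ideal.Quotient.eq_zero_iff_mem, hIfv]; exact hy
    calc Ideal.Quotient.mk (Ifv n) u * Ideal.Quotient.mk (Ifv n) (zv 0)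
          + Ideal.Quotient.mk (Ifv n) v * Ideal.Quotient.mk (Ifv n) (Δ₁ n)
        = Ideal.Quotient.mk (Ifv n) (y + u * zv 0 + v * Δ₁ n) := by
          rw [map_add, map_add, map_mul, map_mul, hy0, zero_add]
      _ = w := by rw [huv, hW]
  · intro hw
    rw [Ideal.mem_span_pair] at hw
    obtain ⟨u, v, huv⟩ := hw
    have hex : ∀ x : Oamb n ⧸ Ifv n, x ∈ IDfv n →
        ∃ y, Ideal.Quotient.mk (Ifv n) (zv 0) * y = Ideal.Quotient.mk (Ifv n) (Δ₁ n) * x := by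
      intro x hx
      rw [IDfv, Ideal.mem_span_range_iff_exists_fun] at hx
      obtain ⟨c, hc⟩ := hx
      refine ⟨∑ j, c j * Ideal.Quotient.mk (Ifv n) (δm n id id j), ?_⟩
      rw [← hc, Finset.mul_sum, Finset.mul_sum]
      refine Finset.sum_congr rfl fun j _ => ?_
      have h2 : Ideal.Quotient.mk (Ifv n) (zv 0) * Ideal.Quotient.mk (Ifv n) (δm n id id j)
          = Ideal.Quotient.mk (Ifv n) (Δ₁ n) * Ideal.Quotient.mk (Ifv n) (zv j) := by
        rw [← map_mul, ← map_mul, Ideal.Quotient.eq]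
        have hcr := Resid.top_cramer (n := n) j
        have heq : zv 0 * δm n id id j - Δ₁ n * zv j
            = -(Δ₁ n * zv j - δm n id id j * zv 0) := by ring
        rw [heq, hIfv]
        exact Submodule.neg_mem _ hcr
      linear_combination c j * h2
    have huniq : ∀ y y' : Oamb n ⧸ Ifv n,
        Ideal.Quotient.mk (Ifv n) (zv 0) * y = Ideal.Quotient.mk (Ifv n) (zv 0) * y'
          → y = y' := by
      intro y y' h
      have h0 : Ideal.Quotient.mk (Ifv n) (zv 0) * (y - y') = 0 := by
        rw [mul_sub, h, sub_self]
      exact sub_eq_zero.mp (hregQ _ h0)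
    let g2 : (IDfv n : Ideal (Oamb n ⧸ Ifv n)) →ₗ[Oamb n ⧸ Ifv n] (Oamb n ⧸ Ifv n) :=
      { toFun := fun x => Classical.choose (hex x.1 x.2)
        map_add' := by
          intro x y
          have hx := Classical.choose_spec (hex x.1 x.2)
          have hy := Classical.choose_spec (hex y.1 y.2)
          have hxy := Classical.choose_spec (hex (x + y).1 (x + y).2)
          have hco : ((x + y : IDfv n) : Oamb n ⧸ Ifv n)
              = (x : Oamb n ⧸ Ifv n) + (y : Oamb n ⧸ Ifv n) := rfl
          have hxy' := hxy.trans (by rw [hco])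
          apply huniq
          linear_combination hxy' - hx - hy
        map_smul' := by
          intro r x
          have hx := Classical.choose_spec (hex x.1 x.2)
          have hrx := Classical.choose_spec (hex (r • x).1 (r • x).2)
          have hco : ((r • x : IDfv n) : Oamb n ⧸ Ifv n) = r * (x : Oamb n ⧸ Ifv n) := rfl
          have hrx' := hrx.trans (by rw [hco])
          apply huniq
          simp only [RingHom.id_apply, smul_eq_mul]
          linear_combination hrx' - r * hx }
    refine ⟨u • (Submodule.subtype (IDfv n : Ideal (Oamb n ⧸ Ifv n))) + v • g2, ?_⟩
    have hze2 : g2 ⟨Ideal.Quotient.mk (Ifv n) (zv 0), zmem n 0⟩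
        = Ideal.Quotient.mk (Ifv n) (Δ₁ n) := by
      apply huniq
      have hs := Classical.choose_spec (hex (Ideal.Quotient.mk (Ifv n) (zv 0)) (zmem n 0))
      calc Ideal.Quotient.mk (Ifv n) (zv 0)
            * g2 ⟨Ideal.Quotient.mk (Ifv n) (zv 0), zmem n 0⟩
          = Ideal.Quotient.mk (Ifv n) (Δ₁ n) * Ideal.Quotient.mk (Ifv n) (zv 0) := hs
        _ = Ideal.Quotient.mk (Ifv n) (zv 0) * Ideal.Quotient.mk (Ifv n) (Δ₁ n) :=
            mul_comm _ _
    have heval : (u • (Submodule.subtype (IDfv n : Ideal (Oamb n ⧸ Ifv n))) + v • g2)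
          ⟨Ideal.Quotient.mk (Ifv n) (zv 0), zmem n 0⟩
        = u * Ideal.Quotient.mk (Ifv n) (zv 0)
          + v * Ideal.Quotient.mk (Ifv n) (Δ₁ n) := by
      rw [LinearMap.add_apply, LinearMap.smul_apply, LinearMap.smul_apply, hze2]
      rfl
    exact heval.trans huv


/-- In `O_X = O_amb/(f_1, …, f_n)`, the residual ideal of `I_D = (z̄_1, …, z̄_{n+1})` with
respect to `z̄_1`, namely `{ g(z̄_1) : g ∈ Hom_{O_X}(I_D, O_X) }`, equals `(z̄_1, Δ̄_1)`. -/
theorem residual_of_ID_eq (n : ℕ) (hn : 1 ≤ n) (w : Oamb n ⧸ Ideal.span (Set.range (fun i : Fin n => fv i))) :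
    (∃ g : (Ideal.span (Set.range fun j : Fin (n+1) =>
              Ideal.Quotient.mk (Ideal.span (Set.range (fun i : Fin n => fv i))) (zv j))
            : Ideal (Oamb n ⧸ Ideal.span (Set.range (fun i : Fin n => fv i)))) →ₗ[Oamb n ⧸ Ideal.span (Set.range (fun i : Fin n => fv i))]
            (Oamb n ⧸ Ideal.span (Set.range (fun i : Fin n => fv i))),
        g ⟨Ideal.Quotient.mk (Ideal.span (Set.range (fun i : Fin n => fv i))) (zv 0),
            Ideal.subset_span ⟨0, rfl⟩⟩ = w)
      ↔ w ∈ Ideal.span {Ideal.Quotient.mk (Ideal.span (Set.range (fun i : Fin n => fv i))) (zv 0),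
            Ideal.Quotient.mk (Ideal.span (Set.range (fun i : Fin n => fv i))) (Δ₁ n)} :=
  residual_main n w
end

section
/- Fix n ≥ 1. In the polynomial ring O_amb = ℤ[a_{ij}, z_j], there is the equality of ideals (z_1, f_1, ..., f_n) = (z_1, ..., z_{n+1}) ∩ (z_1, f_1, ..., f_n, Δ_1). -/
open MvPolynomial

/-!
Every `f_i` vanishes at `z = 0`, so `I = (z_1, f_1, …, f_n)` lies in the prime ideal
`Z = (z_1, …, z_{n+1})`, which does not contain `Δ₁`. Cramer's rule applied to the last `n`
columns gives `Δ₁ z_j ∈ I` for all `j`, i.e. `Δ₁ Z ⊆ I`. Hence if `r Δ₁ + g ∈ Z` with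
`g ∈ I`, then `r Δ₁ ∈ Z`, so `r ∈ Z` and `r Δ₁ ∈ I`.
-/

open Matrix

theorem Ideal.inf_span_singleton_sup_eq {R : Type*} [CommRing R] {I P : Ideal R} [P.IsPrime]
    {d : R} (hIP : I ≤ P) (hd : d ∉ P) (hdP : ∀ p ∈ P, d * p ∈ I) :
    P ⊓ (Ideal.span {d} ⊔ I) = I := by
  refine le_antisymm ?_ (le_inf hIP le_sup_right)
  rintro x ⟨hxP, hxJ⟩
  obtain ⟨y, hy, g, hg, rfl⟩ := Submodule.mem_sup.1 hxJ
  obtain ⟨r, rfl⟩ := Ideal.mem_span_singleton'.1 hy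
  have hrd : r * d ∈ P := by simpa using P.sub_mem hxP (hIP hg)
  have hr : r ∈ P := (‹P.IsPrime›.mem_or_mem hrd).resolve_right hd
  exact I.add_mem (mul_comm r d ▸ hdP r hr) hg

theorem Matrix.det_mul_mem_span_mulVec {R n : Type*} [CommRing R] [Fintype n] [DecidableEq n]
    (A : Matrix n n R) (v : n → R) (k : n) :
    A.det * v k ∈ Ideal.span (Set.range (A *ᵥ v)) := by
  have hcramer : A.det • v = A.adjugate *ᵥ (A *ᵥ v) := by
    rw [mulVec_mulVec, adjugate_mul, smul_mulVec, one_mulVec]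
  rw [← smul_eq_mul, ← Pi.smul_apply, hcramer, mulVec, dotProduct]
  exact Ideal.sum_mem _ fun i _ => Ideal.mul_mem_left _ _ (Ideal.subset_span ⟨i, rfl⟩)

namespace MvPolynomial

variable {σ R : Type*} [CommRing R]

noncomputable def killVars (s : Set σ) : MvPolynomial σ R →ₐ[R] MvPolynomial σ R :=
  aeval (sᶜ.indicator X)

theorem ker_killVars (s : Set σ) :
    RingHom.ker (killVars (R := R) s) = Ideal.span (X '' s) := by
  set Z : Ideal (MvPolynomial σ R) := Ideal.span (X '' s)
  refine le_antisymm ?_ ?_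
  · have hmk : (Ideal.Quotient.mkₐ R Z).comp (killVars s) = Ideal.Quotient.mkₐ R Z := by
      refine algHom_ext fun i => ?_
      by_cases hi : i ∈ s
      · simp only [AlgHom.comp_apply, killVars, aeval_X,
          Set.indicator_of_notMem (show i ∉ sᶜ by simpa), map_zero, Ideal.Quotient.mkₐ_eq_mk]
        exact (Ideal.Quotient.eq_zero_iff_mem.2
          (Ideal.subset_span (Set.mem_image_of_mem X hi))).symm
      · simp [killVars, Set.indicator_of_mem (show i ∈ sᶜ from hi)]
    intro p hp
    rw [← Ideal.Quotient.eq_zero_iff_mem, ← Ideal.Quotient.mkₐ_eq_mk R, ← hmk,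
      AlgHom.comp_apply, (RingHom.mem_ker).1 hp, map_zero]
  · rw [Ideal.span_le]
    rintro _ ⟨i, hi, rfl⟩
    simp [killVars, Set.indicator_of_notMem (show i ∉ sᶜ by simpa)]

theorem isPrime_span_X_image [IsDomain R] (s : Set σ) :
    (Ideal.span (X '' s : Set (MvPolynomial σ R))).IsPrime :=
  ker_killVars (R := R) s ▸ RingHom.ker_isPrime _

theorem eval_eq_zero_of_mem_span_X_image {s : Set σ} {p : MvPolynomial σ R}
    (hp : p ∈ Ideal.span (X '' s)) {x : σ → R} (hx : ∀ i ∈ s, x i = 0) : eval x p = 0 := by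
  refine (Ideal.span_le (I := RingHom.ker (eval x)) |>.2 ?_) hp
  rintro _ ⟨i, hi, rfl⟩
  simp [hx i hi]

end MvPolynomial

section

variable {n : ℕ}

theorem range_zv : Set.range (zv (n := n)) = X '' Set.range Sum.inr :=
  Set.range_comp X Sum.inr

theorem isPrime_span_zv : (Ideal.span (Set.range (zv (n := n)))).IsPrime :=
  range_zv (n := n) ▸ isPrime_span_X_image _

theorem span_fv_le_span_zv :
    Ideal.span (insert (zv 0) (Set.range fv)) ≤ Ideal.span (Set.range (zv (n := n))) := by
  rw [Ideal.span_le]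
  rintro _ (rfl | ⟨i, rfl⟩)
  · exact Ideal.subset_span ⟨0, rfl⟩
  · exact Ideal.sum_mem _ fun j _ => Ideal.mul_mem_left _ _ (Ideal.subset_span ⟨j, rfl⟩)

theorem Δ₁_notMem_span_zv : Δ₁ n ∉ Ideal.span (Set.range (zv (n := n))) := by
  -- the point `z = 0` at which the minor `Δ₁` becomes the identity matrix
  set x : (Fin n × Fin (n+1)) ⊕ Fin (n+1) → ℤ :=
    Sum.elim (fun p => if p.2 = p.1.succ then 1 else 0) 0
  have hx : eval x (Δ₁ n) = 1 := by
    rw [Δ₁, RingHom.map_det, ← Matrix.det_one (n := Fin n) (R := ℤ)]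
    congr 1
    ext i j
    simp [av, x, Matrix.one_apply, eq_comm]
  intro hmem
  rw [range_zv] at hmem
  have hx0 := eval_eq_zero_of_mem_span_X_image hmem (x := x) (by rintro _ ⟨j, rfl⟩; rfl)
  exact one_ne_zero (hx ▸ hx0)

theorem minor_mulVec_zv_succ (i : Fin n) :
    ((Matrix.of fun i j : Fin n => av i j.succ) *ᵥ fun j => zv j.succ) i =
      fv i - av i 0 * zv 0 := by
  simp [fv, Fin.sum_univ_succ, mulVec, dotProduct]

theorem Δ₁_mul_zv_mem (j : Fin (n+1)) :
    Δ₁ n * zv j ∈ Ideal.span (insert (zv 0) (Set.range fv)) := by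
  have hz0 : zv 0 ∈ Ideal.span (insert (zv 0) (Set.range (fv (n := n)))) :=
    Ideal.subset_span (Set.mem_insert _ _)
  induction j using Fin.cases with
  | zero => exact Ideal.mul_mem_left _ _ hz0
  | succ k =>
    have hcramer := Matrix.det_mul_mem_span_mulVec
      (Matrix.of fun i j : Fin n => av i j.succ) (fun j => zv j.succ) k
    refine Ideal.span_le.2 ?_ hcramer
    refine Set.range_subset_iff.2 fun i => ?_
    rw [minor_mulVec_zv_succ]
    exact sub_mem (Ideal.subset_span (Set.mem_insert_of_mem _ ⟨i, rfl⟩))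
      (Ideal.mul_mem_left _ _ hz0)

theorem Δ₁_mul_mem {p : Oamb n} (hp : p ∈ Ideal.span (Set.range zv)) :
    Δ₁ n * p ∈ Ideal.span (insert (zv 0) (Set.range fv)) := by
  induction hp using Submodule.span_induction with
  | mem _ h => obtain ⟨j, rfl⟩ := h; exact Δ₁_mul_zv_mem j
  | zero => simp
  | add _ _ _ _ hx hy => rw [mul_add]; exact add_mem hx hy
  | smul c _ _ hx => rw [smul_eq_mul, mul_left_comm]; exact Ideal.mul_mem_left _ _ hx

end

theorem span_eq_inter_general (n : ℕ) :
    Ideal.span (insert (zv 0) (Set.range (fun i : Fin n => fv i)))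
      = Ideal.span (Set.range (fun j : Fin (n+1) => zv j)) ⊓
        Ideal.span (insert (zv 0) (insert (Δ₁ n) (Set.range (fun i : Fin n => fv i)))) := by
  have : (Ideal.span (Set.range (zv (n := n)))).IsPrime := isPrime_span_zv
  rw [Set.insert_comm (zv 0) (Δ₁ n), Ideal.span_insert (Δ₁ n)]
  exact (Ideal.inf_span_singleton_sup_eq (span_fv_le_span_zv (n := n)) Δ₁_notMem_span_zv
    fun _ => Δ₁_mul_mem).symm

/-- The ideal equality `(z_1, f_1, …, f_n) = (z_1, …, z_{n+1}) ∩ (z_1, f_1, …, f_n, Δ₁)`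
in `O_amb`. -/
theorem span_eq_inter (n : ℕ) (hn : 1 ≤ n) :
    Ideal.span (insert (zv 0) (Set.range (fun i : Fin n => fv i)))
      = Ideal.span (Set.range (fun j : Fin (n+1) => zv j)) ⊓
        Ideal.span (insert (zv 0) (insert (Δ₁ n) (Set.range (fun i : Fin n => fv i)))) :=
  span_eq_inter_general n
end

section
/- Fix n ≥ 1. The quotient ring O_amb/(z_1, f_1, ..., f_n, Δ_1), where O_amb = ℤ[a_{ij}, z_j], f_i = Σ_{j=1}^{n+1} a_{ij} z_j, and Δ_1 is the determinant of the generic matrix (a_{ij}) with its first column deleted, is an integral domain. -/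
open MvPolynomial

open Finset

namespace Resid

abbrev ν : Type := (ℕ × ℕ) ⊕ ℕ

noncomputable abbrev U : Type := MvPolynomial ν ℤ

noncomputable def cc (i j : ℕ) : U := X (Sum.inl (i, j))
noncomputable def vv (j : ℕ) : U := X (Sum.inr j)

noncomputable def frow {q : ℕ} (ρ : ℕ) (col : Fin q → ℕ) : U :=
  ∑ j, cc ρ (col j) * vv (col j)

noncomputable def Fid {p q : ℕ} (row : Fin p → ℕ) (col : Fin q → ℕ) : Ideal U :=
  Ideal.span (Set.range fun i => frow (row i) col)

noncomputable def Amat {k : ℕ} (row col : Fin k → ℕ) : Matrix (Fin k) (Fin k) U :=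
  Matrix.of fun i j => cc (row i) (col j)

noncomputable def Bsub {k : ℕ} (ρ : Fin (k+1) → ℕ) (W : Fin k → ℕ) (i : Fin (k+1)) :
    Matrix (Fin k) (Fin k) U :=
  Matrix.of fun s t => cc (ρ (i.succAbove s)) (W t)

noncomputable def mvec {k : ℕ} (ρ : Fin (k+1) → ℕ) (W : Fin k → ℕ) (i : Fin (k+1)) : U :=
  (-1)^(i:ℕ) * (Bsub ρ W i).det

noncomputable def Jid {k : ℕ} (row col : Fin k → ℕ) : Ideal U :=
  Ideal.span (insert (Amat row col).det (Set.range fun i => frow (row i) col))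

attribute [local instance] Classical.propDecidable

noncomputable def kill (S : Set ν) : U →ₐ[ℤ] U :=
  aeval (fun x => if x ∈ S then 0 else X x)

lemma kill_X_mem {S : Set ν} {x : ν} (h : x ∈ S) : kill S (X x) = 0 := by
  simp [kill, h]

lemma kill_X_not_mem {S : Set ν} {x : ν} (h : x ∉ S) : kill S (X x) = X x := by
  simp [kill, h]

lemma sub_kill_mem_span (S : Set ν) (t : U) :
    t - kill S t ∈ Ideal.span (Set.image X S) := by
  induction t using MvPolynomial.induction_on with
  | C a => simp
  | add p q hp hq =>
      have : p + q - kill S (p + q) = (p - kill S p) + (q - kill S q) := by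
        rw [map_add]; ring
      rw [this]; exact Ideal.add_mem _ hp hq
  | mul_X p x hp =>
      by_cases hx : x ∈ S
      · have : p * X x - kill S (p * X x) = (p - kill S p) * X x + kill S p * X x := by
          rw [map_mul, kill_X_mem hx]; ring
        rw [this]
        refine Ideal.add_mem _ (Ideal.mul_mem_right _ _ hp) ?_
        exact Ideal.mul_mem_left _ _ (Ideal.subset_span ⟨x, hx, rfl⟩)
      · have : p * X x - kill S (p * X x) = (p - kill S p) * X x := by
          rw [map_mul, kill_X_not_mem hx]; ring
        rw [this]; exact Ideal.mul_mem_right _ _ hp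


section Lam

variable {s : ℕ} (y : Fin s → ν)

noncomputable def Lam : U →ₐ[ℤ] MvPolynomial (Fin s) U :=
  aeval (fun x => if h : ∃ i, y i = x then X h.choose else C (X x))

lemma Lam_X_mem (hy : Function.Injective y) (i : Fin s) : Lam y (X (y i)) = X i := by
  have h : ∃ j, y j = y i := ⟨i, rfl⟩
  simp only [Lam, aeval_X, dif_pos h]
  congr 1
  exact hy h.choose_spec

lemma Lam_X_not {x : ν} (hx : ∀ i, y i ≠ x) : Lam y (X x) = C (X x) := by
  simp only [Lam, aeval_X]
  rw [dif_neg]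
  rintro ⟨i, hi⟩
  exact hx i hi

noncomputable def evy : MvPolynomial (Fin s) U →ₐ[U] U := aeval (fun i => X (y i))

lemma evy_Lam (t : U) : evy y (Lam y t) = t := by
  have h : ((evy y).restrictScalars ℤ).comp (Lam y) = AlgHom.id ℤ U := by
    apply MvPolynomial.algHom_ext
    intro x
    simp only [AlgHom.comp_apply, AlgHom.coe_restrictScalars', AlgHom.id_apply]
    simp only [Lam, aeval_X]
    split_ifs with h
    · rw [evy, aeval_X, h.choose_spec]
    · rw [evy, aeval_C]
      rfl
  calc evy y (Lam y t) = (((evy y).restrictScalars ℤ).comp (Lam y)) t := rfl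
  _ = t := by rw [h]; rfl

lemma coeff_mul_mem {J : Ideal U} {P Q : MvPolynomial (Fin s) U}
    (h : ∀ δ, coeff δ Q ∈ J) (β : Fin s →₀ ℕ) : coeff β (P * Q) ∈ J := by
  rw [coeff_mul]
  exact Ideal.sum_mem _ fun x _ => Ideal.mul_mem_left _ _ (h x.2)

lemma coeff_Lam_mem {G : Set U} (hG : ∀ g ∈ G, Lam y g = C g) {t : U}
    (ht : t ∈ Ideal.span G) (β : Fin s →₀ ℕ) :
    coeff β (Lam y t) ∈ Ideal.span G := by
  induction ht using Submodule.span_induction generalizing β with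
  | mem g hg =>
      rw [hG g hg]
      rw [coeff_C]
      split_ifs
      · exact Ideal.subset_span hg
      · exact Ideal.zero_mem _
  | zero => simp
  | add a b _ _ ha hb => rw [map_add, coeff_add]; exact Ideal.add_mem _ (ha β) (hb β)
  | smul r a _ ha =>
      have : r • a = r * a := rfl
      rw [this, map_mul]
      exact coeff_mul_mem (fun δ => ha δ) β

lemma mem_of_coeff_Lam {J : Ideal U} {t : U}
    (h : ∀ β, coeff β (Lam y t) ∈ J) : t ∈ J := by
  rw [← evy_Lam y t, MvPolynomial.as_sum (Lam y t), map_sum]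
  refine Ideal.sum_mem _ fun β _ => ?_
  rw [MvPolynomial.monomial_eq, map_mul]
  refine Ideal.mul_mem_right _ _ ?_
  have : (evy y) (C (coeff β (Lam y t))) = coeff β (Lam y t) := aeval_C _ _
  rw [this]
  exact h β

lemma Lam_det {k : ℕ} (M : Matrix (Fin k) (Fin k) U)
    (hM : ∀ i j, Lam y (M i j) = C (M i j)) : Lam y M.det = C M.det := by
  rw [Matrix.det_apply, map_sum, map_sum]
  refine Finset.sum_congr rfl fun σ _ => ?_
  rw [Units.smul_def, map_zsmul, map_zsmul (C : U →+* MvPolynomial (Fin s) U)]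
  congr 1
  rw [map_prod, map_prod]
  exact Finset.prod_congr rfl fun i _ => hM _ _

end Lam

/-- `y`-indexing of the row of fresh variables -/
noncomputable def yrow {q : ℕ} (ρ' : ℕ) (col : Fin q → ℕ) : Fin q → ν :=
  fun j => Sum.inl (ρ', col j)

lemma yrow_inj {q : ℕ} (ρ' : ℕ) {col : Fin q → ℕ} (hcol : Function.Injective col) :
    Function.Injective (yrow ρ' col) := by
  intro a b h
  simp only [yrow, Sum.inl.injEq, Prod.mk.injEq] at h
  exact hcol h.2

lemma Lam_frow {q : ℕ} (ρ' : ℕ) {col : Fin q → ℕ} (hcol : Function.Injective col) :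
    Lam (yrow ρ' col) (frow ρ' col) = ∑ j, C (vv (col j)) * X j := by
  rw [frow, map_sum]
  refine Finset.sum_congr rfl fun j _ => ?_
  rw [map_mul]
  have h1 : Lam (yrow ρ' col) (cc ρ' (col j)) = X j := Lam_X_mem _ (yrow_inj ρ' hcol) j
  have h2 : Lam (yrow ρ' col) (vv (col j)) = C (vv (col j)) := by
    refine Lam_X_not _ fun i => ?_
    simp [yrow, vv]
  rw [h1, h2, mul_comm]

/-- The master extraction lemma: if `t * ℓ` lies in an ideal spanned by `y`-free
generators, and multiplication by `vv (col 0)` can be cancelled in `J`, then `t ∈ J`. -/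
lemma key_extract {q : ℕ} {col : Fin (q+1) → ℕ} (hcol : Function.Injective col)
    (ρ' : ℕ) {t : U} {G : Set U} {J : Ideal U}
    (hG : ∀ g ∈ G, Lam (yrow ρ' col) g = C g)
    (hmem : t * frow ρ' col ∈ Ideal.span G)
    (hspan : Ideal.span G ≤ J)
    (hcolon : ∀ g : U, vv (col 0) * g ∈ J → g ∈ J) :
    t ∈ J := by
  set yy := yrow ρ' col with hyy
  set D := (Lam yy t).totalDegree with hD
  suffices h : ∀ c : ℕ, ∀ β : Fin (q+1) →₀ ℕ, D + 1 ≤ β 0 + c → coeff β (Lam yy t) ∈ J by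
    exact mem_of_coeff_Lam _ fun β => h (D+1) β (by omega)
  intro c
  induction c with
  | zero =>
      intro β hβ
      have : coeff β (Lam yy t) = 0 := by
        by_contra hne
        have hsup : β ∈ (Lam yy t).support := by
          rw [MvPolynomial.mem_support_iff]; exact hne
        have h1 : (β.sum fun _ e => e) ≤ D := MvPolynomial.le_totalDegree hsup
        have h2 : β 0 ≤ β.sum fun _ e => e := by
          by_cases h0 : β 0 = 0
          · omega
          · exact Finset.single_le_sum (f := fun i => β i) (fun i _ => Nat.zero_le _)
              (Finsupp.mem_support_iff.2 h0)
        omega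
      rw [this]; exact Ideal.zero_mem _
  | succ c ih =>
      intro β hβ
      -- the coefficient relation at γ = β + single 0 1
      set γ : Fin (q+1) →₀ ℕ := β + Finsupp.single 0 1 with hγ
      have hrel : coeff γ (Lam yy (t * frow ρ' col)) ∈ J :=
        hspan (coeff_Lam_mem _ hG hmem γ)
      rw [map_mul, Lam_frow ρ' hcol, Finset.mul_sum, coeff_sum] at hrel
      have hterm : ∀ j : Fin (q+1),
          coeff γ (Lam yy t * (C (vv (col j)) * X j))
            = if j ∈ γ.support then vv (col j) * coeff (γ - Finsupp.single j 1) (Lam yy t)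
              else 0 := by
        intro j
        have : Lam yy t * (C (vv (col j)) * X j) = C (vv (col j)) * Lam yy t * X j := by ring
        rw [this, coeff_mul_X', coeff_C_mul]
      simp only [hterm] at hrel
      rw [Fin.sum_univ_succ] at hrel
      have h0sup : (0 : Fin (q+1)) ∈ γ.support := by
        rw [Finsupp.mem_support_iff, hγ]
        simp
      rw [if_pos h0sup] at hrel
      have hγ0 : γ - Finsupp.single 0 1 = β := by
        rw [hγ]; ext a; simp
      rw [hγ0] at hrel
      have htail : ∀ j : Fin q,
          (if j.succ ∈ γ.support then
            vv (col j.succ) * coeff (γ - Finsupp.single j.succ 1) (Lam yy t) else 0) ∈ J := by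
        intro j
        split_ifs
        · refine Ideal.mul_mem_left _ _ (ih _ ?_)
          have hco : (γ - (Finsupp.single j.succ 1 : Fin (q+1) →₀ ℕ)) 0 = β 0 + 1 := by
            rw [hγ]
            rw [Finsupp.tsub_apply, Finsupp.add_apply, Finsupp.single_apply, Finsupp.single_apply]
            have hne : ¬ ((j.succ : Fin (q+1)) = 0) := Fin.succ_ne_zero j
            have hne0 : ¬ ((0 : Fin (q+1)) = j.succ) := fun h => hne h.symm
            simp [hne]
          omega
        · exact Ideal.zero_mem _
      have : vv (col 0) * coeff β (Lam yy t) ∈ J := by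
        have hsum : (∑ j : Fin q, if j.succ ∈ γ.support then
            vv (col j.succ) * coeff (γ - Finsupp.single j.succ 1) (Lam yy t) else 0) ∈ J :=
          Ideal.sum_mem _ fun j _ => htail j
        have := Ideal.sub_mem _ hrel hsum
        simpa using this
      exact hcolon _ this

/-! helper lemmas -/

lemma Lam_frow_C {q : ℕ} (ρ' ρ : ℕ) (hρ : ρ ≠ ρ') (col : Fin q → ℕ) :
    Lam (yrow ρ' col) (frow ρ col) = C (frow ρ col) := by
  rw [frow, map_sum, map_sum]
  refine Finset.sum_congr rfl fun j _ => ?_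
  rw [map_mul, map_mul]
  have h1 : Lam (yrow ρ' col) (cc ρ (col j)) = C (cc ρ (col j)) := by
    refine Lam_X_not _ fun i h => ?_
    simp only [yrow, cc, Sum.inl.injEq, Prod.mk.injEq] at h
    exact hρ h.1.symm
  have h2 : Lam (yrow ρ' col) (vv (col j)) = C (vv (col j)) := by
    refine Lam_X_not _ fun i h => by simp [yrow, vv] at h
  rw [h1, h2]

lemma vv_ne_zero (j : ℕ) : (vv j : U) ≠ 0 := X_ne_zero _

lemma frow_succ {q : ℕ} (ρ : ℕ) (col : Fin (q+1) → ℕ) :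
    frow ρ col = cc ρ (col 0) * vv (col 0) + frow ρ (col ∘ Fin.succ) := by
  rw [frow, Fin.sum_univ_succ, frow]
  simp [Function.comp]

/-- killing `vv (col 0)` sends `frow ρ col` to the system on the tail columns -/
lemma kill_frow {q : ℕ} (ρ : ℕ) (col : Fin (q+1) → ℕ) (hcol : Function.Injective col) :
    kill {Sum.inr (col 0)} (frow ρ col) = frow ρ (col ∘ Fin.succ) := by
  rw [frow_succ, map_add, map_mul]
  have h0 : kill {Sum.inr (col 0)} (vv (col 0)) = 0 := kill_X_mem rfl
  rw [h0, mul_zero, zero_add]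
  unfold frow
  rw [map_sum]
  refine Finset.sum_congr rfl fun j _ => ?_
  rw [map_mul]
  have hne : col (Fin.succ j) ≠ col 0 := fun h => Fin.succ_ne_zero j (hcol h)
  have h1 : kill {Sum.inr (col 0)} (cc ρ ((col ∘ Fin.succ) j)) = cc ρ ((col ∘ Fin.succ) j) :=
    kill_X_not_mem (by simp [cc])
  have h2 : kill {Sum.inr (col 0)} (vv ((col ∘ Fin.succ) j)) = vv ((col ∘ Fin.succ) j) :=
    kill_X_not_mem (by simp [vv]; exact hne)
  rw [h1, h2]

lemma sub_kill_single (a : ν) (t : U) : ∃ r : U, t - kill {a} t = X a * r := by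
  have h := sub_kill_mem_span {a} t
  rw [Set.image_singleton, Ideal.mem_span_singleton] at h
  obtain ⟨r, hr⟩ := h
  exact ⟨r, hr⟩

lemma antisym_sum_zero {p : ℕ} (γ : Fin p → Fin p → U) (hγ : ∀ a b, γ a b = - γ b a)
    (A : Fin p → U) : (∑ i, ∑ k, γ i k * (A k * A i)) = 0 := by
  set S := ∑ i, ∑ k, γ i k * (A k * A i) with hS
  have hcomm : S = ∑ i, ∑ k, γ k i * (A i * A k) := Finset.sum_comm
  have h2 : S + S = 0 := by
    nth_rewrite 2 [hcomm]
    rw [hS, ← Finset.sum_add_distrib]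
    refine Finset.sum_eq_zero fun i _ => ?_
    rw [← Finset.sum_add_distrib]
    refine Finset.sum_eq_zero fun k _ => ?_
    rw [hγ i k]; ring
  have h3 : (2 : U) * S = 0 := by rw [two_mul]; exact h2
  rcases mul_eq_zero.mp h3 with hc | hc
  · exact absurd hc two_ne_zero
  · exact hc

/-- The wide/square syzygy theorem, by induction on the number of columns. -/
theorem wide_syz (Q : ℕ) :
    ∀ p (row : Fin p → ℕ) (col : Fin Q → ℕ),
      Function.Injective row → Function.Injective col → p ≤ Q →
      ∀ h : Fin p → U, (∑ i, h i * frow (row i) col) = 0 →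
      ∃ γ : Fin p → Fin p → U, (∀ a b, γ a b = - γ b a) ∧
        ∀ i, h i = ∑ k, γ i k * frow (row k) col := by
  induction Q with
  | zero =>
      intro p row col _ _ hp h _
      interval_cases p
      exact ⟨fun a => a.elim0, fun a => a.elim0, fun a => a.elim0⟩
  | succ Q IH =>
      intro p row col hrow hcol hp h hsyz
      -- Step 1 : the v-nonzerodivisor property for strictly wide systems with Q+1 columns
      have vnzd : ∀ r (row' : Fin r → ℕ), r ≤ Q → Function.Injective row' →
          ∀ g : U, vv (col 0) * g ∈ Fid row' col → g ∈ Fid row' col := by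
        intro r row' hr hrow' g hg
        rw [Fid, Ideal.mem_span_range_iff_exists_fun] at hg
        obtain ⟨hc, hhc⟩ := hg
        -- kill vv (col 0)
        set φ := kill {Sum.inr (col 0)} with hφ
        have hksyz : (∑ i, φ (hc i) * frow (row' i) (col ∘ Fin.succ)) = 0 := by
          have := congrArg φ hhc
          rw [map_sum, map_mul] at this
          have h0 : φ (vv (col 0)) = 0 := kill_X_mem rfl
          rw [h0, zero_mul] at this
          rw [← this]
          refine Finset.sum_congr rfl fun i _ => ?_
          rw [map_mul, kill_frow _ _ hcol]
        obtain ⟨γ, hγa, hγ⟩ := IH r row' (col ∘ Fin.succ) hrow'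
          (hcol.comp (Fin.succ_injective Q)) hr _ hksyz
        -- write hc i = φ (hc i) + vv (col 0) * r_i
        have hri : ∀ i, ∃ ri : U, hc i = φ (hc i) + vv (col 0) * ri := by
          intro i
          obtain ⟨ri, hri⟩ := sub_kill_single (Sum.inr (col 0)) (hc i)
          refine ⟨ri, ?_⟩
          rw [hφ, show vv (col 0) = X (Sum.inr (col 0)) from rfl, ← hri]
          ring
        choose rr hrr using hri
        -- expand
        have hexp : vv (col 0) * g =
            vv (col 0) * (∑ i, rr i * frow (row' i) col
              - ∑ i, ∑ k, γ i k * cc (row' k) (col 0) * frow (row' i) col) := by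
          have e1 : ∀ k, frow (row' k) (col ∘ Fin.succ)
              = frow (row' k) col - cc (row' k) (col 0) * vv (col 0) := by
            intro k; rw [frow_succ (row' k) col]; ring
          calc vv (col 0) * g = ∑ i, hc i * frow (row' i) col := hhc.symm
          _ = ∑ i, (∑ k, γ i k * frow (row' k) (col ∘ Fin.succ)) * frow (row' i) col
                + ∑ i, (vv (col 0) * rr i) * frow (row' i) col := by
              rw [← Finset.sum_add_distrib]
              refine Finset.sum_congr rfl fun i _ => ?_
              rw [hrr i, hγ i]; ring
          _ = ∑ i, ∑ k, γ i k * (frow (row' k) col * frow (row' i) col)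
                - vv (col 0) * ∑ i, ∑ k, γ i k * cc (row' k) (col 0) * frow (row' i) col
                + vv (col 0) * ∑ i, rr i * frow (row' i) col := by
              rw [Finset.mul_sum]
              have : ∀ i, (∑ k, γ i k * frow (row' k) (col ∘ Fin.succ)) * frow (row' i) col
                  = ∑ k, γ i k * (frow (row' k) col * frow (row' i) col)
                    - vv (col 0) * ∑ k, γ i k * cc (row' k) (col 0) * frow (row' i) col := by
                intro i
                rw [Finset.sum_mul, Finset.mul_sum, ← Finset.sum_sub_distrib]
                refine Finset.sum_congr rfl fun k _ => ?_
                rw [e1 k]; ring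
              rw [Finset.sum_congr rfl fun i _ => this i, Finset.sum_sub_distrib,
                ← Finset.mul_sum]
              congr 1
              rw [Finset.mul_sum]
              exact Finset.sum_congr rfl fun i _ => by ring
          _ = vv (col 0) * (∑ i, rr i * frow (row' i) col
                - ∑ i, ∑ k, γ i k * cc (row' k) (col 0) * frow (row' i) col) := by
              rw [antisym_sum_zero γ hγa]; ring
        have hcancel := mul_left_cancel₀ (vv_ne_zero (col 0)) hexp
        rw [hcancel]
        refine Ideal.sub_mem _ ?_ ?_
        · exact Ideal.sum_mem _ fun i _ => Ideal.mul_mem_left _ _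
            (Ideal.subset_span ⟨i, rfl⟩)
        · exact Ideal.sum_mem _ fun i _ => Ideal.sum_mem _ fun k _ =>
            Ideal.mul_mem_left _ _ (Ideal.subset_span ⟨i, rfl⟩)
      -- Step 2 : the colon-row property
      have colonrow : ∀ r (row' : Fin r → ℕ) (ρ' : ℕ), r ≤ Q → Function.Injective row' →
          (∀ i, row' i ≠ ρ') →
          ∀ g : U, g * frow ρ' col ∈ Fid row' col → g ∈ Fid row' col := by
        intro r row' ρ' hr hrow' hfresh g hg
        refine key_extract hcol ρ' ?_ hg le_rfl (vnzd r row' hr hrow')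
        rintro _ ⟨i, rfl⟩
        exact Lam_frow_C ρ' (row' i) (hfresh i) col
      -- Step 3 : the syzygy statement, by induction on the number of rows
      have syzAux : ∀ p' (row' : Fin p' → ℕ), p' ≤ Q+1 → Function.Injective row' →
          ∀ h : Fin p' → U, (∑ i, h i * frow (row' i) col) = 0 →
          ∃ γ : Fin p' → Fin p' → U, (∀ a b, γ a b = - γ b a) ∧
            ∀ i, h i = ∑ k, γ i k * frow (row' k) col := by
        intro p'
        induction p' with
        | zero =>
            intro row' _ _ h _
            exact ⟨fun a => a.elim0, fun a => a.elim0, fun a => a.elim0⟩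
        | succ p' IHp =>
            intro row' hp' hrow' h hsyz
            have hcomp : Function.Injective (row' ∘ Fin.castSucc) :=
              hrow'.comp (Fin.castSucc_injective p')
            rw [Fin.sum_univ_castSucc] at hsyz
            have hlastmem : h (Fin.last p') * frow (row' (Fin.last p')) col
                ∈ Fid (row' ∘ Fin.castSucc) col := by
              have hEq : h (Fin.last p') * frow (row' (Fin.last p')) col
                  = ∑ i, (- h (Fin.castSucc i)) * frow ((row' ∘ Fin.castSucc) i) col := by
                have e : (∑ i, (- h (Fin.castSucc i)) * frow ((row' ∘ Fin.castSucc) i) col)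
                    = -(∑ i, h (Fin.castSucc i) * frow (row' (Fin.castSucc i)) col) := by
                  simp only [neg_mul, Function.comp_apply, Finset.sum_neg_distrib]
                rw [e]
                linear_combination hsyz
              rw [hEq]
              exact Ideal.sum_mem _ fun i _ => Ideal.mul_mem_left _ _
                (Ideal.subset_span ⟨i, rfl⟩)
            have hfresh : ∀ i, (row' ∘ Fin.castSucc) i ≠ row' (Fin.last p') := by
              intro i he
              exact absurd (hrow' he) (Fin.ne_last_of_lt (Fin.castSucc_lt_last i))
            have hlast : h (Fin.last p') ∈ Fid (row' ∘ Fin.castSucc) col :=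
              colonrow p' (row' ∘ Fin.castSucc) (row' (Fin.last p'))
                (Nat.succ_le_succ_iff.mp hp') hcomp hfresh _ hlastmem
            rw [Fid, Ideal.mem_span_range_iff_exists_fun] at hlast
            obtain ⟨u, hu⟩ := hlast
            simp only [Function.comp_apply] at hu
            have hsyz'' : (∑ i : Fin p',
                (h (Fin.castSucc i) + u i * frow (row' (Fin.last p')) col)
                  * frow ((row' ∘ Fin.castSucc) i) col) = 0 := by
              have e : (∑ i : Fin p',
                  (h (Fin.castSucc i) + u i * frow (row' (Fin.last p')) col)
                    * frow ((row' ∘ Fin.castSucc) i) col)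
                  = (∑ i : Fin p', h (Fin.castSucc i) * frow (row' (Fin.castSucc i)) col)
                    + frow (row' (Fin.last p')) col
                      * ∑ i : Fin p', u i * frow (row' (Fin.castSucc i)) col := by
                rw [Finset.mul_sum, ← Finset.sum_add_distrib]
                exact Finset.sum_congr rfl fun i _ => by
                  simp only [Function.comp_apply]; ring
              rw [e, hu]
              linear_combination hsyz
            obtain ⟨γ', hγ'a, hγ'⟩ := IHp (row' ∘ Fin.castSucc)
              (le_trans (Nat.le_succ p') hp') hcomp _ hsyz''
            simp only [Function.comp_apply] at hγ'
            refine ⟨fun a b =>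
              Fin.lastCases (Fin.lastCases 0 (fun k => u k) b)
                (fun i => Fin.lastCases (- u i) (fun k => γ' i k) b) a, ?_, ?_⟩
            · intro a b
              induction a using Fin.lastCases with
              | last =>
                  induction b using Fin.lastCases with
                  | last => simp
                  | cast k => simp [Fin.lastCases_last, Fin.lastCases_castSucc]
              | cast i =>
                  induction b using Fin.lastCases with
                  | last => simp [Fin.lastCases_last, Fin.lastCases_castSucc]
                  | cast k => simp [Fin.lastCases_last, Fin.lastCases_castSucc, hγ'a i k]
            · intro i
              induction i using Fin.lastCases with
              | last =>
                  rw [Fin.sum_univ_castSucc]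
                  simp only [Fin.lastCases_last, Fin.lastCases_castSucc]
                  rw [zero_mul, add_zero, ← hu]
              | cast i' =>
                  rw [Fin.sum_univ_castSucc]
                  simp only [Fin.lastCases_last, Fin.lastCases_castSucc]
                  have h3 := hγ' i'
                  rw [show h (Fin.castSucc i')
                      = (∑ k, γ' i' k * frow (row' (Fin.castSucc k)) col)
                        - u i' * frow (row' (Fin.last p')) col from by linear_combination h3]
                  ring
      exact syzAux p row hp hrow h hsyz

lemma Fid_le_Jid {k : ℕ} (row col : Fin k → ℕ) : Fid row col ≤ Jid row col :=
  Ideal.span_mono (Set.subset_insert _ _)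

lemma det_mem_Jid {k : ℕ} (row col : Fin k → ℕ) : (Amat row col).det ∈ Jid row col :=
  Ideal.subset_span (Set.mem_insert _ _)

/-- Laplace expansion along a fresh column: `∑ i, m i * c_{i,j₀} = det` -/
lemma laplace_det {k : ℕ} (ρ : Fin (k+1) → ℕ) (V : Fin (k+1) → ℕ) :
    (Amat ρ V).det = ∑ i, mvec ρ (V ∘ Fin.succ) i * cc (ρ i) (V 0) := by
  rw [Matrix.det_succ_column_zero]
  refine Finset.sum_congr rfl fun i _ => ?_
  have : (Amat ρ V).submatrix i.succAbove Fin.succ = Bsub ρ (V ∘ Fin.succ) i := rfl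
  rw [this, mvec]
  simp only [Amat, Matrix.of_apply]
  ring

/-- duplicated-column relation: `∑ i, m i * c_{ij} = 0` for columns of the system -/
lemma minor_rel {k : ℕ} (ρ : Fin (k+1) → ℕ) (W : Fin k → ℕ) (j : Fin k) :
    (∑ i, mvec ρ W i * cc (ρ i) (W j)) = 0 := by
  set M : Matrix (Fin (k+1)) (Fin (k+1)) U :=
    Matrix.of (fun i t => Fin.cases (cc (ρ i) (W j)) (fun s => cc (ρ i) (W s)) t) with hM
  have hdup : M.det = 0 := by
    refine Matrix.det_zero_of_column_eq (Fin.succ_ne_zero j).symm fun r => ?_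
    show M r 0 = M r j.succ
    rw [hM]
    simp [Matrix.of_apply]
  have hexp := Matrix.det_succ_column_zero M
  rw [hdup] at hexp
  have hsub : ∀ i : Fin (k+1), M.submatrix i.succAbove Fin.succ = Bsub ρ W i := by
    intro i
    refine Matrix.ext fun s t => ?_
    show M (i.succAbove s) t.succ = _
    rw [hM]
    simp [Matrix.of_apply, Bsub]
  have hM0 : ∀ i, M i 0 = cc (ρ i) (W j) := fun i => by rw [hM]; simp [Matrix.of_apply]
  rw [show (∑ i, mvec ρ W i * cc (ρ i) (W j))
      = ∑ i : Fin (k+1), (-1)^(i:ℕ) * M i 0 * (M.submatrix i.succAbove Fin.succ).det from ?_]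
  · exact hexp.symm
  · refine Finset.sum_congr rfl fun i _ => ?_
    rw [hsub i, hM0 i, mvec]
    ring

/-- the minor vector is a syzygy of the overfull system -/
lemma minor_syz {k : ℕ} (ρ : Fin (k+1) → ℕ) (W : Fin k → ℕ) :
    (∑ i, mvec ρ W i * frow (ρ i) W) = 0 := by
  have h1 : (∑ i, mvec ρ W i * frow (ρ i) W)
      = ∑ i, ∑ j, mvec ρ W i * (cc (ρ i) (W j) * vv (W j)) := by
    refine Finset.sum_congr rfl fun i _ => ?_
    unfold frow
    rw [Finset.mul_sum]
  rw [h1, Finset.sum_comm]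
  refine Finset.sum_eq_zero fun j _ => ?_
  have h2 : (∑ i, mvec ρ W i * (cc (ρ i) (W j) * vv (W j)))
      = (∑ i, mvec ρ W i * cc (ρ i) (W j)) * vv (W j) := by
    rw [Finset.sum_mul]
    exact Finset.sum_congr rfl fun i _ => by ring
  rw [h2, minor_rel, zero_mul]

/-- Cramer: `vv (col j) * det ∈ Fid` -/
lemma vv_det_mem {k : ℕ} (row col : Fin k → ℕ) (j : Fin k) :
    vv (col j) * (Amat row col).det ∈ Fid row col := by
  have hfv : (Amat row col).mulVec (fun j => vv (col j)) = fun i => frow (row i) col := by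
    funext i
    show (∑ t, Amat row col i t * vv (col t)) = frow (row i) col
    rfl
  have hadj := Matrix.adjugate_mul (Amat row col)
  have h2 := congrArg
    (fun M : Matrix (Fin k) (Fin k) U => M.mulVec (fun j => vv (col j))) hadj
  rw [← Matrix.mulVec_mulVec, hfv, Matrix.smul_mulVec, Matrix.one_mulVec] at h2
  have h3 := congrFun h2 j
  simp only [Pi.smul_apply, smul_eq_mul] at h3
  have h4 : ((Amat row col).adjugate.mulVec (fun i => frow (row i) col)) j
      = ∑ i, (Amat row col).adjugate j i * frow (row i) col := rfl
  rw [h4] at h3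
  rw [mul_comm, ← h3]
  exact Ideal.sum_mem _ fun i _ =>
    Ideal.mul_mem_left _ _ (Ideal.subset_span ⟨i, rfl⟩)

/-- the generic determinant is nonzero -/
lemma det_ne_zero {k : ℕ} (row col : Fin k → ℕ)
    (hrow : Function.Injective row) (hcol : Function.Injective col) :
    (Amat row col).det ≠ 0 := by
  set ε : U →+* ℤ := (eval (fun x : ν => match x with
    | Sum.inl p => if ∃ i : Fin k, row i = p.1 ∧ col i = p.2 then 1 else 0
    | Sum.inr _ => 0)) with hε
  intro h
  have h1 : ε (Amat row col).det = 0 := by rw [h, map_zero]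
  rw [RingHom.map_det] at h1
  have h2 : ε.mapMatrix (Amat row col) = 1 := by
    refine Matrix.ext fun i j => ?_
    show ε (cc (row i) (col j)) = (1 : Matrix (Fin k) (Fin k) ℤ) i j
    rw [hε, cc, eval_X]
    by_cases hij : i = j
    · subst hij
      rw [Matrix.one_apply_eq]
      have hex : ∃ t : Fin k, row t = row i ∧ col t = col i := ⟨i, rfl, rfl⟩
      show (if ∃ t : Fin k, row t = row i ∧ col t = col i then (1:ℤ) else 0) = 1
      rw [if_pos hex]
    · rw [Matrix.one_apply_ne hij]
      have hne : ¬ ∃ t : Fin k, row t = row i ∧ col t = col j := by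
        rintro ⟨t, ht1, ht2⟩
        exact hij ((hrow ht1).symm.trans (hcol ht2))
      show (if ∃ t : Fin k, row t = row i ∧ col t = col j then (1:ℤ) else 0) = 0
      rw [if_neg hne]
  rw [h2, Matrix.det_one] at h1
  exact one_ne_zero h1

lemma mem_span_X_of_kill {S : Set ν} {t : U} (h : kill S t = 0) :
    t ∈ Ideal.span (Set.image X S) := by
  have := sub_kill_mem_span S t
  rwa [h, sub_zero] at this

lemma kill_fixes_det {k : ℕ} (S : Set ν) (row col : Fin k → ℕ)
    (hS : ∀ i j, (Sum.inl (row i, col j) : ν) ∉ S) :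
    kill S (Amat row col).det = (Amat row col).det := by
  have h1 : ((kill S : U →ₐ[ℤ] U) : U →+* U) (Amat row col).det
      = ((Amat row col).map ((kill S : U →ₐ[ℤ] U) : U →+* U)).det := by
    rw [RingHom.map_det]
    rfl
  have h2 : (Amat row col).map ((kill S : U →ₐ[ℤ] U) : U →+* U) = Amat row col := by
    refine Matrix.ext fun i j => ?_
    show kill S (cc (row i) (col j)) = cc (row i) (col j)
    exact kill_X_not_mem (hS i j)
  calc kill S (Amat row col).det
      = ((Amat row col).map ((kill S : U →ₐ[ℤ] U) : U →+* U)).det := h1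
  _ = (Amat row col).det := by rw [h2]

/-- the `d`-trick: an element of `Jid` which is killed by setting all the `v`-variables
of the system to zero actually lies in `Fid`. -/
lemma dtrick {k : ℕ} (row col : Fin k → ℕ)
    (hrow : Function.Injective row) (hcol : Function.Injective col)
    {x : U} (hx : x ∈ Jid row col)
    (hkill : kill (Set.range fun j => (Sum.inr (col j) : ν)) x = 0) :
    x ∈ Fid row col := by
  set S : Set ν := Set.range fun j => (Sum.inr (col j) : ν) with hs
  rw [Jid, Ideal.mem_span_insert] at hx
  obtain ⟨a, w, hw, hxw⟩ := hx
  rw [Ideal.mem_span_range_iff_exists_fun] at hw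
  obtain ⟨u, hu⟩ := hw
  -- kill the v-variables
  have hkf : ∀ ρ : ℕ, kill S (frow ρ col) = 0 := by
    intro ρ
    rw [frow, map_sum]
    refine Finset.sum_eq_zero fun j _ => ?_
    rw [map_mul, show kill S (vv (col j)) = 0 from kill_X_mem ⟨j, rfl⟩, mul_zero]
  have hkw : kill S w = 0 := by
    rw [← hu, map_sum]
    refine Finset.sum_eq_zero fun i _ => ?_
    rw [map_mul, hkf (row i), mul_zero]
  have hkd : kill S (Amat row col).det = (Amat row col).det :=
    kill_fixes_det S row col (fun i j => by rintro ⟨t, ht⟩; exact Sum.inr_ne_inl ht)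
  have h0 : kill S a * (Amat row col).det = 0 := by
    have := congrArg (kill S) hxw
    rw [hkill, map_add, map_mul, hkd, hkw, add_zero] at this
    exact this.symm
  have hka : kill S a = 0 := by
    rcases mul_eq_zero.mp h0 with h | h
    · exact h
    · exact absurd h (det_ne_zero row col hrow hcol)
  -- hence a is in the span of the v-variables
  have ha : a ∈ Ideal.span (Set.image X S) := mem_span_X_of_kill hka
  have himg : Set.image X S = Set.range fun j => vv (col j) := by
    rw [hs, ← Set.range_comp]
    rfl
  rw [himg, Ideal.mem_span_range_iff_exists_fun] at ha
  obtain ⟨sfun, hsfun⟩ := ha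
  have hadet : a * (Amat row col).det ∈ Fid row col := by
    rw [← hsfun, Finset.sum_mul]
    refine Ideal.sum_mem _ fun j _ => ?_
    have := vv_det_mem row col j
    have heq : sfun j * vv (col j) * (Amat row col).det
        = sfun j * (vv (col j) * (Amat row col).det) := by ring
    rw [heq]
    exact Ideal.mul_mem_left _ _ this
  rw [hxw]
  refine Ideal.add_mem _ hadet ?_
  rw [← hu]
  exact Ideal.sum_mem _ fun i _ => Ideal.mul_mem_left _ _ (Ideal.subset_span ⟨i, rfl⟩)

/-- last minor equals the principal determinant up to sign -/
lemma mvec_last {q : ℕ} (ρ : Fin (q+2) → ℕ) (W : Fin (q+1) → ℕ) :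
    mvec ρ W (Fin.last (q+1)) = (-1)^(q+1) * (Amat (ρ ∘ Fin.castSucc) W).det := by
  rw [mvec]
  have : Bsub ρ W (Fin.last (q+1)) = Amat (ρ ∘ Fin.castSucc) W := by
    refine Matrix.ext fun s t => ?_
    show cc (ρ ((Fin.last (q+1)).succAbove s)) (W t) = cc (ρ (Fin.castSucc s)) (W t)
    rw [Fin.succAbove_last]
  rw [this, Fin.val_last]

/-- Syzygies of the overfull system: Koszul relations plus the minor vector. -/
lemma overfull_syz {q : ℕ} (ρ : Fin (q+2) → ℕ) (W : Fin (q+1) → ℕ)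
    (hρ : Function.Injective ρ) (hW : Function.Injective W)
    (hcolon : ∀ g : U, vv (W 0) * g ∈ Jid (ρ ∘ Fin.castSucc) W →
      g ∈ Jid (ρ ∘ Fin.castSucc) W)
    (h : Fin (q+2) → U) (hsyz : (∑ i, h i * frow (ρ i) W) = 0) :
    ∃ γ : Fin (q+2) → Fin (q+2) → U, (∀ a b, γ a b = - γ b a) ∧ ∃ β : U,
      ∀ i, h i = (∑ t, γ i t * frow (ρ t) W) + β * mvec ρ W i := by
  have hcomp : Function.Injective (ρ ∘ Fin.castSucc) :=
    hρ.comp (Fin.castSucc_injective _)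
  rw [Fin.sum_univ_castSucc] at hsyz
  set D := (Amat (ρ ∘ Fin.castSucc) W).det with hD
  -- membership of the product
  have hlastmem : h (Fin.last (q+1)) * frow (ρ (Fin.last (q+1))) W
      ∈ Fid (ρ ∘ Fin.castSucc) W := by
    have hEq : h (Fin.last (q+1)) * frow (ρ (Fin.last (q+1))) W
        = ∑ i, (- h (Fin.castSucc i)) * frow ((ρ ∘ Fin.castSucc) i) W := by
      have e : (∑ i, (- h (Fin.castSucc i)) * frow ((ρ ∘ Fin.castSucc) i) W)
          = -(∑ i, h (Fin.castSucc i) * frow (ρ (Fin.castSucc i)) W) := by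
        simp only [neg_mul, Function.comp_apply, Finset.sum_neg_distrib]
      rw [e]
      linear_combination hsyz
    rw [hEq]
    exact Ideal.sum_mem _ fun i _ => Ideal.mul_mem_left _ _ (Ideal.subset_span ⟨i, rfl⟩)
  have hfresh : ∀ i, (ρ ∘ Fin.castSucc) i ≠ ρ (Fin.last (q+1)) := by
    intro i he
    exact absurd (hρ he) (Fin.ne_last_of_lt (Fin.castSucc_lt_last i))
  -- apply the extraction lemma to land in Jid
  have hlast : h (Fin.last (q+1)) ∈ Jid (ρ ∘ Fin.castSucc) W := by
    refine key_extract hW (ρ (Fin.last (q+1))) ?_ hlastmem (Fid_le_Jid _ _) hcolon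
    rintro _ ⟨i, rfl⟩
    exact Lam_frow_C _ _ (hfresh i) W
  rw [Jid, Ideal.mem_span_insert] at hlast
  obtain ⟨β, w, hw, hrep⟩ := hlast
  rw [← hD] at hrep
  rw [Ideal.mem_span_range_iff_exists_fun] at hw
  obtain ⟨p, hp⟩ := hw
  simp only [Function.comp_apply] at hp
  -- sign bookkeeping
  set β' : U := (-1)^(q+1) * β with hβ'
  have hsign : β' * mvec ρ W (Fin.last (q+1)) = β * D := by
    rw [hβ', mvec_last, ← hD]
    have : ((-1 : U)^(q+1)) * ((-1 : U)^(q+1)) = 1 := by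
      rw [← pow_add]
      exact Even.neg_one_pow ⟨q+1, by ring⟩
    calc (-1 : U)^(q+1) * β * ((-1)^(q+1) * D)
        = ((-1 : U)^(q+1) * (-1)^(q+1)) * (β * D) := by ring
    _ = β * D := by rw [this, one_mul]
  -- minors of the truncated system
  have hmsyz : (∑ i : Fin (q+1), mvec ρ W (Fin.castSucc i) * frow (ρ (Fin.castSucc i)) W)
      = - (mvec ρ W (Fin.last (q+1)) * frow (ρ (Fin.last (q+1))) W) := by
    have := minor_syz ρ W
    rw [Fin.sum_univ_castSucc] at this
    linear_combination this
  -- corrected syzygy of the square system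
  have hsyz'' : (∑ i : Fin (q+1),
      (h (Fin.castSucc i) + p i * frow (ρ (Fin.last (q+1))) W
        - β' * mvec ρ W (Fin.castSucc i)) * frow ((ρ ∘ Fin.castSucc) i) W) = 0 := by
    have expand : (∑ i : Fin (q+1),
        (h (Fin.castSucc i) + p i * frow (ρ (Fin.last (q+1))) W
          - β' * mvec ρ W (Fin.castSucc i)) * frow ((ρ ∘ Fin.castSucc) i) W)
        = (∑ i : Fin (q+1), h (Fin.castSucc i) * frow (ρ (Fin.castSucc i)) W)
          + frow (ρ (Fin.last (q+1))) W
            * (∑ i : Fin (q+1), p i * frow (ρ (Fin.castSucc i)) W)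
          - β' * (∑ i : Fin (q+1), mvec ρ W (Fin.castSucc i)
              * frow (ρ (Fin.castSucc i)) W) := by
      rw [Finset.mul_sum, Finset.mul_sum, ← Finset.sum_add_distrib, ← Finset.sum_sub_distrib]
      refine Finset.sum_congr rfl fun i _ => ?_
      simp only [Function.comp_apply]
      ring
    rw [expand, hp, hmsyz]
    have hwval : w = h (Fin.last (q+1)) - β * D := by linear_combination -hrep
    rw [hwval]
    linear_combination hsyz + frow (ρ (Fin.last (q+1))) W * hsign
  obtain ⟨γ', hγ'a, hγ'⟩ := wide_syz (q+1) (q+1) (ρ ∘ Fin.castSucc) W hcomp hW le_rfl _ hsyz''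
  simp only [Function.comp_apply] at hγ'
  refine ⟨fun a b =>
    Fin.lastCases (Fin.lastCases 0 (fun t => p t) b)
      (fun i => Fin.lastCases (- p i) (fun t => γ' i t) b) a, ?_, β', ?_⟩
  · intro a b
    induction a using Fin.lastCases with
    | last =>
        induction b using Fin.lastCases with
        | last => simp
        | cast t => simp [Fin.lastCases_last, Fin.lastCases_castSucc]
    | cast i =>
        induction b using Fin.lastCases with
        | last => simp [Fin.lastCases_last, Fin.lastCases_castSucc]
        | cast t => simp [Fin.lastCases_last, Fin.lastCases_castSucc, hγ'a i t]
  · intro i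
    induction i using Fin.lastCases with
    | last =>
        rw [Fin.sum_univ_castSucc]
        simp only [Fin.lastCases_last, Fin.lastCases_castSucc]
        rw [zero_mul, add_zero, hp]
        linear_combination hrep - hsign
    | cast i' =>
        rw [Fin.sum_univ_castSucc]
        simp only [Fin.lastCases_last, Fin.lastCases_castSucc]
        have h3 := hγ' i'
        linear_combination h3

/-- Lemma A: the colon of the square system by a `v`-variable lands in `Jid`. -/
lemma lemA {k : ℕ} (row col : Fin (k+2) → ℕ)
    (hrow : Function.Injective row) (hcol : Function.Injective col)
    (hcolon : ∀ g : U, vv ((col ∘ Fin.succ) 0) * g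
        ∈ Jid (row ∘ Fin.castSucc) (col ∘ Fin.succ) →
      g ∈ Jid (row ∘ Fin.castSucc) (col ∘ Fin.succ))
    (g : U) (hg : vv (col 0) * g ∈ Fid row col) : g ∈ Jid row col := by
  rw [Fid, Ideal.mem_span_range_iff_exists_fun] at hg
  obtain ⟨hc, hhc⟩ := hg
  set φ := kill {Sum.inr (col 0)} with hφ
  have hksyz : (∑ i, φ (hc i) * frow (row i) (col ∘ Fin.succ)) = 0 := by
    have h1 := congrArg φ hhc
    rw [map_sum, map_mul, show φ (vv (col 0)) = 0 from kill_X_mem rfl, zero_mul] at h1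
    rw [← h1]
    exact Finset.sum_congr rfl fun i _ => by rw [map_mul, kill_frow _ _ hcol]
  obtain ⟨γ, hγa, β, hγ⟩ := overfull_syz row (col ∘ Fin.succ) hrow
    (hcol.comp (Fin.succ_injective _)) hcolon _ hksyz
  have hri : ∀ i, ∃ ri : U, hc i = φ (hc i) + vv (col 0) * ri := by
    intro i
    obtain ⟨ri, hri⟩ := sub_kill_single (Sum.inr (col 0)) (hc i)
    refine ⟨ri, ?_⟩
    rw [hφ, show vv (col 0) = X (Sum.inr (col 0)) from rfl, ← hri]
    ring
  choose rr hrr using hri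
  have e1 : ∀ t : Fin (k+2), frow (row t) (col ∘ Fin.succ)
      = frow (row t) col - cc (row t) (col 0) * vv (col 0) := by
    intro t; rw [frow_succ (row t) col]; ring
  have E2a : ∀ i, φ (hc i) * cc (row i) (col 0)
      = (∑ t, γ i t * cc (row i) (col 0) * frow (row t) col)
        - vv (col 0) * (∑ t, γ i t * (cc (row t) (col 0) * cc (row i) (col 0)))
        + β * (mvec row (col ∘ Fin.succ) i * cc (row i) (col 0)) := by
    intro i
    rw [hγ i, add_mul, Finset.sum_mul]
    have e2 : ∀ t, γ i t * frow (row t) (col ∘ Fin.succ) * cc (row i) (col 0)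
        = γ i t * cc (row i) (col 0) * frow (row t) col
          - vv (col 0) * (γ i t * (cc (row t) (col 0) * cc (row i) (col 0))) := by
      intro t; rw [e1 t]; ring
    rw [Finset.sum_congr rfl fun t _ => e2 t, Finset.sum_sub_distrib, ← Finset.mul_sum]
    ring
  have E2 : (∑ i, φ (hc i) * cc (row i) (col 0))
      = (∑ i, ∑ t, γ i t * cc (row i) (col 0) * frow (row t) col)
        + β * (Amat row col).det := by
    rw [Finset.sum_congr rfl fun i _ => E2a i]
    rw [Finset.sum_add_distrib, Finset.sum_sub_distrib, ← Finset.mul_sum, ← Finset.mul_sum]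
    rw [antisym_sum_zero γ hγa (fun i => cc (row i) (col 0)), mul_zero, sub_zero]
    rw [laplace_det row col]
  have E1 : (∑ i, φ (hc i) * frow (row i) col)
      = vv (col 0) * (∑ i, φ (hc i) * cc (row i) (col 0)) := by
    have e3 : ∀ i, φ (hc i) * frow (row i) col
        = φ (hc i) * frow (row i) (col ∘ Fin.succ)
          + vv (col 0) * (φ (hc i) * cc (row i) (col 0)) := by
      intro i; rw [e1 i]; ring
    rw [Finset.sum_congr rfl fun i _ => e3 i, Finset.sum_add_distrib, hksyz, zero_add,
      ← Finset.mul_sum]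
  have claim : vv (col 0) * g = vv (col 0) * ((∑ i, rr i * frow (row i) col)
      + ((∑ i, ∑ t, γ i t * cc (row i) (col 0) * frow (row t) col)
        + β * (Amat row col).det)) := by
    calc vv (col 0) * g = ∑ i, hc i * frow (row i) col := hhc.symm
    _ = (∑ i, φ (hc i) * frow (row i) col) + vv (col 0) * ∑ i, rr i * frow (row i) col := by
        rw [Finset.mul_sum, ← Finset.sum_add_distrib]
        refine Finset.sum_congr rfl fun i _ => ?_
        linear_combination frow (row i) col * hrr i
    _ = vv (col 0) * ((∑ i, rr i * frow (row i) col)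
        + ((∑ i, ∑ t, γ i t * cc (row i) (col 0) * frow (row t) col)
          + β * (Amat row col).det)) := by
        rw [E1, E2]; ring
  have hcancel := mul_left_cancel₀ (vv_ne_zero (col 0)) claim
  rw [hcancel]
  refine Ideal.add_mem _ ?_ (Ideal.add_mem _ ?_ ?_)
  · exact Fid_le_Jid row col <| Ideal.sum_mem _ fun i _ =>
      Ideal.mul_mem_left _ _ (Ideal.subset_span ⟨i, rfl⟩)
  · exact Fid_le_Jid row col <| Ideal.sum_mem _ fun i _ => Ideal.sum_mem _ fun t _ =>
      Ideal.mul_mem_left _ _ (Ideal.subset_span ⟨t, rfl⟩)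
  · exact Ideal.mul_mem_left _ _ (det_mem_Jid row col)

/-- the base case: the square system of size one -/
lemma colon_base (row col : Fin 1 → ℕ) (g : U)
    (hg : vv (col 0) * g ∈ Jid row col) : g ∈ Jid row col := by
  have hdet : (Amat row col).det = cc (row 0) (col 0) := by
    rw [Matrix.det_fin_one]; rfl
  rw [Jid, Ideal.mem_span_insert] at hg
  obtain ⟨a, w, hw, hrep⟩ := hg
  rw [Ideal.mem_span_range_iff_exists_fun] at hw
  obtain ⟨u, hu⟩ := hw
  have hfrow : frow (row 0) col = cc (row 0) (col 0) * vv (col 0) := by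
    rw [frow, Fin.sum_univ_one]
  have hw' : w = u 0 * (cc (row 0) (col 0) * vv (col 0)) := by
    rw [← hu, Fin.sum_univ_one, hfrow]
  set κ := kill {(Sum.inl (row 0, col 0) : ν)} with hκ
  have hkg : vv (col 0) * κ g = 0 := by
    have h1 := congrArg κ hrep
    rw [map_mul, map_add, map_mul] at h1
    have hkdet : κ ((Amat row col).det) = 0 := by
      rw [hdet]; exact kill_X_mem rfl
    have hkw : κ w = 0 := by
      rw [hw', map_mul, map_mul, show κ (cc (row 0) (col 0)) = 0 from kill_X_mem rfl]
      ring
    have hkv : κ (vv (col 0)) = vv (col 0) := kill_X_not_mem (by simp)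
    rw [hkdet, hkw, hkv, mul_zero, add_zero] at h1
    exact h1
  have hkg0 : κ g = 0 := by
    rcases mul_eq_zero.mp hkg with h | h
    · exact absurd h (vv_ne_zero (col 0))
    · exact h
  have hgmem : g ∈ Ideal.span (Set.image X {(Sum.inl (row 0, col 0) : ν)}) :=
    mem_span_X_of_kill hkg0
  rw [Set.image_singleton, Ideal.mem_span_singleton] at hgmem
  obtain ⟨s, hs⟩ := hgmem
  rw [hs]
  have : (X (Sum.inl (row 0, col 0)) : U) * s = s * (Amat row col).det := by
    rw [hdet]; rw [cc]; ring
  rw [this]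
  exact Ideal.mul_mem_left _ _ (det_mem_Jid row col)

/-- THE COLON THEOREM: `(Jid : vv (col 0)) = Jid` for the generic square system. -/
theorem colonMain : ∀ k (row col : Fin (k+1) → ℕ),
    Function.Injective row → Function.Injective col →
    ∀ g : U, vv (col 0) * g ∈ Jid row col → g ∈ Jid row col := by
  intro k
  induction k with
  | zero => exact fun row col _ _ => colon_base row col
  | succ k IH =>
      intro row col hrow hcol g hg
      have hkill : kill (Set.range fun j => (Sum.inr (col j) : ν)) (vv (col 0) * g)
          = 0 := by
        rw [map_mul, show kill (Set.range fun j => (Sum.inr (col j) : ν)) (vv (col 0)) = 0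
          from kill_X_mem ⟨0, rfl⟩, zero_mul]
      have step1 : vv (col 0) * g ∈ Fid row col := dtrick row col hrow hcol hg hkill
      exact lemA row col hrow hcol
        (IH (row ∘ Fin.castSucc) (col ∘ Fin.succ)
          (hrow.comp (Fin.castSucc_injective _)) (hcol.comp (Fin.succ_injective _)))
        g step1

section Prime

variable {k : ℕ} (row col : Fin (k+1) → ℕ)

noncomputable abbrev Lloc (col : Fin (k+1) → ℕ) : Type :=
  Localization.Away (vv (col 0) : U)

lemma powers_le : Submonoid.powers (vv (col 0) : U) ≤ nonZeroDivisors U := by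
  rintro y ⟨n, rfl⟩
  exact mem_nonZeroDivisors_of_ne_zero (pow_ne_zero _ (vv_ne_zero _))

lemma Lloc_domain : IsDomain (Lloc col) :=
  IsLocalization.isDomain_localization (powers_le col)

lemma alg_inj : Function.Injective (algebraMap U (Lloc col)) :=
  IsLocalization.injective _ (powers_le col)

noncomputable def psifun (x : ν) : Lloc col :=
  match x with
  | Sum.inl (a, b) =>
      if b = col 0 ∧ (∃ i : Fin (k+1), a = row i) then
        - (IsLocalization.Away.invSelf (S := Lloc col) (vv (col 0)))
          * algebraMap U (Lloc col) (frow a (col ∘ Fin.succ))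
      else algebraMap U (Lloc col) (X (Sum.inl (a, b)))
  | Sum.inr j => algebraMap U (Lloc col) (X (Sum.inr j))

noncomputable def psi : U →ₐ[ℤ] Lloc col := aeval (psifun row col)

lemma psi_X_other {x : ν} (hx : ∀ i : Fin (k+1), x ≠ Sum.inl (row i, col 0)) :
    psi row col (X x) = algebraMap U (Lloc col) (X x) := by
  rw [psi, aeval_X]
  match x with
  | Sum.inl (a, b) =>
      show (if b = col 0 ∧ (∃ i : Fin (k+1), a = row i) then _ else _) = _
      rw [if_neg]
      rintro ⟨rfl, i, rfl⟩
      exact hx i rfl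
  | Sum.inr j => rfl

lemma psi_cc0 (hrow : Function.Injective row) (i : Fin (k+1)) :
    psi row col (cc (row i) (col 0))
      = - (IsLocalization.Away.invSelf (S := Lloc col) (vv (col 0)))
        * algebraMap U (Lloc col) (frow (row i) (col ∘ Fin.succ)) := by
  rw [psi, cc, aeval_X]
  show (if col 0 = col 0 ∧ (∃ t : Fin (k+1), row i = row t) then _ else _) = _
  rw [if_pos ⟨rfl, i, rfl⟩]

lemma psi_vv (j : ℕ) : psi row col (vv j) = algebraMap U (Lloc col) (vv j) :=
  psi_X_other row col (fun i => by simp [vv])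

lemma psi_cc_tail (hcol : Function.Injective col) (ρ : ℕ) (j : Fin k) :
    psi row col (cc ρ ((col ∘ Fin.succ) j))
      = algebraMap U (Lloc col) (cc ρ ((col ∘ Fin.succ) j)) := by
  refine psi_X_other row col (fun i h => ?_)
  simp only [cc, Function.comp_apply, Sum.inl.injEq, Prod.mk.injEq] at h
  exact Fin.succ_ne_zero j (hcol h.2)

lemma psi_f0 (hcol : Function.Injective col) (i : Fin (k+1)) :
    psi row col (frow (row i) (col ∘ Fin.succ))
      = algebraMap U (Lloc col) (frow (row i) (col ∘ Fin.succ)) := by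
  unfold frow
  rw [map_sum, map_sum]
  refine Finset.sum_congr rfl fun j _ => ?_
  rw [map_mul, map_mul, psi_cc_tail row col hcol, psi_vv row col]

lemma psi_f (hrow : Function.Injective row) (hcol : Function.Injective col)
    (i : Fin (k+1)) : psi row col (frow (row i) col) = 0 := by
  rw [frow_succ, map_add, map_mul, psi_cc0 row col hrow, psi_vv row col,
    psi_f0 row col hcol]
  have hinv : algebraMap U (Lloc col) (vv (col 0))
      * IsLocalization.Away.invSelf (S := Lloc col) (vv (col 0)) = 1 :=
    IsLocalization.Away.mul_invSelf _
  set a := algebraMap U (Lloc col) (frow (row i) (col ∘ Fin.succ))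
  set b := IsLocalization.Away.invSelf (S := Lloc col) (vv (col 0))
  set c := algebraMap U (Lloc col) (vv (col 0))
  calc -b * a * c + a = a * (1 - c * b) := by ring
  _ = 0 := by rw [hinv]; ring

lemma psi_det (hrow : Function.Injective row) (hcol : Function.Injective col) :
    psi row col ((Amat row col).det) = 0 := by
  have hmap : (psi row col : U →+* Lloc col) ((Amat row col).det)
      = ((Amat row col).map (psi row col : U →+* Lloc col)).det := by
    rw [RingHom.map_det]; rfl
  set AL := (Amat row col).map (psi row col : U →+* Lloc col) with hAL
  have hker : AL.mulVec (fun j => algebraMap U (Lloc col) (vv (col j))) = 0 := by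
    refine funext fun i => ?_
    rw [Pi.zero_apply]
    have h1 : AL.mulVec (fun j => algebraMap U (Lloc col) (vv (col j))) i
        = ∑ j, psi row col (cc (row i) (col j)) * algebraMap U (Lloc col) (vv (col j)) :=
      rfl
    have h2 : (∑ j, psi row col (cc (row i) (col j))
        * algebraMap U (Lloc col) (vv (col j))) = psi row col (frow (row i) col) := by
      unfold frow
      rw [map_sum]
      refine Finset.sum_congr rfl fun j _ => ?_
      rw [map_mul, psi_vv row col]
    rw [h1, h2, psi_f row col hrow hcol]
  have hadj := Matrix.adjugate_mul AL
  have h3 := congrArg (fun M : Matrix (Fin (k+1)) (Fin (k+1)) (Lloc col) =>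
    M.mulVec (fun j => algebraMap U (Lloc col) (vv (col j)))) hadj
  rw [← Matrix.mulVec_mulVec, hker, Matrix.mulVec_zero] at h3
  have h4 := congrFun h3.symm 0
  have h5 : ((AL.det • (1 : Matrix (Fin (k+1)) (Fin (k+1)) (Lloc col))).mulVec
      (fun j => algebraMap U (Lloc col) (vv (col j)))) 0
      = AL.det * algebraMap U (Lloc col) (vv (col 0)) := by
    have e : ((AL.det • (1 : Matrix (Fin (k+1)) (Fin (k+1)) (Lloc col))).mulVec
        (fun j => algebraMap U (Lloc col) (vv (col j)))) 0
        = ∑ j, (AL.det • (1 : Matrix (Fin (k+1)) (Fin (k+1)) (Lloc col))) 0 j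
          * algebraMap U (Lloc col) (vv (col j)) := rfl
    rw [e, Finset.sum_eq_single 0]
    · simp [Matrix.smul_apply, Matrix.one_apply]
    · intro b _ hb
      simp [Matrix.smul_apply, Matrix.one_apply, Ne.symm hb]
    · intro hb; exact absurd (Finset.mem_univ 0) hb
  rw [h5] at h4
  haveI : IsDomain (Lloc col) := Lloc_domain col
  rcases mul_eq_zero.mp h4 with h | h
  · exact hmap.trans h
  · exact absurd (alg_inj col (by rw [h, map_zero])) (vv_ne_zero (col 0))

lemma Jid_le_ker (hrow : Function.Injective row) (hcol : Function.Injective col) :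
    ∀ x ∈ Jid row col, psi row col x = 0 := by
  intro x hx
  have : Jid row col ≤ RingHom.ker (psi row col : U →+* Lloc col) := by
    rw [Jid, Ideal.span_le]
    rintro y (rfl | ⟨i, rfl⟩)
    · exact psi_det row col hrow hcol
    · exact psi_f row col hrow hcol i
  exact this hx

/-- the elimination lemma -/
lemma elim (hrow : Function.Injective row) (hcol : Function.Injective col) (g : U) :
    ∃ (N : ℕ) (g' : U), (vv (col 0))^N * g - g' ∈ Fid row col
      ∧ psi row col g' = algebraMap U (Lloc col) g' := by
  induction g using MvPolynomial.induction_on with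
  | C a =>
      refine ⟨0, C a, by simp, ?_⟩
      have h1 : psi row col (C a) = algebraMap ℤ (Lloc col) a := aeval_C _ _
      have h2 : algebraMap U (Lloc col) (C a) = algebraMap ℤ (Lloc col) a := by
        have he : (algebraMap U (Lloc col)).comp (C : ℤ →+* U) = algebraMap ℤ (Lloc col) :=
          RingHom.ext_int _ _
        exact RingHom.congr_fun he a
      rw [h1, h2]
  | add p q hp hq =>
      obtain ⟨Np, p', hp1, hp2⟩ := hp
      obtain ⟨Nq, q', hq1, hq2⟩ := hq
      refine ⟨Np + Nq, (vv (col 0))^Nq * p' + (vv (col 0))^Np * q', ?_, ?_⟩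
      · have e : (vv (col 0))^(Np+Nq) * (p + q)
            - ((vv (col 0))^Nq * p' + (vv (col 0))^Np * q')
            = (vv (col 0))^Nq * ((vv (col 0))^Np * p - p')
              + (vv (col 0))^Np * ((vv (col 0))^Nq * q - q') := by ring
        rw [e]
        exact Ideal.add_mem _ (Ideal.mul_mem_left _ _ hp1) (Ideal.mul_mem_left _ _ hq1)
      · simp only [map_add, map_mul, map_pow, hp2, hq2, psi_vv row col]
  | mul_X p x hp =>
      obtain ⟨Np, p', hp1, hp2⟩ := hp
      by_cases hx : ∃ i : Fin (k+1), x = Sum.inl (row i, col 0)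
      · obtain ⟨i, rfl⟩ := hx
        refine ⟨Np + 1, - (p' * frow (row i) (col ∘ Fin.succ)), ?_, ?_⟩
        · have hrel : cc (row i) (col 0) * vv (col 0)
              = frow (row i) col - frow (row i) (col ∘ Fin.succ) := by
            rw [frow_succ (row i) col]; ring
          have e : (vv (col 0))^(Np+1) * (p * X (Sum.inl (row i, col 0)))
              - (- (p' * frow (row i) (col ∘ Fin.succ)))
              = ((vv (col 0))^Np * p) * (cc (row i) (col 0) * vv (col 0))
                + p' * frow (row i) (col ∘ Fin.succ) := by
            rw [cc]; ring
          rw [e, hrel]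
          have e2 : ((vv (col 0))^Np * p)
              * (frow (row i) col - frow (row i) (col ∘ Fin.succ))
              + p' * frow (row i) (col ∘ Fin.succ)
              = ((vv (col 0))^Np * p) * frow (row i) col
                - ((vv (col 0))^Np * p - p') * frow (row i) (col ∘ Fin.succ) := by ring
          rw [e2]
          refine Ideal.sub_mem _ ?_ ?_
          · exact Ideal.mul_mem_left _ _ (Ideal.subset_span ⟨i, rfl⟩)
          · exact Ideal.mul_mem_right _ _ hp1
        · rw [map_neg, map_neg, map_mul, map_mul, hp2, psi_f0 row col hcol]
      · refine ⟨Np, p' * X x, ?_, ?_⟩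
        · have e : (vv (col 0))^Np * (p * X x) - p' * X x
              = ((vv (col 0))^Np * p - p') * X x := by ring
          rw [e]
          exact Ideal.mul_mem_right _ _ hp1
        · rw [map_mul, map_mul, hp2, psi_X_other row col (fun i hi => hx ⟨i, hi⟩)]

lemma pow_colon (hrow : Function.Injective row) (hcol : Function.Injective col) :
    ∀ (N : ℕ) (g : U), (vv (col 0))^N * g ∈ Jid row col → g ∈ Jid row col := by
  intro N
  induction N with
  | zero => intro g hg; rwa [pow_zero, one_mul] at hg
  | succ N IH =>
      intro g hg
      have : (vv (col 0))^N * (vv (col 0) * g) ∈ Jid row col := by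
        rw [show (vv (col 0))^N * (vv (col 0) * g) = (vv (col 0))^(N+1) * g by ring]
        exact hg
      exact colonMain k row col hrow hcol g (IH _ this)

lemma mem_of_psi_zero (hrow : Function.Injective row) (hcol : Function.Injective col)
    (g : U) (hg : psi row col g = 0) : g ∈ Jid row col := by
  obtain ⟨N, g', h1, h2⟩ := elim row col hrow hcol g
  have h3 : psi row col ((vv (col 0))^N * g - g') = 0 := by
    have hF : Fid row col ≤ Jid row col := Fid_le_Jid row col
    exact Jid_le_ker row col hrow hcol _ (hF h1)
  rw [map_sub, map_mul, map_pow, psi_vv row col, hg, mul_zero, zero_sub, neg_eq_zero,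
    h2] at h3
  have hg'0 : g' = 0 := alg_inj col (by rw [h3, map_zero])
  rw [hg'0, sub_zero] at h1
  exact pow_colon row col hrow hcol N g (Fid_le_Jid row col h1)

theorem Jid_prime (hrow : Function.Injective row) (hcol : Function.Injective col) :
    (Jid row col).IsPrime := by
  haveI : IsDomain (Lloc col) := Lloc_domain col
  constructor
  · intro htop
    have h1 : (1 : U) ∈ Jid row col := htop ▸ Submodule.mem_top
    have h2 := Jid_le_ker row col hrow hcol 1 h1
    rw [map_one] at h2
    exact one_ne_zero h2
  · intro a b hab
    have h1 : psi row col a * psi row col b = 0 := by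
      rw [← map_mul]
      exact Jid_le_ker row col hrow hcol _ hab
    rcases mul_eq_zero.mp h1 with h | h
    · exact Or.inl (mem_of_psi_zero row col hrow hcol a h)
    · exact Or.inr (mem_of_psi_zero row col hrow hcol b h)

end Prime

/-- kill `z₀` in `Oamb` -/
noncomputable def killz (n : ℕ) : Oamb n →ₐ[ℤ] Oamb n :=
  aeval (fun x => if x = Sum.inr 0 then 0 else X x)

lemma sub_killz_mem_span (n : ℕ) (t : Oamb n) :
    t - killz n t ∈ Ideal.span {(zv 0 : Oamb n)} := by
  induction t using MvPolynomial.induction_on with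
  | C a => simp
  | add p q hp hq =>
      have e : p + q - killz n (p + q) = (p - killz n p) + (q - killz n q) := by
        rw [map_add]; ring
      rw [e]; exact Ideal.add_mem _ hp hq
  | mul_X p x hp =>
      by_cases hx : x = Sum.inr 0
      · have e : p * X x - killz n (p * X x) = (p - killz n p) * X x + killz n p * X x := by
          rw [map_mul, killz, aeval_X, if_pos hx, mul_zero]; ring
        rw [e]
        refine Ideal.add_mem _ (Ideal.mul_mem_right _ _ hp) ?_
        refine Ideal.mul_mem_left _ _ (Ideal.subset_span ?_)
        rw [hx]; rfl
      · have e : p * X x - killz n (p * X x) = (p - killz n p) * X x := by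
          rw [map_mul, killz, aeval_X, if_neg hx]; ring
        rw [e]; exact Ideal.mul_mem_right _ _ hp

variable (n : ℕ)

abbrev rowmap : Fin (n+1) → ℕ := fun i => (i : ℕ)
abbrev colmap : Fin (n+1) → ℕ := fun j => (j : ℕ)

lemma rowmap_inj : Function.Injective (rowmap n) := fun a b h => Fin.val_injective h
lemma colmap_inj : Function.Injective (colmap n) := fun a b h => Fin.val_injective h

/-- the comparison morphism `Θ : Oamb (n+1) → U` -/
noncomputable def Theta : Oamb (n+1) →ₐ[ℤ] U :=
  aeval (fun x => match x with
    | Sum.inl (i, j) => Fin.cases (cc (i : ℕ) (n+1)) (fun j' => cc (i : ℕ) (j' : ℕ)) j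
    | Sum.inr j => Fin.cases 0 (fun j' => vv (j' : ℕ)) j)

/-- the retraction `Ξ : U → Oamb (n+1)` -/
noncomputable def Xi : U →ₐ[ℤ] Oamb (n+1) :=
  aeval (fun x => match x with
    | Sum.inl (a, b) =>
        if ha : a < n+1 then
          (if hb : b < n+1 then av (⟨a, ha⟩ : Fin (n+1)) (Fin.succ ⟨b, hb⟩)
           else if b = n+1 then av (⟨a, ha⟩ : Fin (n+1)) 0 else 0)
        else 0
    | Sum.inr b => if hb : b < n+1 then zv (Fin.succ ⟨b, hb⟩) else 0)

lemma Theta_av_zero (i : Fin (n+1)) : Theta n (av i 0) = cc (i : ℕ) (n+1) := by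
  rw [av, Theta, aeval_X]
  exact Fin.cases_zero

lemma Theta_av_succ (i : Fin (n+1)) (j : Fin (n+1)) :
    Theta n (av i j.succ) = cc (i : ℕ) (j : ℕ) := by
  rw [av, Theta, aeval_X]
  exact Fin.cases_succ _

lemma Theta_zv_zero : Theta n (zv 0) = 0 := by
  rw [zv, Theta, aeval_X]
  exact Fin.cases_zero

lemma Theta_zv_succ (j : Fin (n+1)) : Theta n (zv j.succ) = vv (j : ℕ) := by
  rw [zv, Theta, aeval_X]
  exact Fin.cases_succ _

lemma Theta_fv (i : Fin (n+1)) :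
    Theta n (fv i) = frow (rowmap n i) (colmap n) := by
  rw [fv, map_sum, Fin.sum_univ_succ]
  rw [map_mul, Theta_av_zero, Theta_zv_zero, mul_zero, zero_add]
  rw [frow]
  refine Finset.sum_congr rfl fun j _ => ?_
  rw [map_mul, Theta_av_succ, Theta_zv_succ]

lemma Theta_delta : Theta n (Δ₁ (n+1)) = (Amat (rowmap n) (colmap n)).det := by
  rw [Δ₁]
  have h1 : (Theta n : Oamb (n+1) →+* U) (Matrix.det (Matrix.of fun i j : Fin (n+1) => av i j.succ))
      = ((Matrix.of fun i j : Fin (n+1) => av i j.succ).map (Theta n : Oamb (n+1) →+* U)).det := by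
    rw [RingHom.map_det]; rfl
  have h2 : (Matrix.of fun i j : Fin (n+1) => av i j.succ).map (Theta n : Oamb (n+1) →+* U)
      = Amat (rowmap n) (colmap n) := by
    refine Matrix.ext fun i j => ?_
    show Theta n (av i j.succ) = cc (i : ℕ) (j : ℕ)
    exact Theta_av_succ n i j
  exact h1.trans (by rw [h2])

lemma Xi_cc (i j : Fin (n+1)) :
    Xi n (cc (rowmap n i) (colmap n j)) = av i j.succ := by
  rw [cc, Xi, aeval_X]
  show (if ha : (i:ℕ) < n+1 then _ else _) = _
  rw [dif_pos i.isLt, dif_pos j.isLt]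

lemma Xi_vv (j : Fin (n+1)) : Xi n (vv (colmap n j)) = zv j.succ := by
  rw [vv, Xi, aeval_X]
  show (if hb : (j:ℕ) < n+1 then _ else _) = _
  rw [dif_pos j.isLt]

/-- the final ideal -/
noncomputable def Jfin : Ideal (Oamb (n+1)) :=
  Ideal.span (insert (zv 0) (insert (Δ₁ (n+1)) (Set.range (fun i : Fin (n+1) => fv i))))

lemma Xi_frow_mem (i : Fin (n+1)) :
    Xi n (frow (rowmap n i) (colmap n)) ∈ Jfin n := by
  rw [frow, map_sum]
  have h1 : ∀ j : Fin (n+1), Xi n (cc (rowmap n i) (colmap n j)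
      * vv (colmap n j)) = av i j.succ * zv j.succ := by
    intro j
    rw [map_mul, Xi_cc, Xi_vv]
  rw [Finset.sum_congr rfl fun j _ => h1 j]
  have h2 : (∑ j : Fin (n+1), av i j.succ * zv j.succ) = fv i - av i 0 * zv 0 := by
    rw [fv]
    rw [show (∑ j : Fin (n+1+1), av i j * zv j)
        = av i 0 * zv 0 + ∑ j : Fin (n+1), av i j.succ * zv j.succ from
      Fin.sum_univ_succ _]
    ring
  rw [h2]
  refine Ideal.sub_mem _ ?_ ?_
  · exact Ideal.subset_span (Set.mem_insert_of_mem _ (Set.mem_insert_of_mem _ ⟨i, rfl⟩))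
  · exact Ideal.mul_mem_left _ _ (Ideal.subset_span (Set.mem_insert _ _))

lemma Xi_det_mem : Xi n ((Amat (rowmap n) (colmap n)).det) ∈ Jfin n := by
  have h1 : (Xi n : U →+* Oamb (n+1)) ((Amat (rowmap n) (colmap n)).det)
      = ((Amat (rowmap n) (colmap n)).map (Xi n : U →+* Oamb (n+1))).det := by
    rw [RingHom.map_det]; rfl
  have h2 : (Amat (rowmap n) (colmap n)).map (Xi n : U →+* Oamb (n+1))
      = Matrix.of fun i j : Fin (n+1) => av i j.succ := by
    refine Matrix.ext fun i j => ?_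
    show Xi n (cc (rowmap n i) (colmap n j)) = av i j.succ
    exact Xi_cc n i j
  have : Xi n ((Amat (rowmap n) (colmap n)).det) = Δ₁ (n+1) := by
    rw [show Xi n ((Amat (rowmap n) (colmap n)).det)
        = (Xi n : U →+* Oamb (n+1)) ((Amat (rowmap n) (colmap n)).det) from rfl,
      h1, h2, Δ₁]
  rw [this]
  exact Ideal.subset_span (Set.mem_insert_of_mem _ (Set.mem_insert _ _))

lemma Xi_comp_Theta : (Xi n).comp (Theta n) = killz (n+1) := by
  apply MvPolynomial.algHom_ext
  intro x
  rw [AlgHom.comp_apply]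
  match x with
  | Sum.inl (i, j) =>
      refine Fin.cases ?_ (fun j' => ?_) j
      · rw [show (X (Sum.inl (i, 0)) : Oamb (n+1)) = av i 0 from rfl, Theta_av_zero]
        rw [cc, Xi, aeval_X]
        show (if ha : (i:ℕ) < n+1 then _ else _) = _
        rw [dif_pos i.isLt, dif_neg (lt_irrefl (n+1)), if_pos rfl]
        have h1 : (⟨(i:ℕ), i.isLt⟩ : Fin (n+1)) = i := Fin.eta _ _
        rw [h1]
        show av i 0 = killz (n+1) (X (Sum.inl (i, 0)))
        rw [killz, aeval_X, if_neg (by simp)]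
        rfl
      · rw [show (X (Sum.inl (i, j'.succ)) : Oamb (n+1)) = av i j'.succ from rfl,
          Theta_av_succ]
        have hx := Xi_cc n i j'
        rw [show cc (i:ℕ) (j':ℕ) = cc (rowmap n i) (colmap n j') from rfl, hx]
        show av i j'.succ = killz (n+1) (X (Sum.inl (i, j'.succ)))
        rw [killz, aeval_X, if_neg (by simp)]
        rfl
  | Sum.inr j =>
      refine Fin.cases ?_ (fun j' => ?_) j
      · rw [show (X (Sum.inr 0) : Oamb (n+1)) = zv 0 from rfl, Theta_zv_zero, map_zero]
        show (0 : Oamb (n+1)) = killz (n+1) (X (Sum.inr 0))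
        rw [killz, aeval_X, if_pos rfl]
      · rw [show (X (Sum.inr j'.succ) : Oamb (n+1)) = zv j'.succ from rfl, Theta_zv_succ]
        have hx := Xi_vv n j'
        rw [show vv (j':ℕ) = vv (colmap n j') from rfl, hx]
        show zv j'.succ = killz (n+1) (X (Sum.inr j'.succ))
        rw [killz, aeval_X, if_neg (by simp [Fin.succ_ne_zero])]
        rfl

lemma Jfin_eq_comap :
    Jfin n = Ideal.comap (Theta n : Oamb (n+1) →+* U)
      (Jid (rowmap n) (colmap n)) := by
  apply le_antisymm
  · rw [Jfin, Ideal.span_le]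
    intro x hx
    rw [SetLike.mem_coe, Ideal.mem_comap]
    simp only [Set.mem_insert_iff, Set.mem_range] at hx
    rcases hx with rfl | rfl | ⟨i, rfl⟩
    · show Theta n (zv 0) ∈ _
      rw [Theta_zv_zero]
      exact Ideal.zero_mem _
    · show Theta n (Δ₁ (n+1)) ∈ _
      rw [Theta_delta]
      exact Ideal.subset_span (Set.mem_insert _ _)
    · show Theta n (fv i) ∈ _
      rw [Theta_fv]
      exact Ideal.subset_span (Set.mem_insert_of_mem _ ⟨i, rfl⟩)
  · intro x hx
    rw [Ideal.mem_comap] at hx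
    have hxi : Xi n (Theta n x) ∈ Jfin n := by
      have hle : Jid (rowmap n) (colmap n)
          ≤ Ideal.comap (Xi n : U →+* Oamb (n+1)) (Jfin n) := by
        rw [Jid, Ideal.span_le]
        intro y hy
        rw [SetLike.mem_coe, Ideal.mem_comap]
        simp only [Set.mem_insert_iff, Set.mem_range] at hy
        rcases hy with rfl | ⟨i, rfl⟩
        · exact Xi_det_mem n
        · exact Xi_frow_mem n i
      exact hle hx
    have hk : Xi n (Theta n x) = killz (n+1) x := by
      rw [← AlgHom.comp_apply, Xi_comp_Theta]
    rw [hk] at hxi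
    have hsub : x - killz (n+1) x ∈ Jfin n := by
      refine Ideal.span_mono ?_ (sub_killz_mem_span (n+1) x)
      intro y hy
      rw [Set.mem_singleton_iff] at hy
      rw [hy]
      exact Set.mem_insert _ _
    have hxsplit : x = (x - killz (n+1) x) + killz (n+1) x := by ring
    rw [hxsplit]
    exact Ideal.add_mem _ hsub hxi

theorem Jfin_prime : (Jfin n).IsPrime := by
  rw [Jfin_eq_comap]
  haveI := Jid_prime (rowmap n) (colmap n) (rowmap_inj n) (colmap_inj n)
  exact Ideal.IsPrime.comap _

end Resid

/-- The quotient ring `O_amb/(z_1, f_1, …, f_n, Δ₁)` is an integral domain. -/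
theorem quotient_residual_isDomain (n : ℕ) (hn : 1 ≤ n) :
    IsDomain (Oamb n ⧸
      Ideal.span (insert (zv 0) (insert (Δ₁ n) (Set.range (fun i : Fin n => fv i))))) := by
  obtain ⟨k, rfl⟩ : ∃ k, n = k + 1 := ⟨n - 1, (Nat.succ_pred_eq_of_pos hn).symm⟩
  have hprime : (Resid.Jfin k).IsPrime := Resid.Jfin_prime k
  have heq : Ideal.span (insert (zv 0) (insert (Δ₁ (k+1))
      (Set.range (fun i : Fin (k+1) => fv i)))) = Resid.Jfin k := rfl
  rw [heq]
  exact Ideal.Quotient.isDomain _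
end

section
/- Fix n ≥ 1. Put the weighting on the polynomial ring ℤ[a_{ij}, z_j, T_k] giving weight 0 to each a_{ij} and each z_j and weight 1 to each T_k. Let ψ : O_amb[T_1, ..., T_{n+1}] → O_X = O_amb/(f_1, ..., f_n) be the ring homomorphism which is the natural projection on O_amb and sends T_i to the image of z_i. Then the ideal J = (z_i T_j − z_j T_i, f_p(z), f_p(T) : 1 ≤ i, j ≤ n+1, 1 ≤ p ≤ n) is the largest weighted-homogeneous ideal contained in ker ψ; that is: J ⊆ ker ψ, J is generated by weighted-homogeneous elements, and every weighted-homogeneous element of ker ψ belongs to J. -/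
open MvPolynomial

namespace LHSaux
variable {n : ℕ}

/-- The big polynomial ring `O_amb[T]`. -/
noncomputable abbrev Amb (n : ℕ) := MvPolynomial (Fin (n+1)) (Oamb n)

/-- evaluation `T ↦ z`. -/
noncomputable def E (n : ℕ) : Amb n →+* Oamb n := eval₂Hom (RingHom.id (Oamb n)) zv

/-- generators of `J`. -/
def gens (n : ℕ) : Set (Amb n) :=
  {p : MvPolynomial (Fin (n+1)) (Oamb n) |
            ∃ i j : Fin (n+1), p = C (zv i) * X j - C (zv j) * X i} ∪
          (Set.range fun p : Fin n => (C (fv p) : MvPolynomial (Fin (n+1)) (Oamb n))) ∪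
          (Set.range fun p : Fin n =>
            (∑ j, C (av p j) * X j : MvPolynomial (Fin (n+1)) (Oamb n)))

noncomputable def J (n : ℕ) : Ideal (Amb n) := Ideal.span (gens n)
noncomputable def Iz (n : ℕ) : Ideal (Oamb n) := Ideal.span (Set.range (fun i : Fin n => fv i))

/-- monomial in the `z`-variables. -/
noncomputable def zp (β : Fin (n+1) →₀ ℕ) : Oamb n :=
  monomial (β.mapDomain Sum.inr) (1 : ℤ)

lemma zp_add (β γ : Fin (n+1) →₀ ℕ) : (zp (β + γ) : Oamb n) = zp β * zp γ := by
  simp [zp, monomial_mul, Finsupp.mapDomain_add]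

lemma zp_single (j : Fin (n+1)) : (zp (Finsupp.single j 1) : Oamb n) = zv j := by
  simp [zp, Finsupp.mapDomain_single, zv, X]

lemma zp_eq_prod (α : Fin (n+1) →₀ ℕ) : (zp α : Oamb n) = α.prod fun j e => zv j ^ e := by
  rw [zp, monomial_eq, map_one, one_mul,
    Finsupp.prod_mapDomain_index_inj Sum.inr_injective]
  rfl

lemma E_monomial (α : Fin (n+1) →₀ ℕ) (c : Oamb n) :
    E n (monomial α c) = c * zp α := by
  rw [E, eval₂Hom_monomial, zp_eq_prod]
  rfl

lemma E_C (c : Oamb n) : E n (C c) = c := by simp [E]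

lemma E_X (j : Fin (n+1)) : E n (X j) = zv j := by simp [E]

end LHSaux

namespace LHSaux
variable {n : ℕ}

/-- total `z`-weight of an exponent vector of `O_amb`. -/
def wd (μ : ((Fin n × Fin (n+1)) ⊕ Fin (n+1)) →₀ ℕ) : ℕ := ∑ j : Fin (n+1), μ (Sum.inr j)

lemma wd_add (μ ν : ((Fin n × Fin (n+1)) ⊕ Fin (n+1)) →₀ ℕ) : wd (μ + ν) = wd μ + wd ν := by
  simp [wd, Finset.sum_add_distrib]

lemma wd_mapDomain (β : Fin (n+1) →₀ ℕ) : wd (β.mapDomain Sum.inr) = ∑ j, β j := by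
  unfold wd
  congr 1
  ext j
  rw [Finsupp.mapDomain_apply Sum.inr_injective]

lemma exists_coeff_mul {μ : ((Fin n × Fin (n+1)) ⊕ Fin (n+1)) →₀ ℕ} {p q : Oamb n}
    (h : coeff μ (p * q) ≠ 0) :
    ∃ μ₁ μ₂, μ₁ + μ₂ = μ ∧ coeff μ₁ p ≠ 0 ∧ coeff μ₂ q ≠ 0 := by
  rw [coeff_mul] at h
  obtain ⟨x, hx, hne⟩ := Finset.exists_ne_zero_of_sum_ne_zero h
  exact ⟨x.1, x.2, Finset.HasAntidiagonal.mem_antidiagonal.mp hx,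
    fun h0 => hne (by rw [h0, zero_mul]), fun h0 => hne (by rw [h0, mul_zero])⟩

lemma exists_coeff_sum {ι : Type*} {μ : ((Fin n × Fin (n+1)) ⊕ Fin (n+1)) →₀ ℕ}
    (s : Finset ι) (f : ι → Oamb n) (h : coeff μ (∑ i ∈ s, f i) ≠ 0) :
    ∃ i ∈ s, coeff μ (f i) ≠ 0 := by
  rw [coeff_sum] at h
  obtain ⟨i, hi, hne⟩ := Finset.exists_ne_zero_of_sum_ne_zero h
  exact ⟨i, hi, hne⟩

lemma coeff_zp_ne {μ : ((Fin n × Fin (n+1)) ⊕ Fin (n+1)) →₀ ℕ} {β : Fin (n+1) →₀ ℕ}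
    (h : coeff μ (zp β : Oamb n) ≠ 0) : μ = β.mapDomain Sum.inr := by
  rw [zp, coeff_monomial] at h
  by_contra hne
  rw [if_neg (fun he => hne he.symm)] at h
  exact h rfl

lemma wd_single_inl (v : Fin n × Fin (n+1)) :
    wd (Finsupp.single (Sum.inl v : (Fin n × Fin (n+1)) ⊕ Fin (n+1)) 1) = 0 := by
  unfold wd
  refine Finset.sum_eq_zero fun j _ => ?_
  simp [Finsupp.single_apply]

lemma wd_single_inr (i : Fin (n+1)) :
    wd (Finsupp.single (Sum.inr i : (Fin n × Fin (n+1)) ⊕ Fin (n+1)) 1) = 1 := by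
  unfold wd
  rw [Finset.sum_eq_single i]
  · simp
  · intro b _ hb
    rw [Finsupp.single_apply, if_neg (by simpa [eq_comm] using hb : ¬ Sum.inr i = Sum.inr b)]
  · simp

lemma coeff_X_ne {v : (Fin n × Fin (n+1)) ⊕ Fin (n+1)}
    {μ : ((Fin n × Fin (n+1)) ⊕ Fin (n+1)) →₀ ℕ} (h : coeff μ (X v : Oamb n) ≠ 0) :
    μ = Finsupp.single v 1 := by
  rw [coeff_X'] at h
  by_contra hne
  rw [if_neg (fun he => hne he.symm)] at h
  exact h rfl

/-- every monomial of `fv p` has `z`-weight exactly 1. -/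
lemma wd_fv {p : Fin n} {μ : ((Fin n × Fin (n+1)) ⊕ Fin (n+1)) →₀ ℕ}
    (h : coeff μ (fv p) ≠ 0) : wd μ = 1 := by
  unfold fv at h
  obtain ⟨j, _, hj⟩ := exists_coeff_sum _ _ h
  obtain ⟨μ₁, μ₂, hadd, h1, h2⟩ := exists_coeff_mul hj
  rw [coeff_X_ne (v := Sum.inl (p, j)) h1] at hadd
  rw [coeff_X_ne (v := Sum.inr j) h2] at hadd
  rw [← hadd, wd_add, wd_single_inl, wd_single_inr]

end LHSaux

namespace LHSaux
variable {n : ℕ}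

lemma eq_of_le_of_sum_eq {α α' : Fin (n+1) →₀ ℕ} (h : ∀ j, α j ≤ α' j)
    (hs : ∑ j, α j = ∑ j, α' j) : α = α' := by
  ext t
  by_contra hne
  have : ∑ j, α j < ∑ j, α' j :=
    Finset.sum_lt_sum (fun i _ => h i) ⟨t, Finset.mem_univ t, lt_of_le_of_ne (h t) hne⟩
  omega

lemma minor_mem (i j : Fin (n+1)) : (C (zv j) * X i - C (zv i) * X j : Amb n) ∈ J n :=
  Ideal.subset_span (Or.inl (Or.inl ⟨j, i, rfl⟩))

lemma exchange (D : ℕ) : ∀ (β α β' α' : Fin (n+1) →₀ ℕ),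
    (∑ t, ((α t - α' t) + (α' t - α t))) = D →
    β + α = β' + α' → (∑ t, α t) = (∑ t, α' t) →
    C (zp β) * monomial α (1 : Oamb n) - C (zp β') * monomial α' (1 : Oamb n) ∈ J n := by
  induction D using Nat.strong_induction_on with
  | _ D ih =>
    intro β α β' α' hD hadd hsum
    by_cases hαα : α = α'
    · subst hαα
      have hββ : β = β' := by
        ext t
        have := DFunLike.congr_fun hadd t
        simp only [Finsupp.add_apply] at this
        omega
      subst hββ
      simp only [sub_self]
      exact (J n).zero_mem
    · -- find the exchange indices
      obtain ⟨i, hi⟩ : ∃ i, α' i < α i := by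
        by_contra hcon
        push_neg at hcon
        exact hαα (eq_of_le_of_sum_eq hcon hsum)
      obtain ⟨j, hj⟩ : ∃ j, α j < α' j := by
        by_contra hcon
        push_neg at hcon
        exact hαα (eq_of_le_of_sum_eq hcon hsum.symm).symm
      have hij : i ≠ j := by rintro rfl; omega
      have hβj : 1 ≤ β j := by
        have := DFunLike.congr_fun hadd j
        simp only [Finsupp.add_apply] at this
        omega
      have hαi : 1 ≤ α i := by omega
      set ei : Fin (n+1) →₀ ℕ := Finsupp.single i 1 with hei
      set ej : Fin (n+1) →₀ ℕ := Finsupp.single j 1 with hej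
      set α₂ : Fin (n+1) →₀ ℕ := α - ei + ej with hα₂def
      set β₂ : Fin (n+1) →₀ ℕ := β - ej + ei with hβ₂def
      have hα₂t : ∀ t, α₂ t = α t - (if i = t then 1 else 0) + (if j = t then 1 else 0) := by
        intro t
        simp [hα₂def, hei, hej, Finsupp.single_apply]
      have hβ₂t : ∀ t, β₂ t = β t - (if j = t then 1 else 0) + (if i = t then 1 else 0) := by
        intro t
        simp [hβ₂def, hei, hej, Finsupp.single_apply]
      -- step 1 : the single exchange move lies in J
      have hXi : (X i : Amb n) = monomial ei 1 := rfl
      have hXj : (X j : Amb n) = monomial ej 1 := rfl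
      have hzv_i : (zv i : Oamb n) = zp ei := (zp_single i).symm
      have hzv_j : (zv j : Oamb n) = zp ej := (zp_single j).symm
      have hβrec : β - ej + ej = β := by
        ext t
        simp only [Finsupp.add_apply, Finsupp.tsub_apply, hej, Finsupp.single_apply]
        by_cases hjt : j = t
        · subst hjt; simpa using by omega
        · simp [hjt]
      have hαrec : α - ei + ei = α := by
        ext t
        simp only [Finsupp.add_apply, Finsupp.tsub_apply, hei, Finsupp.single_apply]
        by_cases hit : i = t
        · subst hit; simpa using by omega
        · simp [hit]
      have h1 : (C (zp (β - ej)) * monomial (α - ei) (1 : Oamb n)) * (C (zv j) * X i)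
          = C (zp β) * monomial α 1 := by
        rw [hXi, hzv_j, C_mul_monomial, C_mul_monomial, C_mul_monomial, monomial_mul]
        simp only [mul_one, one_mul]
        rw [← zp_add, hβrec, hαrec]
      have h2 : (C (zp (β - ej)) * monomial (α - ei) (1 : Oamb n)) * (C (zv i) * X j)
          = C (zp β₂) * monomial α₂ 1 := by
        rw [hXj, hzv_i, C_mul_monomial, C_mul_monomial, C_mul_monomial, monomial_mul]
        simp only [mul_one, one_mul]
        rw [← zp_add, hβ₂def, hα₂def]
      have hstep : C (zp β) * monomial α (1 : Oamb n) - C (zp β₂) * monomial α₂ 1 ∈ J n := by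
        rw [← h1, ← h2, ← mul_sub]
        exact Ideal.mul_mem_left _ _ (minor_mem i j)
      -- step 2 : induction hypothesis
      have hadd₂ : β₂ + α₂ = β' + α' := by
        rw [← hadd]
        ext t
        simp only [Finsupp.add_apply, hα₂t t, hβ₂t t]
        by_cases hit : i = t
        · subst hit
          have hjt : ¬ j = i := fun h => hij h.symm
          simp only [if_neg hjt, if_pos]
          omega
        · by_cases hjt : j = t
          · subst hjt
            simp only [if_neg hit, if_pos]
            omega
          · simp only [if_neg hit, if_neg hjt]
            omega
      have hsum₂ : (∑ t, α₂ t) = ∑ t, α' t := by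
        rw [← hsum]
        have key : ∀ t, α₂ t + (if i = t then 1 else 0) = α t + (if j = t then 1 else 0) := by
          intro t
          rw [hα₂t t]
          by_cases hit : i = t
          · subst hit
            have hjt : ¬ j = i := fun h => hij h.symm
            simp only [if_neg hjt, if_pos]
            omega
          · simp only [if_neg hit]
            omega
        have := Finset.sum_congr rfl (fun t (_ : t ∈ Finset.univ) => key t)
        rw [Finset.sum_add_distrib, Finset.sum_add_distrib, Finset.sum_ite_eq,
          Finset.sum_ite_eq] at this
        simpa using this
      have hmeas : (∑ t, ((α₂ t - α' t) + (α' t - α₂ t))) < D := by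
        rw [← hD]
        apply Finset.sum_lt_sum
        · intro t _
          rw [hα₂t t]
          by_cases hit : i = t
          · subst hit
            have hjt : ¬ j = i := fun h => hij h.symm
            simp only [if_neg hjt, if_pos]
            omega
          · by_cases hjt : j = t
            · subst hjt
              simp only [if_neg hit, if_pos]
              omega
            · simp only [if_neg hit, if_neg hjt]
              omega
        · refine ⟨i, Finset.mem_univ i, ?_⟩
          rw [hα₂t i]
          have hjt : ¬ j = i := fun h => hij h.symm
          simp only [if_neg hjt, if_pos]
          omega
      have hrest := ih _ hmeas β₂ α₂ β' α' rfl hadd₂ hsum₂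
      have := (J n).add_mem hstep hrest
      simpa using this

end LHSaux

namespace LHSaux
variable {n : ℕ}

/-- pointwise max of exponent vectors. -/
noncomputable def fsup (a b : Fin (n+1) →₀ ℕ) : Fin (n+1) →₀ ℕ :=
  Finsupp.zipWith max (by simp) a b

lemma fsup_apply (a b : Fin (n+1) →₀ ℕ) (t : Fin (n+1)) : fsup a b t = max (a t) (b t) := by
  simp [fsup]

/-- turn membership in the span of the image of a finset into a sum representation. -/
lemma mem_span_image_finset {ι : Type*} {R : Type*} [CommRing R] [DecidableEq ι]
    {s : Finset ι} {f : ι → R} {x : R} (hx : x ∈ Ideal.span (f '' s)) :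
    ∃ u : ι → R, x = ∑ i ∈ s, u i * f i := by
  refine Submodule.span_induction ?_ ?_ ?_ ?_ hx
  · rintro y ⟨i, hi, rfl⟩
    refine ⟨fun t => if t = i then 1 else 0, ?_⟩
    simp only [ite_mul, one_mul, zero_mul, Finset.sum_ite_eq', Finset.mem_coe.mp hi, if_true]
  · exact ⟨0, by simp⟩
  · rintro x y hx hy ⟨u, rfl⟩ ⟨v, rfl⟩
    exact ⟨u + v, by simp [add_mul, Finset.sum_add_distrib]⟩
  · rintro a x hx ⟨u, rfl⟩
    exact ⟨fun i => a * u i, by rw [smul_eq_mul, Finset.mul_sum]; simp [mul_assoc]⟩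

lemma colon (s' : Finset (Fin (n+1) →₀ ℕ)) (α₀ : Fin (n+1) →₀ ℕ) (c : Oamb n)
    (h : c * zp α₀ ∈ Ideal.span ((fun α : Fin (n+1) →₀ ℕ => (zp α : Oamb n)) '' s')) :
    ∃ u : (Fin (n+1) →₀ ℕ) → Oamb n,
      c = ∑ α ∈ s', u α * zp (fsup α α₀ - α₀) := by
  classical
  have hmem : c ∈ Ideal.span ((fun α : Fin (n+1) →₀ ℕ =>
      (zp (fsup α α₀ - α₀) : Oamb n)) '' s') := by
    obtain ⟨w, hw⟩ := mem_span_image_finset h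
    rw [MvPolynomial.as_sum c]
    refine Ideal.sum_mem _ fun μ hμ => ?_
    have hcμ : coeff μ c ≠ 0 := MvPolynomial.mem_support_iff.mp hμ
    set ν := Finsupp.mapDomain Sum.inr α₀ with hν
    have hco : coeff (μ + ν) (c * zp α₀) = coeff μ c := by
      rw [zp, ← hν, coeff_mul_monomial' (μ + ν) ν 1 c, if_pos le_add_self,
        add_tsub_cancel_right, mul_one]
    have hne : coeff (μ + ν) (c * zp α₀) ≠ 0 := by rw [hco]; exact hcμ
    rw [hw] at hne
    obtain ⟨a, has', ha⟩ := exists_coeff_sum s' _ hne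
    rw [zp, coeff_mul_monomial'] at ha
    have hle : Finsupp.mapDomain Sum.inr a ≤ μ + ν := by
      by_contra hcon
      rw [if_neg hcon] at ha
      exact ha rfl
    set δ := Finsupp.mapDomain Sum.inr (fsup a α₀ - α₀) with hδ
    have hδμ : δ ≤ μ := by
      rw [Finsupp.le_def]
      intro v
      rcases v with v | j
      · rw [hδ, Finsupp.mapDomain_notin_range _ _ (by simp)]
        exact Nat.zero_le _
      · have h1 : (Finsupp.mapDomain Sum.inr a) (Sum.inr j) ≤ (μ + ν) (Sum.inr j) :=
          Finsupp.le_def.mp hle _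
        rw [Finsupp.mapDomain_apply Sum.inr_injective] at h1
        rw [hδ, Finsupp.mapDomain_apply Sum.inr_injective, Finsupp.tsub_apply, fsup_apply]
        have h2 : (μ + ν) (Sum.inr j) = μ (Sum.inr j) + α₀ j := by
          rw [Finsupp.add_apply, hν, Finsupp.mapDomain_apply Sum.inr_injective]
        omega
    have hfac : (monomial μ (coeff μ c) : Oamb n)
        = monomial (μ - δ) (coeff μ c) * zp (fsup a α₀ - α₀) := by
      rw [zp, ← hδ, monomial_mul, mul_one, tsub_add_cancel_of_le hδμ]
    rw [hfac]
    exact Ideal.mul_mem_left _ _ (Ideal.subset_span ⟨a, has', rfl⟩)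
  exact mem_span_image_finset hmem

end LHSaux

namespace LHSaux
variable {n : ℕ}

/-- Monomial syzygies of the `z^α` are generated by the exchange relations:
if a `T`-homogeneous combination evaluates to zero at `T = z`, it lies in `J`. -/
lemma segre (d : ℕ) (s : Finset (Fin (n+1) →₀ ℕ)) :
    ∀ c : (Fin (n+1) →₀ ℕ) → Oamb n, (∀ α ∈ s, (∑ t, α t) = d) →
    (∑ α ∈ s, c α * zp α) = 0 →
    (∑ α ∈ s, C (c α) * monomial α (1 : Oamb n)) ∈ J n := by
  classical
  induction s using Finset.strongInduction with
  | _ s ih =>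
  intro c hs hc
  rcases s.eq_empty_or_nonempty with rfl | ⟨α₀, hα₀⟩
  · simp only [Finset.sum_empty]
    exact (J n).zero_mem
  set s' := s.erase α₀ with hs'
  have hss' : s' ⊂ s := Finset.erase_ssubset hα₀
  have hsplit : ∑ α ∈ s', c α * zp α + c α₀ * zp α₀ = ∑ α ∈ s, c α * zp α :=
    Finset.sum_erase_add s _ hα₀
  have hmem : c α₀ * zp α₀ ∈ Ideal.span ((fun α : Fin (n+1) →₀ ℕ => (zp α : Oamb n)) '' s') := by
    have : c α₀ * zp α₀ = - ∑ α ∈ s', c α * zp α := by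
      have h0 : c α₀ * zp α₀ + ∑ α ∈ s', c α * zp α = 0 := by rw [add_comm, hsplit, hc]
      exact eq_neg_of_add_eq_zero_left h0
    rw [this]
    exact Submodule.neg_mem _ (Ideal.sum_mem _ fun α hα =>
      Ideal.mul_mem_left _ _ (Ideal.subset_span ⟨α, hα, rfl⟩))
  obtain ⟨u, hu⟩ := colon s' α₀ (c α₀) hmem
  -- notation for the two complementary parts of the sup
  set g : (Fin (n+1) →₀ ℕ) → (Fin (n+1) →₀ ℕ) := fun α => fsup α α₀ - α₀ with hg
  set g' : (Fin (n+1) →₀ ℕ) → (Fin (n+1) →₀ ℕ) := fun α => fsup α α₀ - α with hg'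
  have hkey : ∀ α, g α + α₀ = g' α + α := by
    intro α
    ext t
    simp only [Finsupp.add_apply, hg, hg', Finsupp.tsub_apply, fsup_apply]
    omega
  have hzkey : ∀ α, (zp (g α) * zp α₀ : Oamb n) = zp (g' α) * zp α := by
    intro α
    rw [← zp_add, ← zp_add, hkey α]
  -- new coefficients on s'
  set c' : (Fin (n+1) →₀ ℕ) → Oamb n := fun α => c α + u α * zp (g' α) with hc'def
  have hc' : ∑ α ∈ s', c' α * zp α = 0 := by
    have h2 : ∑ α ∈ s', u α * zp (g' α) * zp α = c α₀ * zp α₀ := by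
      rw [hu, Finset.sum_mul]
      refine Finset.sum_congr rfl fun α _ => ?_
      rw [mul_assoc, mul_assoc, hzkey α]
    calc ∑ α ∈ s', c' α * zp α
        = ∑ α ∈ s', c α * zp α + ∑ α ∈ s', u α * zp (g' α) * zp α := by
          simp only [hc'def, add_mul, Finset.sum_add_distrib]
      _ = 0 := by rw [h2, hsplit, hc]
  have hIH := ih s' hss' c' (fun α hα => hs α (Finset.mem_of_mem_erase hα)) hc'
  -- exchange terms
  have hex : ∀ α ∈ s', C (zp (g α)) * monomial α₀ (1 : Oamb n)
      - C (zp (g' α)) * monomial α (1 : Oamb n) ∈ J n := by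
    intro α hα
    exact exchange _ (g α) α₀ (g' α) α rfl (hkey α)
      (by rw [hs α₀ hα₀, hs α (Finset.mem_of_mem_erase hα)])
  -- put everything together
  have hCα₀ : (C (c α₀) : Amb n) = ∑ α ∈ s', C (u α) * C (zp (g α)) := by
    rw [hu, map_sum]
    exact Finset.sum_congr rfl fun α _ => by rw [map_mul]
  have hdecomp : ∑ α ∈ s, C (c α) * monomial α (1 : Oamb n)
      = ∑ α ∈ s', C (c' α) * monomial α (1 : Oamb n)
        + ∑ α ∈ s', C (u α) * (C (zp (g α)) * monomial α₀ (1 : Oamb n)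
            - C (zp (g' α)) * monomial α (1 : Oamb n)) := by
    rw [← Finset.sum_erase_add s _ hα₀, ← hs']
    simp only [hc'def, map_add, map_mul, add_mul, Finset.sum_add_distrib, mul_sub,
      Finset.sum_sub_distrib]
    rw [hCα₀, Finset.sum_mul]
    simp only [mul_assoc]
    abel
  rw [hdecomp]
  exact (J n).add_mem hIH (Ideal.sum_mem _ fun α hα =>
    Ideal.mul_mem_left _ _ (hex α hα))

end LHSaux

namespace LHSaux
variable {n : ℕ}

lemma weight_one_eq (α : Fin (n+1) →₀ ℕ) :
    (Finsupp.weight (1 : Fin (n+1) → ℕ)) α = ∑ t, α t := by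
  rw [Finsupp.weight_apply, Finsupp.sum]
  simp only [Pi.one_apply, smul_eq_mul, mul_one]
  exact Finset.sum_subset (Finset.subset_univ _)
    (fun t _ ht => Finsupp.notMem_support_iff.mp ht)

/-- A `T`-homogeneous polynomial of degree `d` killed by `E` lies in `J`. -/
lemma homog_ker_mem_J {q : Amb n} {d : ℕ} (hq : q.IsHomogeneous d) (hEq : E n q = 0) :
    q ∈ J n := by
  have hs : ∀ α ∈ q.support, (∑ t, α t) = d := by
    intro α hα
    have := hq (MvPolynomial.mem_support_iff.mp hα)
    rwa [weight_one_eq] at this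
  have hsum : q = ∑ α ∈ q.support, C (coeff α q) * monomial α (1 : Oamb n) := by
    conv_lhs => rw [MvPolynomial.as_sum q]
    exact Finset.sum_congr rfl fun α _ => by rw [C_mul_monomial, mul_one]
  have hc : ∑ α ∈ q.support, coeff α q * zp α = 0 := by
    have hEs : E n q = ∑ α ∈ q.support, coeff α q * zp α := by
      conv_lhs => rw [MvPolynomial.as_sum q]
      rw [map_sum]
      exact Finset.sum_congr rfl fun α _ => E_monomial α _
    rw [← hEs, hEq]
  rw [hsum]
  exact segre d q.support _ hs hc

lemma exists_sub : ∀ (k : ℕ) (γ : Fin (n+1) →₀ ℕ), k ≤ ∑ t, γ t →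
    ∃ β : Fin (n+1) →₀ ℕ, (∀ t, β t ≤ γ t) ∧ (∑ t, β t) = k := by
  intro k
  induction k with
  | zero => exact fun γ _ => ⟨0, by simp, by simp⟩
  | succ k ihk =>
    intro γ hγ
    obtain ⟨j, hj⟩ : ∃ j, 1 ≤ γ j := by
      by_contra hcon
      push_neg at hcon
      have : ∑ t, γ t = 0 := Finset.sum_eq_zero fun t _ => by have := hcon t; omega
      omega
    set γ' := γ - Finsupp.single j 1 with hγ'
    have hγ't : ∀ t, γ' t = γ t - (if j = t then 1 else 0) := by
      intro t
      simp [hγ', Finsupp.single_apply]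
    have hγ'sum : (∑ t, γ' t) + 1 = ∑ t, γ t := by
      have key : ∀ t, γ' t + (if j = t then 1 else 0) = γ t := by
        intro t
        rw [hγ't t]
        by_cases hjt : j = t
        · subst hjt; simp only [if_pos]; omega
        · simp only [if_neg hjt]; omega
      have := Finset.sum_congr rfl (fun t (_ : t ∈ Finset.univ) => key t)
      rw [Finset.sum_add_distrib, Finset.sum_ite_eq] at this
      simpa using this
    obtain ⟨β', hβ'le, hβ'sum⟩ := ihk γ' (by omega)
    refine ⟨β' + Finsupp.single j 1, ?_, ?_⟩
    · intro t
      have := hβ'le t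
      rw [hγ't t] at this
      simp only [Finsupp.add_apply, Finsupp.single_apply]
      by_cases hjt : j = t
      · subst hjt; simp only [if_pos] at this ⊢; omega
      · simp only [if_neg hjt] at this ⊢; omega
    · have : ∀ t, (β' + Finsupp.single j 1 : Fin (n+1) →₀ ℕ) t = β' t + (if j = t then 1 else 0) := by
        intro t; simp [Finsupp.single_apply]
      rw [Finset.sum_congr rfl (fun t _ => this t), Finset.sum_add_distrib,
        Finset.sum_ite_eq]
      simp [hβ'sum]

noncomputable def fvT (p : Fin n) : Amb n := ∑ j, C (av p j) * X j

lemma fvT_mem (p : Fin n) : fvT p ∈ J n :=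
  Ideal.subset_span (Or.inr ⟨p, rfl⟩)

lemma fvT_homog (p : Fin n) : (fvT p).IsHomogeneous 1 := by
  refine MvPolynomial.IsHomogeneous.sum _ _ _ fun j _ => ?_
  simpa using (isHomogeneous_C (Fin (n+1)) (av p j)).mul (isHomogeneous_X _ j)

lemma E_fvT (p : Fin n) : E n (fvT p) = fv p := by
  rw [fvT, map_sum, fv]
  exact Finset.sum_congr rfl fun j _ => by rw [map_mul, E_C, E_X]

lemma lift_mono (p : Fin n) (μ : ((Fin n × Fin (n+1)) ⊕ Fin (n+1)) →₀ ℕ) (c : ℤ) (k : ℕ)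
    (hw : k ≤ wd μ) :
    ∃ h : Amb n, h ∈ J n ∧ h.IsHomogeneous (k+1) ∧
      E n h = monomial μ c * fv p := by
  obtain ⟨β, hβle, hβsum⟩ := exists_sub k (Finsupp.equivFunOnFinite.symm fun j => μ (Sum.inr j))
    (by simpa [wd] using hw)
  have hβle' : ∀ j, β j ≤ μ (Sum.inr j) := by
    intro j
    simpa using hβle j
  set δ := Finsupp.mapDomain Sum.inr β with hδ
  have hδμ : δ ≤ μ := by
    rw [Finsupp.le_def]
    intro v
    rcases v with v | j
    · rw [hδ, Finsupp.mapDomain_notin_range _ _ (by simp)]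
      exact Nat.zero_le _
    · rw [hδ, Finsupp.mapDomain_apply Sum.inr_injective]
      exact hβle' j
  refine ⟨C (monomial (μ - δ) c) * monomial β (1 : Oamb n) * fvT p, ?_, ?_, ?_⟩
  · exact Ideal.mul_mem_left _ _ (fvT_mem p)
  · have hm : (monomial β (1 : Oamb n) : Amb n).IsHomogeneous k := by
      apply isHomogeneous_monomial
      rw [Finsupp.degree]
      rw [← hβsum]
      exact Finset.sum_subset (Finset.subset_univ _) fun t _ ht => by
        simpa using Finsupp.notMem_support_iff.mp ht
    have := ((isHomogeneous_C (Fin (n+1)) (monomial (μ - δ) c : Oamb n)).mul hm).mul (fvT_homog p)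
    simpa using this
  · rw [map_mul, map_mul, E_C, E_fvT, E_monomial]
    congr 1
    rw [one_mul, zp, ← hδ, monomial_mul, mul_one, tsub_add_cancel_of_le hδμ]

lemma lift (p : Fin n) (x : Oamb n) (k : ℕ) (hx : ∀ μ, coeff μ x ≠ 0 → k ≤ wd μ) :
    ∃ h : Amb n, h ∈ J n ∧ h.IsHomogeneous (k+1) ∧ E n h = x * fv p := by
  have H : ∀ μ : x.support, ∃ h : Amb n, h ∈ J n ∧ h.IsHomogeneous (k+1) ∧
      E n h = monomial (μ : _) (coeff μ x) * fv p :=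
    fun μ => lift_mono p μ.1 (coeff μ.1 x) k (hx μ.1 (MvPolynomial.mem_support_iff.mp μ.2))
  choose f hf1 hf2 hf3 using H
  refine ⟨∑ μ ∈ x.support.attach, f μ, Ideal.sum_mem _ fun μ _ => hf1 μ,
    MvPolynomial.IsHomogeneous.sum _ _ _ fun μ _ => hf2 μ, ?_⟩
  rw [map_sum]
  rw [Finset.sum_congr rfl fun μ (_ : μ ∈ x.support.attach) => hf3 μ]
  rw [← Finset.sum_mul]
  congr 1
  rw [Finset.sum_attach x.support (fun μ => (monomial μ (coeff μ x) : Oamb n))]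
  exact (MvPolynomial.as_sum x).symm

end LHSaux

namespace LHSaux
variable {n : ℕ}

lemma wd_Eh {h : Amb n} {d : ℕ} (hh : h.IsHomogeneous d) :
    ∀ μ, coeff μ (E n h) ≠ 0 → d ≤ wd μ := by
  intro μ hμ
  have hEs : E n h = ∑ α ∈ h.support, coeff α h * zp α := by
    conv_lhs => rw [MvPolynomial.as_sum h]
    rw [map_sum]
    exact Finset.sum_congr rfl fun α _ => E_monomial α _
  rw [hEs] at hμ
  obtain ⟨α, hα, hne⟩ := exists_coeff_sum _ _ hμ
  obtain ⟨μ₁, μ₂, hadd, h1, h2⟩ := exists_coeff_mul hne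
  have hμ₂ := coeff_zp_ne h2
  have hdeg : (∑ t, α t) = d := by
    have := hh (MvPolynomial.mem_support_iff.mp hα)
    rwa [weight_one_eq] at this
  rw [← hadd, wd_add, hμ₂, wd_mapDomain, hdeg]
  omega

lemma wd_mul_fv {g : Oamb n} {p : Fin n} {μ} (h : coeff μ (g * fv p) ≠ 0) :
    ∃ μ₁, coeff μ₁ g ≠ 0 ∧ wd μ = wd μ₁ + 1 := by
  obtain ⟨μ₁, μ₂, hadd, h1, h2⟩ := exists_coeff_mul h
  exact ⟨μ₁, h1, by rw [← hadd, wd_add, wd_fv h2]⟩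

noncomputable def highPart (k : ℕ) (y : Oamb n) : Oamb n :=
  ∑ μ ∈ y.support.filter (fun μ => k ≤ wd μ), monomial μ (coeff μ y)

noncomputable def lowPart (k : ℕ) (y : Oamb n) : Oamb n :=
  ∑ μ ∈ y.support.filter (fun μ => ¬ k ≤ wd μ), monomial μ (coeff μ y)

lemma high_add_low (k : ℕ) (y : Oamb n) : highPart k y + lowPart k y = y := by
  rw [highPart, lowPart, Finset.sum_filter_add_sum_filter_not]
  exact (MvPolynomial.as_sum y).symm

lemma coeff_filter_sum (F : Finset (((Fin n × Fin (n+1)) ⊕ Fin (n+1)) →₀ ℕ)) (y : Oamb n)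
    (ν) : coeff ν (∑ μ ∈ F, monomial μ (coeff μ y)) = if ν ∈ F then coeff ν y else 0 := by
  classical
  rw [MvPolynomial.coeff_sum]
  rw [Finset.sum_congr rfl fun μ (_ : μ ∈ F) => MvPolynomial.coeff_monomial ν μ (coeff μ y)]
  exact Finset.sum_ite_eq' F ν (fun μ => coeff μ y)

lemma coeff_highPart (k : ℕ) (y : Oamb n) :
    ∀ μ, coeff μ (highPart k y) ≠ 0 → k ≤ wd μ := by
  intro μ hμ
  rw [highPart, coeff_filter_sum] at hμ
  split_ifs at hμ with hmem
  · exact (Finset.mem_filter.mp hmem).2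
  · exact absurd rfl hμ

lemma coeff_lowPart (k : ℕ) (y : Oamb n) :
    ∀ μ, coeff μ (lowPart k y) ≠ 0 → wd μ < k := by
  intro μ hμ
  rw [lowPart, coeff_filter_sum] at hμ
  split_ifs at hμ with hmem
  · have := (Finset.mem_filter.mp hmem).2; omega
  · exact absurd rfl hμ

/-- every element of `Iz` all whose monomials have `z`-weight `≥ d+1` can be represented
with coefficients all of whose monomials have `z`-weight `≥ d`. -/
lemma rewrite_rep (d : ℕ) (x : Oamb n) (hxI : x ∈ Iz n)
    (hx : ∀ μ, coeff μ x ≠ 0 → d + 1 ≤ wd μ) :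
    ∃ g : Fin n → Oamb n, (∀ p, ∀ μ, coeff μ (g p) ≠ 0 → d ≤ wd μ) ∧
      x = ∑ p, g p * fv p := by
  rw [Iz, Ideal.span, Submodule.mem_span_range_iff_exists_fun] at hxI
  obtain ⟨w, hw⟩ := hxI
  simp only [smul_eq_mul] at hw
  set g : Fin n → Oamb n := fun p => highPart d (w p) with hg
  set l : Fin n → Oamb n := fun p => lowPart d (w p) with hl
  refine ⟨g, fun p => coeff_highPart d (w p), ?_⟩
  have hxgl : x = ∑ p, g p * fv p + ∑ p, l p * fv p := by
    rw [← hw, ← Finset.sum_add_distrib]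
    refine Finset.sum_congr rfl fun p _ => ?_
    rw [← add_mul, hg, hl, high_add_low]
  have hlz : ∑ p, l p * fv p = 0 := by
    apply MvPolynomial.ext
    intro μ
    rw [MvPolynomial.coeff_zero]
    by_contra hne
    -- from the low part : wd μ < d + 1
    obtain ⟨p, _, hp⟩ := exists_coeff_sum _ _ hne
    obtain ⟨μ₁, h1, h2⟩ := wd_mul_fv hp
    have hlow := coeff_lowPart d (w p) μ₁ h1
    -- from x and the high part : wd μ ≥ d + 1
    have hge : d + 1 ≤ wd μ := by
      rcases ne_or_eq (coeff μ x) 0 with hx0 | hx0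
      · exact hx μ hx0
      · have hgne : coeff μ (∑ p, g p * fv p) ≠ 0 := by
          intro h0
          rw [hxgl, MvPolynomial.coeff_add, h0, zero_add] at hx0
          exact hne hx0
        obtain ⟨p', _, hp'⟩ := exists_coeff_sum _ _ hgne
        obtain ⟨μ₁', h1', h2'⟩ := wd_mul_fv hp'
        have := coeff_highPart d (w p') μ₁' h1'
        omega
    omega
  rw [hlz, add_zero] at hxgl
  exact hxgl

end LHSaux

namespace LHSaux
variable {n : ℕ}

lemma main3 {h : Amb n} {d : ℕ} (hker : E n h ∈ Iz n) (hh : h.IsHomogeneous d) :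
    h ∈ J n := by
  cases d with
  | zero =>
    have hC : h = C (coeff 0 h) := by
      apply MvPolynomial.ext
      intro μ
      rw [MvPolynomial.coeff_C]
      by_cases hμ : μ = 0
      · subst hμ
        simp
      · rw [if_neg (fun he => hμ he.symm)]
        by_contra hne
        have h0 := hh hne
        rw [weight_one_eq] at h0
        apply hμ
        ext t
        have hle : μ t ≤ ∑ t, μ t :=
          Finset.single_le_sum (fun _ _ => Nat.zero_le _) (Finset.mem_univ t)
        simpa using by omega
    have hcm : coeff 0 h ∈ Iz n := by
      have hEC : E n h = coeff 0 h := by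
        conv_lhs => rw [hC]
        exact E_C _
      rwa [hEC] at hker
    rw [Iz, Ideal.span, Submodule.mem_span_range_iff_exists_fun] at hcm
    obtain ⟨w, hw⟩ := hcm
    rw [hC, ← hw]
    rw [map_sum]
    refine Ideal.sum_mem _ fun p _ => ?_
    rw [smul_eq_mul, map_mul]
    exact Ideal.mul_mem_left _ _ (Ideal.subset_span (Or.inl (Or.inr ⟨p, rfl⟩)))
  | succ d =>
    have hx := wd_Eh hh
    obtain ⟨g, hgP, hrep⟩ := rewrite_rep d (E n h) hker hx
    have H : ∀ p : Fin n, ∃ hp : Amb n, hp ∈ J n ∧ hp.IsHomogeneous (d+1) ∧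
        E n hp = g p * fv p := fun p => lift p (g p) d (hgP p)
    choose f hf1 hf2 hf3 using H
    have hth : (∑ p, f p) ∈ J n := Ideal.sum_mem _ fun p _ => hf1 p
    have hthh : (∑ p, f p).IsHomogeneous (d+1) :=
      MvPolynomial.IsHomogeneous.sum _ _ _ fun p _ => hf2 p
    have hE : E n (∑ p, f p) = E n h := by
      rw [map_sum, Finset.sum_congr rfl fun p (_ : p ∈ Finset.univ) => hf3 p, ← hrep]
    have hq : (h - ∑ p, f p) ∈ J n :=
      homog_ker_mem_J (hh.sub hthh) (by rw [map_sub, hE, sub_self])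
    have := (J n).add_mem hq hth
    simpa using this

lemma psi_eq : (eval₂Hom (Ideal.Quotient.mk (Iz n))
    (fun i : Fin (n+1) => Ideal.Quotient.mk (Iz n) (zv i)))
    = (Ideal.Quotient.mk (Iz n)).comp (E n) := by
  apply MvPolynomial.ringHom_ext
  · intro c
    simp [E]
  · intro j
    simp [E]

lemma part1 : J n ≤ RingHom.ker (eval₂Hom (Ideal.Quotient.mk (Iz n))
    (fun i : Fin (n+1) => Ideal.Quotient.mk (Iz n) (zv i))) := by
  rw [J, Ideal.span_le]
  intro q hq
  rw [SetLike.mem_coe, RingHom.mem_ker, psi_eq, RingHom.comp_apply]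
  rcases hq with (⟨i, j, rfl⟩ | ⟨p, rfl⟩) | ⟨p, rfl⟩
  · have hE : E n (C (zv i) * X j - C (zv j) * X i) = 0 := by
      simp only [map_sub, map_mul, E_C, E_X]
      ring
    rw [hE, map_zero]
  · rw [E_C]
    exact Ideal.Quotient.eq_zero_iff_mem.mpr (Ideal.subset_span ⟨p, rfl⟩)
  · have hfvT : (E n) ((fun p : Fin n =>
        (∑ j, C (av p j) * X j : Amb n)) p) = fv p := E_fvT p
    rw [hfvT]
    exact Ideal.Quotient.eq_zero_iff_mem.mpr (Ideal.subset_span ⟨p, rfl⟩)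

lemma part2 : ∀ g ∈ gens n, ∃ d : ℕ, g.IsHomogeneous d := by
  intro g hg
  rcases hg with (⟨i, j, rfl⟩ | ⟨p, rfl⟩) | ⟨p, rfl⟩
  · refine ⟨1, ?_⟩
    have h1 := ((isHomogeneous_C (Fin (n+1)) (zv i)).mul (isHomogeneous_X _ j))
    have h2 := ((isHomogeneous_C (Fin (n+1)) (zv j)).mul (isHomogeneous_X _ i))
    simpa using h1.sub h2
  · exact ⟨0, isHomogeneous_C _ _⟩
  · exact ⟨1, fvT_homog p⟩

end LHSaux

/-- With weight `0` on the `a_{ij}`, `z_j` and weight `1` on the `T_k`, the ideal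
`J = (z_i T_j − z_j T_i, f_p(z), f_p(T))` is the largest weighted-homogeneous ideal contained
in `ker ψ`, where `ψ : O_amb[T_1, …, T_{n+1}] → O_X` is the projection with `T_i ↦ z̄_i`:
`J ⊆ ker ψ`, `J` is generated by weighted-homogeneous elements, and every
weighted-homogeneous element of `ker ψ` lies in `J`. -/
theorem largest_homogeneous_subideal_of_ker_psi (n : ℕ) (hn : 1 ≤ n) :
    Ideal.span
        (({p : MvPolynomial (Fin (n+1)) (Oamb n) |
            ∃ i j : Fin (n+1), p = C (zv i) * X j - C (zv j) * X i} ∪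
          (Set.range fun p : Fin n => (C (fv p) : MvPolynomial (Fin (n+1)) (Oamb n))) ∪
          (Set.range fun p : Fin n =>
            (∑ j, C (av p j) * X j : MvPolynomial (Fin (n+1)) (Oamb n)))))
      ≤ RingHom.ker
          (eval₂Hom (Ideal.Quotient.mk (Ideal.span (Set.range (fun i : Fin n => fv i))))
            (fun i : Fin (n+1) =>
              Ideal.Quotient.mk (Ideal.span (Set.range (fun i : Fin n => fv i))) (zv i))) ∧
    (∀ g ∈ ({p : MvPolynomial (Fin (n+1)) (Oamb n) |
              ∃ i j : Fin (n+1), p = C (zv i) * X j - C (zv j) * X i} ∪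
            (Set.range fun p : Fin n => (C (fv p) : MvPolynomial (Fin (n+1)) (Oamb n))) ∪
            (Set.range fun p : Fin n =>
              (∑ j, C (av p j) * X j : MvPolynomial (Fin (n+1)) (Oamb n)))),
        ∃ d : ℕ, g.IsHomogeneous d) ∧
    (∀ h : MvPolynomial (Fin (n+1)) (Oamb n),
        h ∈ RingHom.ker
          (eval₂Hom (Ideal.Quotient.mk (Ideal.span (Set.range (fun i : Fin n => fv i))))
            (fun i : Fin (n+1) =>
              Ideal.Quotient.mk (Ideal.span (Set.range (fun i : Fin n => fv i))) (zv i))) →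
        (∃ d : ℕ, h.IsHomogeneous d) →
        h ∈ Ideal.span
          (({p : MvPolynomial (Fin (n+1)) (Oamb n) |
              ∃ i j : Fin (n+1), p = C (zv i) * X j - C (zv j) * X i} ∪
            (Set.range fun p : Fin n => (C (fv p) : MvPolynomial (Fin (n+1)) (Oamb n))) ∪
            (Set.range fun p : Fin n =>
              (∑ j, C (av p j) * X j : MvPolynomial (Fin (n+1)) (Oamb n)))))) := by
  refine ⟨?_, ?_, ?_⟩
  · exact LHSaux.part1
  · exact LHSaux.part2
  · rintro h hker ⟨d, hd⟩
    have hmem : LHSaux.E n h ∈ LHSaux.Iz n := by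
      have hker' : (eval₂Hom (Ideal.Quotient.mk (LHSaux.Iz n))
          (fun i : Fin (n+1) => Ideal.Quotient.mk (LHSaux.Iz n) (zv i))) h = 0 := hker
      rw [LHSaux.psi_eq, RingHom.comp_apply] at hker'
      exact Ideal.Quotient.eq_zero_iff_mem.mp hker'
    exact LHSaux.main3 hmem hd
end
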